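/- arXiv:1109.6669 — 7 statements merged into one kernel-verified Lean document; each statement's English description precedes it below -/
import Mathlib

section
/- For any integer r ≥ 0, the functions ϑ_r(x;y) = Σ_{i=0}^{r} q_{r−i}(x) e_i(y) satisfy the identity ϑ_r^2 + 2 Σ_{i=1}^{r} (−1)^i ϑ_{r+i} ϑ_{r−i} = e_r(y_1^2, …, y_k^2), where e_r denotes the elementary symmetric polynomial (and e_r(y^2) = 0 for r > k). -/
/-!
STATEMENT 1: With `q r` defined by `∏ i (1+x i t)/(1-x i t) = ∑ q r t^r`,
`e i` the elementary symmetric polynomials in `y = (y 1, …, y k)` (zero for `i > k`),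
and `ϑ r = ∑_{i=0}^r q (r-i) * e i`, one has for every `r ≥ 0`
`ϑ r ^ 2 + 2 ∑_{i=1}^r (-1)^i ϑ (r+i) ϑ (r-i) = e_r(y_1^2, …, y_k^2)`.
We work in the polynomial ring in the variables `x` (indexed by `Fin n`, `n` arbitrary)
and `y` (indexed by `Fin k`).
-/

open PowerSeries

noncomputable section

variable (n k : ℕ)

/-- the variable `x i`. -/
def xv (i : Fin n) : MvPolynomial (Fin n ⊕ Fin k) ℚ := MvPolynomial.X (Sum.inl i)

/-- the variable `y j`. -/
def yv (j : Fin k) : MvPolynomial (Fin n ⊕ Fin k) ℚ := MvPolynomial.X (Sum.inr j)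

/-- the elementary symmetric polynomial `e_i(y)` (zero for `i > k`). -/
def ey (i : ℕ) : MvPolynomial (Fin n ⊕ Fin k) ℚ :=
  ∑ s ∈ Finset.univ.powersetCard i, ∏ j ∈ s, yv n k j

/-- the elementary symmetric polynomial in the squared variables, `e_r(y²)`. -/
def eySq (r : ℕ) : MvPolynomial (Fin n ⊕ Fin k) ℚ :=
  ∑ s ∈ Finset.univ.powersetCard r, ∏ j ∈ s, (yv n k j) ^ 2

/-!
With `Q(t) = ∑ q_r t^r = ∏ (1 + x_i t) / (1 - x_i t)` and `E(t) = ∏ (1 + y_j t) = ∑ e_i(y) t^i`,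
the generating function of `ϑ` is `Θ = Q E`. Since `Q(t) Q(-t) = 1`, we get
`Θ(t) Θ(-t) = E(t) E(-t) = ∏ (1 - y_j² t²)`, and the coefficient of `t^{2r}` on the two sides is
`(-1)^r` times the two sides of the identity.
-/

open Finset

namespace Finset

theorem sum_range_two_mul_add_one {M : Type*} [AddCommMonoid M] (g : ℕ → M) (r : ℕ) :
    ∑ i ∈ range (2 * r + 1), g i = g r + ∑ i ∈ range r, (g (r - (i + 1)) + g (r + (i + 1))) := by
  rw [show 2 * r + 1 = r + (r + 1) by ring, sum_range_add, sum_range_succ', ← sum_range_reflect,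
    sum_add_distrib]
  simp only [add_zero, show ∀ i, r - 1 - i = r - (i + 1) by omega]
  abel

end Finset

namespace PowerSeries

variable {R : Type*} [CommRing R]

theorem coeff_mul_prod_one_add_C_mul_X_pow {ι : Type*} {d : ℕ} (hd : 0 < d) (s : Finset ι)
    (a : ι → R) (r : ℕ) :
    coeff (d * r) (∏ j ∈ s, (1 + C (a j) * X ^ d)) = ∑ t ∈ s.powersetCard r, ∏ j ∈ t, a j := by
  classical
  have hcard : ∀ t : Finset ι, d * r = d * t.card ↔ t.card = r := fun t => by
    rw [Nat.mul_left_cancel_iff hd, eq_comm]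
  simp only [prod_one_add, map_sum, prod_mul_distrib, ← map_prod, prod_const,
    ← pow_mul, coeff_C_mul_X_pow, hcard, ← sum_filter, powersetCard_eq_filter]

theorem rescale_C (a c : R) : rescale a (C c) = C c := by
  ext m
  simp only [coeff_rescale, coeff_C]
  split_ifs with h <;> simp [h]

theorem rescale_neg_one_one_add_C_mul_X (c : R) :
    rescale (-1 : R) (1 + C c * X) = 1 - C c * X := by
  simp [rescale_C, sub_eq_add_neg]

theorem rescale_neg_one_one_sub_C_mul_X (c : R) :
    rescale (-1 : R) (1 - C c * X) = 1 + C c * X := by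
  simp [rescale_C, sub_eq_add_neg]

theorem mul_rescale_neg_one_eq_one {f g : R⟦X⟧} (hf : IsUnit f) (hfg : f * g = rescale (-1) f) :
    g * rescale (-1) g = 1 := by
  have hinv : rescale (-1 : R) (rescale (-1) f) = f := by
    rw [rescale_rescale, neg_one_mul, neg_neg, rescale_one, RingHom.id_apply]
  refine hf.mul_left_cancel ?_
  calc f * (g * rescale (-1) g) = rescale (-1) f * rescale (-1) g := by rw [← mul_assoc, hfg]
    _ = f := by rw [← map_mul, hfg, hinv]
    _ = f * 1 := (mul_one f).symm

theorem one_add_C_mul_X_mul_rescale_neg_one (c : R) :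
    (1 + C c * X) * rescale (-1) (1 + C c * X) = 1 + C (-c ^ 2) * X ^ 2 := by
  rw [rescale_neg_one_one_add_C_mul_X, map_neg, map_pow]
  ring

theorem coeff_two_mul_mul_rescale_neg_one (f : R⟦X⟧) (r : ℕ) :
    coeff (2 * r) (f * rescale (-1) f) = (-1) ^ r * (coeff r f ^ 2 +
      2 * ∑ i ∈ range r, (-1) ^ (i + 1) * coeff (r + (i + 1)) f * coeff (r - (i + 1)) f) := by
  rw [coeff_mul, Nat.sum_antidiagonal_eq_sum_range_succ
    (fun a b => coeff a f * coeff b (rescale (-1) f)), sum_range_two_mul_add_one, mul_add,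
    mul_sum, mul_sum]
  congr 1
  · rw [show 2 * r - r = r by omega, coeff_rescale]
    ring
  refine sum_congr rfl fun i hi => ?_
  have hir : i + 1 ≤ r := mem_range.mp hi
  have hsign : (-1 : R) ^ (r - (i + 1)) = (-1) ^ (r + (i + 1)) := by
    rw [show r + (i + 1) = r - (i + 1) + 2 * (i + 1) by omega, pow_add, pow_mul, neg_one_sq,
      one_pow, mul_one]
  rw [show 2 * r - (r - (i + 1)) = r + (i + 1) by omega,
    show 2 * r - (r + (i + 1)) = r - (i + 1) by omega, coeff_rescale, coeff_rescale, hsign, pow_add]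
  ring

end PowerSeries

theorem stmt1
    (q : ℕ → MvPolynomial (Fin n ⊕ Fin k) ℚ)
    (hq : (∏ i : Fin n,
        (1 - PowerSeries.C (R := MvPolynomial (Fin n ⊕ Fin k) ℚ) (xv n k i) * PowerSeries.X)) *
        PowerSeries.mk q =
      ∏ i : Fin n,
        (1 + PowerSeries.C (R := MvPolynomial (Fin n ⊕ Fin k) ℚ) (xv n k i) * PowerSeries.X))
    (theta : ℕ → MvPolynomial (Fin n ⊕ Fin k) ℚ)
    (htheta : ∀ r : ℕ, theta r = ∑ i ∈ Finset.range (r + 1), q (r - i) * ey n k i) :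
    ∀ r : ℕ,
      theta r ^ 2 +
        2 * ∑ i ∈ Finset.range r, (-1) ^ (i + 1) * theta (r + (i + 1)) * theta (r - (i + 1)) =
      eySq n k r := by
  intro r
  have hE : mk (ey n k) = ∏ j, (1 + C (yv n k j) * X) := by
    refine PowerSeries.ext fun m => ?_
    simpa [ey] using (coeff_mul_prod_one_add_C_mul_X_pow one_pos univ (yv n k) m).symm
  have hΘ : mk theta = mk (ey n k) * mk q := by
    refine PowerSeries.ext fun m => ?_
    rw [coeff_mk, htheta, coeff_mul, Nat.sum_antidiagonal_eq_sum_range_succ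
      (fun a b => coeff a (mk (ey n k)) * coeff b (mk q))]
    exact sum_congr rfl fun i _ => by simp only [coeff_mk, mul_comm]
  have hQ : mk q * rescale (-1) (mk q) = 1 := by
    refine mul_rescale_neg_one_eq_one (f := ∏ i, (1 - C (xv n k i) * X))
      (isUnit_iff_constantCoeff.mpr (by simp)) ?_
    simpa [map_prod, rescale_neg_one_one_sub_C_mul_X] using hq
  have hΘΘ : mk theta * rescale (-1) (mk theta) = ∏ j, (1 + C (-yv n k j ^ 2) * X ^ 2) := by
    rw [hΘ, map_mul, mul_mul_mul_comm, hQ, mul_one, hE, map_prod, ← prod_mul_distrib]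
    exact prod_congr rfl fun j _ => one_add_C_mul_X_mul_rescale_neg_one _
  have hcoeff := congrArg (coeff (2 * r)) hΘΘ
  simp only [coeff_two_mul_mul_rescale_neg_one, coeff_mk,
    coeff_mul_prod_one_add_C_mul_X_pow two_pos, prod_neg] at hcoeff
  have hsign : ∑ t ∈ powersetCard r univ, (-1) ^ #t * ∏ j ∈ t, yv n k j ^ 2 =
      (-1) ^ r * eySq n k r := by
    rw [eySq, mul_sum]
    exact sum_congr rfl fun t ht => by rw [(mem_powersetCard.mp ht).2]
  rw [hsign] at hcoeff
  exact mul_left_cancel₀ (pow_ne_zero r (neg_ne_zero.mpr one_ne_zero)) hcoeff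

end
end

section
/- For any integer r ≥ 1 the elements η_r and η'_k defined from ϑ_r satisfy the relations η_r^2 + Σ_{i=1}^{r} (−1)^i η_{r+i} c_{r−i} = 0 for r > k, and η_k η'_k + Σ_{i=1}^{k} (−1)^i η_{k+i} η_{k−i} = 0, where c_p = η_p for p < k, c_k = η_k + η'_k, and c_p = 2η_p for p > k. -/
/-!
STATEMENT 4: In a commutative ring containing 1/2, suppose `ϑ : ℕ → R` (with
`ϑ 0 = 1`) and `ek` (playing the role of `e_k(y)`) satisfy
`ϑ_r² + 2∑_{i=1}^r (-1)^i ϑ_{r+i} ϑ_{r-i} = 0` for `r > k` and `= ek²` for `r = k`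
(i.e. the identity (t-to-e) with `e_r(y²) = 0` for `r > k` and `e_k(y²) = e_k(y)²`).
Define `η_r = ϑ_r` for `r < k`, `η_k = (ϑ_k + ek)/2`, `η'_k = (ϑ_k − ek)/2`,
`η_r = ϑ_r/2` for `r > k`, and `c_p = η_p` for `p < k`, `c_0 = 1`,
`c_k = η_k + η'_k`, `c_p = 2η_p` for `p > k`.  Then
`η_r² + ∑_{i=1}^r (-1)^i η_{r+i} c_{r-i} = 0` for all `r > k`, and
`η_k η'_k + ∑_{i=1}^k (-1)^i η_{k+i} η_{k-i} = 0`.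
-/

theorem stmt4 (R : Type*) [CommRing R] [Invertible (2 : R)]
    (k : ℕ) (hk : 1 ≤ k)
    (theta : ℕ → R) (htheta0 : theta 0 = 1) (ek : R)
    (hrel_gt : ∀ r : ℕ, k < r →
      theta r ^ 2 +
        2 * ∑ i ∈ Finset.range r, (-1) ^ (i + 1) * theta (r + (i + 1)) * theta (r - (i + 1)) = 0)
    (hrel_k :
      theta k ^ 2 +
        2 * ∑ i ∈ Finset.range k, (-1) ^ (i + 1) * theta (k + (i + 1)) * theta (k - (i + 1)) =
      ek ^ 2)
    (eta : ℕ → R) (eta'k : R)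
    (heta : ∀ r : ℕ, eta r =
      if r < k then theta r
      else if r = k then ⅟ (2 : R) * (theta k + ek)
      else ⅟ (2 : R) * theta r)
    (heta'k : eta'k = ⅟ (2 : R) * (theta k - ek))
    (c : ℕ → R)
    (hc : ∀ p : ℕ, c p =
      if p = 0 then 1
      else if p < k then eta p
      else if p = k then eta k + eta'k
      else 2 * eta p) :
    (∀ r : ℕ, k < r →
      eta r ^ 2 + ∑ i ∈ Finset.range r, (-1) ^ (i + 1) * eta (r + (i + 1)) * c (r - (i + 1)) = 0)
    ∧
    eta k * eta'k +
        ∑ i ∈ Finset.range k, (-1) ^ (i + 1) * eta (k + (i + 1)) * eta (k - (i + 1)) = 0 := by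

  have h2 : (⅟(2:R)) * 2 = 1 := invOf_mul_self 2
  have heta_gt : ∀ m, k < m → eta m = ⅟(2:R) * theta m := by
    intro m hm
    rw [heta]
    rw [if_neg (by omega), if_neg (by omega)]
  have heta_lt : ∀ m, m < k → eta m = theta m := by
    intro m hm
    rw [heta, if_pos hm]
  have hetak : eta k = ⅟(2:R) * (theta k + ek) := by
    rw [heta, if_neg (by omega), if_pos rfl]
  have hcm : ∀ m, c m = theta m := by
    intro m
    rw [hc]
    split_ifs with h0 hlt hek
    · rw [h0, htheta0]
    · exact heta_lt m hlt
    · rw [hetak, heta'k, hek]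
      linear_combination theta k * h2
    · rw [heta_gt m (by omega)]
      linear_combination theta m * h2
  constructor
  · intro r hr
    have hsum : ∑ i ∈ Finset.range r, (-1) ^ (i + 1) * eta (r + (i + 1)) * c (r - (i + 1))
        = ⅟(2:R) * ∑ i ∈ Finset.range r, (-1) ^ (i + 1) * theta (r + (i + 1)) * theta (r - (i + 1)) := by
      rw [Finset.mul_sum]
      refine Finset.sum_congr rfl fun i _ => ?_
      rw [heta_gt (r + (i + 1)) (by omega), hcm]
      ring
    rw [hsum, heta_gt r hr]
    have key := hrel_gt r hr
    set S := ∑ i ∈ Finset.range r, (-1) ^ (i + 1) * theta (r + (i + 1)) * theta (r - (i + 1)) with hS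
    linear_combination (⅟(2:R) * ⅟(2:R)) * key - (⅟(2:R) * S) * h2
  · have hsum : ∑ i ∈ Finset.range k, (-1) ^ (i + 1) * eta (k + (i + 1)) * eta (k - (i + 1))
        = ⅟(2:R) * ∑ i ∈ Finset.range k, (-1) ^ (i + 1) * theta (k + (i + 1)) * theta (k - (i + 1)) := by
      rw [Finset.mul_sum]
      refine Finset.sum_congr rfl fun i hi => ?_
      rw [heta_gt (k + (i + 1)) (by omega), heta_lt (k - (i + 1)) (by omega)]
      ring
    rw [hsum, hetak, heta'k]
    set S := ∑ i ∈ Finset.range k, (-1) ^ (i + 1) * theta (k + (i + 1)) * theta (k - (i + 1)) with hS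
    linear_combination (⅟(2:R) * ⅟(2:R)) * hrel_k - (⅟(2:R) * S) * h2
end

section
/- Let λ and μ be integer sequences and D a valid set of pairs. If (j, j+1) ∉ D and for each h < j, (h,j) ∈ D iff (h,j+1) ∈ D, then for any integers r, s: T(D, (λ_1,…,λ_{j−1}, r, s, μ)) = −T(D, (λ_1,…,λ_{j−1}, s−1, r+1, μ)). In particular T(D, (λ, r, r+1, μ)) = 0. -/
/-!
STATEMENT 8 (Lemma `commuteA`).  Setup: a commutative ring (containing ℚ, to
accommodate the factor `2^{-#{i : (i,i) ∈ D}}`) with elements `c r` (`r : ℤ`,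
`c 0 = 1`, `c r = 0` for `r < 0`) satisfying
`c_r² + 2∑_{i=1}^r (-1)^i c_{r+i} c_{r-i} = 0` for all `r > k`.
Raising operators act on integer sequences (of length `L`); the operator series
`R^D = ∏_{i<j} (1-R_{ij}) ∏_{i<j, (i,j) ∈ D} (1+R_{ij})^{-1}` is expanded as a sum
over exponent matrices `nn : Fin L → Fin L → ℕ`, with per-pair coefficients:
for `(i,j) ∈ D`, `(1-R)(1+R)^{-1} = 1 + 2∑_{m≥1} (-1)^m R^m`; for `(i,j) ∉ D`,
`1 - R`.  `T(D,λ) = 2^{-#diag(D)} R^D c_λ` (a finite sum, expressed via `finsum`).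

The lemma: if `D` is a valid set of pairs with `(j, j+1) ∉ D` and, for each
`h < j`, `(h,j) ∈ D ↔ (h,j+1) ∈ D`, then for any integers `r, s`:
`T(D, (λ, r, s, μ)) = -T(D, (λ, s-1, r+1, μ))`; in particular
`T(D, (λ, r, r+1, μ)) = 0`.
-/

namespace Stmt8

noncomputable section

/-- The integer sequence obtained by applying the raising-operator monomial with
exponent matrix `nn` (exponent `nn i j` on `R_{ij}`) to the sequence `lam`. -/
def rapply {L : ℕ} (nn : Fin L → Fin L → ℕ) (lam : Fin L → ℤ) : Fin L → ℤ :=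
  fun p => lam p + (∑ j, (nn p j : ℤ)) - ∑ h, (nn h p : ℤ)

/-- Coefficient of `R_{ij}^m` in the per-pair factor of `R^D`. -/
def pairCoef {L : ℕ} (D : Finset (Fin L × Fin L)) (i j : Fin L) (m : ℕ) : ℚ :=
  if i < j then
    (if (i, j) ∈ D then (if m = 0 then 1 else 2 * (-1 : ℚ) ^ m)
     else (if m = 0 then 1 else if m = 1 then -1 else 0))
  else (if m = 0 then 1 else 0)

/-- Coefficient of the raising-operator monomial `∏ R_{ij}^{nn i j}` in `R^D`. -/
def coefRD {L : ℕ} (D : Finset (Fin L × Fin L)) (nn : Fin L → Fin L → ℕ) : ℚ :=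
  ∏ i, ∏ j, pairCoef D i j (nn i j)

/-- `T(D, λ) = 2^{-#{i : (i,i) ∈ D}} • R^D c_λ`. -/
def T {R : Type*} [CommRing R] [Algebra ℚ R] {L : ℕ}
    (c : ℤ → R) (D : Finset (Fin L × Fin L)) (lam : Fin L → ℤ) : R :=
  ((2 : ℚ) ^ (D.filter fun p => p.1 = p.2).card)⁻¹ •
    ∑ᶠ nn : Fin L → Fin L → ℕ, coefRD D nn • ∏ i, c (rapply nn lam i)

/-- `D` is a valid set of pairs: `i ≤ j` for all `(i,j) ∈ D`, and `D` is
downward closed in `Δ`. -/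
def ValidPairs {L : ℕ} (D : Finset (Fin L × Fin L)) : Prop :=
  ∀ p ∈ D, p.1 ≤ p.2 ∧
    ∀ q : Fin L × Fin L, q.1 ≤ q.2 → q.1 ≤ p.1 → q.2 ≤ p.2 → q ∈ D

end

end Stmt8

namespace Stmt8Aux
open Stmt8

def flip1 (m : ℕ) : ℕ := if m = 0 then 1 else if m = 1 then 0 else m

lemma flip1_invol (m : ℕ) : flip1 (flip1 m) = m := by
  rcases m with _ | _ | m <;> simp [flip1]

def eF {L : ℕ} (p p' : Fin L) (nn : Fin L → Fin L → ℕ) : Fin L → Fin L → ℕ :=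
  fun i j => if i = p ∧ j = p' then flip1 (nn p p')
    else if i = p' ∧ j = p then nn p' p
    else nn (Equiv.swap p p' i) (Equiv.swap p p' j)

lemma eF_invol {L : ℕ} (p p' : Fin L) (hne : p ≠ p') :
    Function.Involutive (eF p p') := by
  intro nn
  funext i j
  by_cases h1 : i = p ∧ j = p'
  · rw [h1.1, h1.2]
    have e1 : eF p p' nn p p' = flip1 (nn p p') := by simp [eF]
    simp [eF, e1, flip1_invol]
  · by_cases h2 : i = p' ∧ j = p
    · rw [h2.1, h2.2]
      have e1 : eF p p' nn p' p = nn p' p := by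
        simp [eF, hne, hne.symm]
      simp [eF, hne, hne.symm, e1]
    · have houter : eF p p' (eF p p' nn) i j
          = eF p p' nn (Equiv.swap p p' i) (Equiv.swap p p' j) := by
        simp [eF, h1, h2]
      rw [houter]
      have hc1 : ¬(Equiv.swap p p' i = p ∧ Equiv.swap p p' j = p') := by
        rintro ⟨ha, hb⟩
        exact h2 ⟨(Equiv.swap p p').injective (by rw [ha, Equiv.swap_apply_right]),
          (Equiv.swap p p').injective (by rw [hb, Equiv.swap_apply_left])⟩
      have hc2 : ¬(Equiv.swap p p' i = p' ∧ Equiv.swap p p' j = p) := by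
        rintro ⟨ha, hb⟩
        exact h1 ⟨(Equiv.swap p p').injective (by rw [ha, Equiv.swap_apply_left]),
          (Equiv.swap p p').injective (by rw [hb, Equiv.swap_apply_right])⟩
      rw [show eF p p' nn (Equiv.swap p p' i) (Equiv.swap p p' j)
          = nn (Equiv.swap p p' (Equiv.swap p p' i)) (Equiv.swap p p' (Equiv.swap p p' j)) from by
        simp [eF, hc1, hc2]]
      rw [Equiv.swap_apply_self, Equiv.swap_apply_self]

lemma pairCoef_swap {L : ℕ} (D : Finset (Fin L × Fin L)) (p p' : Fin L)
    (hpp' : (p' : ℕ) = (p : ℕ) + 1)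
    (hPJ : ∀ j : Fin L, p' ≤ j → (p, j) ∉ D)
    (hP'J : ∀ j : Fin L, p' ≤ j → (p', j) ∉ D)
    (hcols : ∀ h : Fin L, h < p → ((h, p) ∈ D ↔ (h, p') ∈ D))
    (i j : Fin L) (m : ℕ) (h1 : ¬(i = p ∧ j = p')) (h2 : ¬(i = p' ∧ j = p)) :
    pairCoef D (Equiv.swap p p' i) (Equiv.swap p p' j) m = pairCoef D i j m := by
  have hne : p ≠ p' := by
    intro h; rw [h] at hpp'; omega
  by_cases hip : i = p
  · rw [hip]
    by_cases hjp : j = p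
    · rw [hjp]
      simp [Equiv.swap_apply_left, pairCoef, lt_irrefl]
    · have hjq : j ≠ p' := fun h => h1 ⟨hip, h⟩
      rw [Equiv.swap_apply_left, Equiv.swap_apply_of_ne_of_ne hjp hjq]
      have hv1 : (j : ℕ) ≠ (p : ℕ) := fun h => hjp (Fin.ext h)
      have hv2 : (j : ℕ) ≠ (p' : ℕ) := fun h => hjq (Fin.ext h)
      rcases Nat.lt_or_ge (j : ℕ) (p : ℕ) with h | h
      · have e1 : ¬ p < j := by rw [Fin.lt_def]; omega
        have e2 : ¬ p' < j := by rw [Fin.lt_def]; omega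
        simp [pairCoef, e1, e2]
      · have e1 : p < j := by rw [Fin.lt_def]; omega
        have e2 : p' < j := by rw [Fin.lt_def]; omega
        have d1 : (p, j) ∉ D := hPJ j e2.le
        have d2 : (p', j) ∉ D := hP'J j e2.le
        simp [pairCoef, e1, e2, d1, d2]
  · by_cases hip' : i = p'
    · rw [hip']
      by_cases hjq : j = p'
      · rw [hjq]
        simp [Equiv.swap_apply_right, pairCoef, lt_irrefl]
      · have hjp : j ≠ p := fun h => h2 ⟨hip', h⟩
        rw [Equiv.swap_apply_right, Equiv.swap_apply_of_ne_of_ne hjp hjq]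
        have hv1 : (j : ℕ) ≠ (p : ℕ) := fun h => hjp (Fin.ext h)
        have hv2 : (j : ℕ) ≠ (p' : ℕ) := fun h => hjq (Fin.ext h)
        rcases Nat.lt_or_ge (j : ℕ) (p : ℕ) with h | h
        · have e1 : ¬ p < j := by rw [Fin.lt_def]; omega
          have e2 : ¬ p' < j := by rw [Fin.lt_def]; omega
          simp [pairCoef, e1, e2]
        · have e1 : p < j := by rw [Fin.lt_def]; omega
          have e2 : p' < j := by rw [Fin.lt_def]; omega
          have d1 : (p, j) ∉ D := hPJ j e2.le
          have d2 : (p', j) ∉ D := hP'J j e2.le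
          simp [pairCoef, e1, e2, d1, d2]
    · have hσi : Equiv.swap p p' i = i := Equiv.swap_apply_of_ne_of_ne hip hip'
      have hv1 : (i : ℕ) ≠ (p : ℕ) := fun h => hip (Fin.ext h)
      have hv2 : (i : ℕ) ≠ (p' : ℕ) := fun h => hip' (Fin.ext h)
      by_cases hjp : j = p
      · rw [hjp]
        rw [hσi, Equiv.swap_apply_left]
        rcases Nat.lt_or_ge (i : ℕ) (p : ℕ) with h | h
        · have e1 : i < p := by rw [Fin.lt_def]; omega
          have e2 : i < p' := by rw [Fin.lt_def]; omega
          simp [pairCoef, e1, e2, hcols i e1]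
        · have e1 : ¬ i < p := by rw [Fin.lt_def]; omega
          have e2 : ¬ i < p' := by rw [Fin.lt_def]; omega
          simp [pairCoef, e1, e2]
      · by_cases hjq : j = p'
        · rw [hjq]
          rw [hσi, Equiv.swap_apply_right]
          rcases Nat.lt_or_ge (i : ℕ) (p : ℕ) with h | h
          · have e1 : i < p := by rw [Fin.lt_def]; omega
            have e2 : i < p' := by rw [Fin.lt_def]; omega
            simp [pairCoef, e1, e2, hcols i e1]
          · have e1 : ¬ i < p := by rw [Fin.lt_def]; omega
            have e2 : ¬ i < p' := by rw [Fin.lt_def]; omega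
            simp [pairCoef, e1, e2]
        · rw [hσi, Equiv.swap_apply_of_ne_of_ne hjp hjq]

lemma pairCoef_flip {L : ℕ} (D : Finset (Fin L × Fin L)) (p p' : Fin L)
    (hlt : p < p') (hnotin : (p, p') ∉ D) (m : ℕ) :
    pairCoef D p p' (flip1 m) = - pairCoef D p p' m := by
  rcases m with _ | _ | m <;> simp [pairCoef, flip1, hlt, hnotin]

end Stmt8Aux

namespace Stmt8Aux
open Stmt8

lemma coefRD_zero₁ {L : ℕ} (D : Finset (Fin L × Fin L)) (p p' : Fin L)
    (hlt : p < p') (hnotin : (p, p') ∉ D) (nn : Fin L → Fin L → ℕ)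
    (hm : 2 ≤ nn p p') : coefRD D nn = 0 := by
  have hz : pairCoef D p p' (nn p p') = 0 := by
    have h0 : nn p p' ≠ 0 := by omega
    have h1 : nn p p' ≠ 1 := by omega
    simp [pairCoef, hlt, hnotin, h0, h1]
  exact Finset.prod_eq_zero (Finset.mem_univ p)
    (Finset.prod_eq_zero (Finset.mem_univ p') hz)

lemma coefRD_zero₂ {L : ℕ} (D : Finset (Fin L × Fin L)) (p p' : Fin L)
    (hlt : p < p') (nn : Fin L → Fin L → ℕ)
    (hm : nn p' p ≠ 0) : coefRD D nn = 0 := by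
  have hz : pairCoef D p' p (nn p' p) = 0 := by
    have hnl : ¬ p' < p := not_lt_of_gt hlt
    simp [pairCoef, hnl, hm]
  exact Finset.prod_eq_zero (Finset.mem_univ p')
    (Finset.prod_eq_zero (Finset.mem_univ p) hz)

lemma keyCoef {L : ℕ} (D : Finset (Fin L × Fin L)) (p p' : Fin L)
    (hlt : p < p') (hne : p ≠ p') (hnotin : (p, p') ∉ D)
    (hswap : ∀ i j m, ¬(i = p ∧ j = p') → ¬(i = p' ∧ j = p) →
      pairCoef D (Equiv.swap p p' i) (Equiv.swap p p' j) m = pairCoef D i j m)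
    (nn : Fin L → Fin L → ℕ) :
    coefRD D (eF p p' nn) = - coefRD D nn := by
  have hconv : ∀ mm : Fin L → Fin L → ℕ,
      coefRD D mm = ∏ x : Fin L × Fin L, pairCoef D x.1 x.2 (mm x.1 x.2) := by
    intro mm
    exact (Fintype.prod_prod_type fun x => pairCoef D x.1 x.2 (mm x.1 x.2)).symm
  rw [hconv, hconv]
  set σ := Equiv.swap p p' with hσ
  set ρ : (Fin L × Fin L) ≃ (Fin L × Fin L) := σ.prodCongr σ with hρ
  set τ : (Fin L × Fin L) ≃ (Fin L × Fin L) := Equiv.swap (p, p') (p', p) with hτ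
  have hre : (∏ x : Fin L × Fin L, pairCoef D x.1 x.2 (eF p p' nn x.1 x.2))
      = ∏ x : Fin L × Fin L,
          pairCoef D (ρ (τ x)).1 (ρ (τ x)).2 (eF p p' nn (ρ (τ x)).1 (ρ (τ x)).2) := by
    rw [Equiv.prod_comp τ
      (fun x => pairCoef D (ρ x).1 (ρ x).2 (eF p p' nn (ρ x).1 (ρ x).2)),
      Equiv.prod_comp ρ (fun x => pairCoef D x.1 x.2 (eF p p' nn x.1 x.2))]
  rw [hre]
  have hterm : ∀ x : Fin L × Fin L,
      pairCoef D (ρ (τ x)).1 (ρ (τ x)).2 (eF p p' nn (ρ (τ x)).1 (ρ (τ x)).2)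
        = (if x = (p, p') then (-1 : ℚ) else 1) * pairCoef D x.1 x.2 (nn x.1 x.2) := by
    intro x
    by_cases hx1 : x = (p, p')
    · rw [hx1]
      have ht : τ ((p, p') : Fin L × Fin L) = (p', p) := Equiv.swap_apply_left _ _
      have hr : ρ (((p' : Fin L), p) : Fin L × Fin L) = (p, p') := by
        simp [hρ, hσ, Equiv.prodCongr_apply, Equiv.swap_apply_left, Equiv.swap_apply_right]
      rw [ht, hr]
      have heF : eF p p' nn p p' = flip1 (nn p p') := by simp [eF]
      rw [heF, if_pos rfl, pairCoef_flip D p p' hlt hnotin]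
      ring
    · by_cases hx2 : x = (p', p)
      · rw [hx2]
        have ht : τ (((p' : Fin L), p) : Fin L × Fin L) = (p, p') := Equiv.swap_apply_right _ _
        have hr : ρ ((p, p') : Fin L × Fin L) = (p', p) := by
          simp [hρ, hσ, Equiv.prodCongr_apply, Equiv.swap_apply_left, Equiv.swap_apply_right]
        rw [ht, hr]
        have heF : eF p p' nn p' p = nn p' p := by simp [eF, hne, hne.symm]
        have hxne : (((p' : Fin L), p) : Fin L × Fin L) ≠ (p, p') := by
          intro h
          exact hne (congrArg Prod.snd h)
        rw [heF, if_neg hxne, one_mul]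
      · have ht : τ x = x := Equiv.swap_apply_of_ne_of_ne hx1 hx2
        rw [ht, if_neg hx1, one_mul]
        have hc1 : ¬(σ x.1 = p ∧ σ x.2 = p') := by
          rintro ⟨ha, hb⟩
          exact hx2 (Prod.ext (σ.injective (by rw [ha, hσ, Equiv.swap_apply_right]))
            (σ.injective (by rw [hb, hσ, Equiv.swap_apply_left])))
        have hc2 : ¬(σ x.1 = p' ∧ σ x.2 = p) := by
          rintro ⟨ha, hb⟩
          exact hx1 (Prod.ext (σ.injective (by rw [ha, hσ, Equiv.swap_apply_left]))
            (σ.injective (by rw [hb, hσ, Equiv.swap_apply_right])))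
        have hρx : ρ x = (σ x.1, σ x.2) := rfl
        rw [hρx]
        have heF : eF p p' nn (σ x.1) (σ x.2) = nn x.1 x.2 := by
          have : eF p p' nn (σ x.1) (σ x.2) = nn (σ (σ x.1)) (σ (σ x.2)) := by
            simp only [eF, hσ]
            rw [if_neg (by rw [← hσ]; exact hc1), if_neg (by rw [← hσ]; exact hc2)]
          rw [this, hσ, Equiv.swap_apply_self, Equiv.swap_apply_self]
        have hx1' : ¬(x.1 = p ∧ x.2 = p') := fun ⟨u, v⟩ => hx1 (Prod.ext u v)
        have hx2' : ¬(x.1 = p' ∧ x.2 = p) := fun ⟨u, v⟩ => hx2 (Prod.ext u v)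
        calc pairCoef D (σ x.1, σ x.2).1 (σ x.1, σ x.2).2 (eF p p' nn (σ x.1, σ x.2).1 (σ x.1, σ x.2).2)
            = pairCoef D (σ x.1) (σ x.2) (nn x.1 x.2) := by rw [show ((σ x.1, σ x.2).1 : Fin L) = σ x.1 from rfl, show ((σ x.1, σ x.2).2 : Fin L) = σ x.2 from rfl, heF]
          _ = pairCoef D x.1 x.2 (nn x.1 x.2) := hswap x.1 x.2 _ hx1' hx2'
  rw [Finset.prod_congr rfl (fun x _ => hterm x), Finset.prod_mul_distrib,
    Finset.prod_ite_eq' Finset.univ ((p, p') : Fin L × Fin L) (fun _ => (-1 : ℚ))]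
  simp

end Stmt8Aux

namespace Stmt8Aux
open Stmt8

lemma rapply_eF {L : ℕ} (p p' : Fin L) (hpp' : (p' : ℕ) = (p : ℕ) + 1)
    (nn : Fin L → Fin L → ℕ) (hm : nn p p' ≤ 1) (h0 : nn p' p = 0)
    (a : Fin L → ℤ) (r s : ℤ) (i : Fin L) :
    rapply (eF p p' nn) (Function.update (Function.update a p r) p' s) i
      = rapply nn (Function.update (Function.update a p (s - 1)) p' (r + 1))
          (Equiv.swap p p' i) := by
  have hne : p ≠ p' := by intro h; rw [h] at hpp'; omega
  have hterm : ∀ i j : Fin L, ((eF p p' nn i j : ℤ))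
      = (nn ((Equiv.swap p p') i) ((Equiv.swap p p') j) : ℤ)
        + (if i = p ∧ j = p' then 1 - (nn p p' : ℤ) else 0)
        + (if i = p' ∧ j = p then -(nn p p' : ℤ) else 0) := by
    intro i j
    by_cases h1 : i = p ∧ j = p'
    · rw [h1.1, h1.2]
      have e1 : eF p p' nn p p' = flip1 (nn p p') := by simp [eF]
      have e2 : (Equiv.swap p p') p = p' := Equiv.swap_apply_left _ _
      have e3 : (Equiv.swap p p') p' = p := Equiv.swap_apply_right _ _
      rw [e1, e2, e3, h0]
      have hcond : ¬((p : Fin L) = p' ∧ (p' : Fin L) = p) := fun h => hne h.1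
      rw [if_pos ⟨rfl, rfl⟩, if_neg hcond]
      interval_cases h : nn p p' <;> simp [flip1]
    · by_cases h2 : i = p' ∧ j = p
      · rw [h2.1, h2.2]
        have e1 : eF p p' nn p' p = nn p' p := by simp [eF, hne, hne.symm]
        have e2 : (Equiv.swap p p') p = p' := Equiv.swap_apply_left _ _
        have e3 : (Equiv.swap p p') p' = p := Equiv.swap_apply_right _ _
        have hcond : ¬((p' : Fin L) = p ∧ (p : Fin L) = p') := fun h => hne h.2
        rw [e1, e2, e3, h0, if_neg hcond, if_pos ⟨rfl, rfl⟩]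
        ring
      · have e1 : eF p p' nn i j = nn ((Equiv.swap p p') i) ((Equiv.swap p p') j) := by simp [eF, h1, h2]
        rw [e1, if_neg h1, if_neg h2]
        ring
  have hrow : ∀ i : Fin L, (∑ j, ((eF p p' nn i j : ℤ)))
      = (∑ j, (nn ((Equiv.swap p p') i) j : ℤ))
        + (if i = p then 1 - (nn p p' : ℤ) else 0)
        + (if i = p' then -(nn p p' : ℤ) else 0) := by
    intro i
    rw [Finset.sum_congr rfl (fun j _ => hterm i j)]
    rw [Finset.sum_add_distrib, Finset.sum_add_distrib]
    congr 1
    · congr 1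
      · exact Equiv.sum_comp (Equiv.swap p p') (fun j => (nn ((Equiv.swap p p') i) j : ℤ))
      · by_cases hi : i = p <;> simp [hi]
    · by_cases hi : i = p' <;> simp [hi]
  have hcol : ∀ i : Fin L, (∑ h, ((eF p p' nn h i : ℤ)))
      = (∑ h, (nn h ((Equiv.swap p p') i) : ℤ))
        + (if i = p' then 1 - (nn p p' : ℤ) else 0)
        + (if i = p then -(nn p p' : ℤ) else 0) := by
    intro i
    rw [Finset.sum_congr rfl (fun h _ => hterm h i)]
    rw [Finset.sum_add_distrib, Finset.sum_add_distrib]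
    congr 1
    · congr 1
      · exact Equiv.sum_comp (Equiv.swap p p') (fun h => (nn h ((Equiv.swap p p') i) : ℤ))
      · by_cases hi : i = p' <;> simp [hi]
    · by_cases hi : i = p <;> simp [hi]
  simp only [rapply]
  rw [hrow i, hcol i]
  by_cases hi : i = p
  · rw [hi]
    simp [Equiv.swap_apply_left, hne, Ne.symm hne, Function.update_apply]
    ring
  · by_cases hi' : i = p'
    · rw [hi']
      simp [Equiv.swap_apply_right, hne, Ne.symm hne, Function.update_apply]
      ring
    · rw [Equiv.swap_apply_of_ne_of_ne hi hi']
      simp [hi, hi', Function.update_apply]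

end Stmt8Aux

open Stmt8 in
theorem stmt8 (R : Type*) [CommRing R] [Algebra ℚ R]
    (k : ℕ) (c : ℤ → R)
    (hc0 : c 0 = 1) (hcneg : ∀ r : ℤ, r < 0 → c r = 0)
    (hrel : ∀ r : ℤ, (k : ℤ) < r →
      c r ^ 2 + 2 * ∑ i ∈ Finset.Icc (1 : ℤ) r, (-1) ^ i.toNat * c (r + i) * c (r - i) = 0)
    (L : ℕ) (D : Finset (Fin L × Fin L)) (hD : ValidPairs D)
    (p p' : Fin L) (hpp' : (p' : ℕ) = (p : ℕ) + 1)
    (hnotin : (p, p') ∉ D)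
    (hcols : ∀ h : Fin L, h < p → ((h, p) ∈ D ↔ (h, p') ∈ D))
    (a : Fin L → ℤ) :
    (∀ r s : ℤ,
      T c D (Function.update (Function.update a p r) p' s) =
        - T c D (Function.update (Function.update a p (s - 1)) p' (r + 1))) ∧
    (∀ r : ℤ, T c D (Function.update (Function.update a p r) p' (r + 1)) = 0) := by
  have hne : p ≠ p' := by intro h; rw [h] at hpp'; omega
  have hlt : p < p' := by rw [Fin.lt_def]; omega
  have hPJ : ∀ j : Fin L, p' ≤ j → (p, j) ∉ D := by
    intro j hj hmem
    exact hnotin ((hD _ hmem).2 (p, p') hlt.le le_rfl hj)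
  have hP'J : ∀ j : Fin L, p' ≤ j → (p', j) ∉ D := by
    intro j hj hmem
    exact hPJ j hj ((hD _ hmem).2 (p, j) (hlt.le.trans hj) hlt.le le_rfl)
  have hswap := Stmt8Aux.pairCoef_swap D p p' hpp' hPJ hP'J hcols
  have key1 : ∀ r s : ℤ,
      T c D (Function.update (Function.update a p r) p' s) =
        - T c D (Function.update (Function.update a p (s - 1)) p' (r + 1)) := by
    intro r s
    set lam := Function.update (Function.update a p r) p' s with hlam
    set lam' := Function.update (Function.update a p (s - 1)) p' (r + 1) with hlam'
    have hpt : ∀ nn : Fin L → Fin L → ℕ,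
        coefRD D (Stmt8Aux.eF p p' nn) • ∏ i, c (rapply (Stmt8Aux.eF p p' nn) lam i)
          = - (coefRD D nn • ∏ i, c (rapply nn lam' i)) := by
      intro nn
      rw [Stmt8Aux.keyCoef D p p' hlt hne hnotin (fun i j m h1 h2 => hswap i j m h1 h2) nn,
        neg_smul, ← neg_smul, neg_smul, neg_inj]
      by_cases hz : 2 ≤ nn p p' ∨ nn p' p ≠ 0
      · have hz0 : coefRD D nn = 0 := by
          rcases hz with hz | hz
          · exact Stmt8Aux.coefRD_zero₁ D p p' hlt hnotin nn hz
          · exact Stmt8Aux.coefRD_zero₂ D p p' hlt nn hz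
        rw [hz0, zero_smul, zero_smul]
      · push_neg at hz
        obtain ⟨h1, h2⟩ := hz
        have hr := Stmt8Aux.rapply_eF p p' hpp' nn (by omega) h2 a r s
        congr 1
        rw [Finset.prod_congr rfl (fun i _ => by rw [hr i])]
        exact Equiv.prod_comp (Equiv.swap p p') (fun i => c (rapply nn lam' i))
    have hsum : (∑ᶠ nn : Fin L → Fin L → ℕ, coefRD D nn • ∏ i, c (rapply nn lam i))
        = - ∑ᶠ nn : Fin L → Fin L → ℕ, coefRD D nn • ∏ i, c (rapply nn lam' i) := by
      calc (∑ᶠ nn : Fin L → Fin L → ℕ, coefRD D nn • ∏ i, c (rapply nn lam i))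
          = ∑ᶠ nn : Fin L → Fin L → ℕ,
              coefRD D ((Function.Involutive.toPerm _ (Stmt8Aux.eF_invol p p' hne)) nn) •
                ∏ i, c (rapply ((Function.Involutive.toPerm _ (Stmt8Aux.eF_invol p p' hne)) nn) lam i) :=
            (finsum_comp_equiv (Function.Involutive.toPerm _ (Stmt8Aux.eF_invol p p' hne))).symm
        _ = ∑ᶠ nn : Fin L → Fin L → ℕ, - (coefRD D nn • ∏ i, c (rapply nn lam' i)) :=
            finsum_congr fun nn => hpt nn
        _ = - ∑ᶠ nn : Fin L → Fin L → ℕ, coefRD D nn • ∏ i, c (rapply nn lam' i) :=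
            finsum_neg_distrib _
    rw [T, T, hsum, smul_neg]
  refine ⟨key1, fun r => ?_⟩
  have h := key1 r (r + 1)
  rw [show r + 1 - 1 = r from by ring] at h
  set X := T c D (Function.update (Function.update a p r) p' (r + 1)) with hX
  have h2 : (2 : ℚ) • X = 0 := by
    rw [two_smul]
    nth_rewrite 1 [h]
    exact neg_add_cancel X
  calc X = ((2 : ℚ)⁻¹ * 2) • X := by norm_num
    _ = (2 : ℚ)⁻¹ • ((2 : ℚ) • X) := by rw [mul_smul]
    _ = 0 := by rw [h2, smul_zero]
end

section
/- Let λ, μ be integer sequences and D a valid set of pairs. If (j, j+1) ∈ D and for each h > j+1, (j,h) ∈ D iff (j+1,h) ∈ D, then for integers r, s with r + s > 2k: T(D, (λ, r, s, μ)) = −T(D, (λ, s, r, μ)). In particular T(D, (λ, r, r, μ)) = 0 for any r > k. -/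
namespace Stmt9

noncomputable section

def rapply {L : ℕ} (nn : Fin L → Fin L → ℕ) (lam : Fin L → ℤ) : Fin L → ℤ :=
  fun p => lam p + (∑ j, (nn p j : ℤ)) - ∑ h, (nn h p : ℤ)

def pairCoef {L : ℕ} (D : Finset (Fin L × Fin L)) (i j : Fin L) (m : ℕ) : ℚ :=
  if i < j then
    (if (i, j) ∈ D then (if m = 0 then 1 else 2 * (-1 : ℚ) ^ m)
     else (if m = 0 then 1 else if m = 1 then -1 else 0))
  else (if m = 0 then 1 else 0)

def coefRD {L : ℕ} (D : Finset (Fin L × Fin L)) (nn : Fin L → Fin L → ℕ) : ℚ :=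
  ∏ i, ∏ j, pairCoef D i j (nn i j)

def T {R : Type*} [CommRing R] [Algebra ℚ R] {L : ℕ}
    (c : ℤ → R) (D : Finset (Fin L × Fin L)) (lam : Fin L → ℤ) : R :=
  ((2 : ℚ) ^ (D.filter fun p => p.1 = p.2).card)⁻¹ •
    ∑ᶠ nn : Fin L → Fin L → ℕ, coefRD D nn • ∏ i, c (rapply nn lam i)

def ValidPairs {L : ℕ} (D : Finset (Fin L × Fin L)) : Prop :=
  ∀ p ∈ D, p.1 ≤ p.2 ∧
    ∀ q : Fin L × Fin L, q.1 ≤ q.2 → q.1 ≤ p.1 → q.2 ≤ p.2 → q ∈ D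

end

end Stmt9

/-!
Write `Φ(z) = (1 - z) / (1 + z)`, so that `R^D` contains the factor `Φ(R_{p p'})`. Group the
monomials of `R^D` by the exponents `ρ` of the operators `R_{ij}` with `j ∉ {p, p'}` and by the
sums `w h` of the exponents of `R_{h p}` and `R_{h p'}` (`h < p`). Exchanging rows `p` and `p'`
of `ρ` matches the groups of `T(D, λ)` with those of `T(D, λ ∘ (p p'))`: the hypothesis on the
rows of `D` makes the coefficients agree. Inside a group, the exponent of `R_{p p'}` produces
`Φ(R₁₂) (c_u c_v)`, and
`Φ(R₁₂) (c_u c_v) + Φ(R₁₂) (c_v c_u) = ((-1)^u + (-1)^v) ∑_a (-1)^a c_a c_{u+v-a}`.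
The alternating sum vanishes for `u + v > 2k`: by the quadratic relation if `u + v` is even,
by antisymmetry if it is odd. This settles `w = 0`. For `w ≠ 0`, `u + v` is the same for every
way of splitting `w` between the two columns, and the sign-weighted sum over these splittings
vanishes because the coefficients of `Φ(z)` and of `Φ(-z) = Φ(z)⁻¹` are inverse under convolution.
-/

open Finset

namespace Stmt9

noncomputable section

section Coefficients

/-- The coefficient of `z ^ m` in `(1 - z) / (1 + z)`. -/
def quotCoeff (m : ℕ) : ℚ := if m = 0 then 1 else 2 * (-1) ^ m

@[simp] lemma quotCoeff_zero : quotCoeff 0 = 1 := rfl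

open PowerSeries in
lemma one_add_X_mul_mk_quotCoeff : (1 + X) * PowerSeries.mk quotCoeff = (1 - X : ℚ⟦X⟧) := by
  ext n
  rcases n with _ | _ | n
  · simp [quotCoeff]
  · norm_num [add_mul, quotCoeff, coeff_one]
  · simp [add_mul, coeff_one, coeff_X, quotCoeff, pow_succ]

open PowerSeries in
lemma sum_Iic_neg_one_pow_mul_quotCoeff {n : ℕ} (hn : n ≠ 0) :
    ∑ t ∈ Iic n, (-1 : ℚ) ^ t * quotCoeff t * quotCoeff (n - t) = 0 := by
  set φ : ℚ⟦X⟧ := PowerSeries.mk quotCoeff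
  have hφ : (1 + X) * φ = 1 - X := one_add_X_mul_mk_quotCoeff
  have hψ : (1 - X) * rescale (-1) φ = 1 + X := by
    simpa [sub_eq_add_neg] using congrArg (rescale (-1 : ℚ)) hφ
  have hne : ((1 - X) * (1 + X) : ℚ⟦X⟧) ≠ 0 := fun h => by
    simpa using congrArg constantCoeff h
  have hinv : rescale (-1) φ * φ = 1 := by
    refine mul_left_cancel₀ hne ?_
    calc (1 - X) * (1 + X) * (rescale (-1) φ * φ)
        = ((1 - X) * rescale (-1) φ) * ((1 + X) * φ) := by ring
      _ = (1 - X) * (1 + X) * 1 := by rw [hφ, hψ]; ring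
  have hcoeff := congrArg (coeff n) hinv
  rw [coeff_mul, coeff_one, if_neg hn,
    Nat.sum_antidiagonal_eq_sum_range_succ fun i j => coeff i (rescale (-1) φ) * coeff j φ]
    at hcoeff
  rw [← Nat.range_succ_eq_Iic, ← hcoeff]
  simp [φ, coeff_rescale]

lemma sum_Iic_neg_one_pow_mul_prod_quotCoeff {ι : Type*} [Fintype ι] [DecidableEq ι] {w : ι → ℕ}
    (hw : w ≠ 0) :
    ∑ x ∈ Iic w, (-1 : ℚ) ^ (∑ h, (x h : ℤ)) * ∏ h, quotCoeff (x h) * quotCoeff (w h - x h)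
      = 0 := by
  obtain ⟨h₀, hh₀⟩ := Function.ne_iff.1 hw
  have hsign : ∀ x : ι → ℕ, (-1 : ℚ) ^ (∑ h, (x h : ℤ)) = ∏ h, (-1 : ℚ) ^ x h := fun x => by
    rw [← Nat.cast_sum, zpow_natCast, Finset.prod_pow_eq_pow_sum]
  simp_rw [hsign, ← Finset.prod_mul_distrib, ← mul_assoc]
  rw [show Iic w = Fintype.piFinset fun h => Iic (w h) from rfl, ← Finset.prod_univ_sum
    (fun h => Iic (w h)) (fun h t => (-1 : ℚ) ^ t * quotCoeff t * quotCoeff (w h - t))]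
  exact Finset.prod_eq_zero (mem_univ h₀) (sum_Iic_neg_one_pow_mul_quotCoeff hh₀)

def quotCoeffInt (a : ℤ) : ℚ := if 0 ≤ a then quotCoeff a.toNat else 0

lemma quotCoeffInt_natCast (m : ℕ) : quotCoeffInt m = quotCoeff m := by
  simp [quotCoeffInt]

lemma quotCoeffInt_of_neg {a : ℤ} (ha : a < 0) : quotCoeffInt a = 0 := by
  simp [quotCoeffInt, not_le.2 ha]

lemma neg_one_zpow_neg (a : ℤ) : (-1 : ℚ) ^ (-a) = (-1) ^ a := by
  rcases Int.even_or_odd a with h | h <;> simp [h.neg_one_zpow, h.neg.neg_one_zpow]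

lemma neg_one_zpow_sub (a b : ℤ) : (-1 : ℚ) ^ (a - b) = (-1) ^ a * (-1) ^ b := by
  rw [sub_eq_add_neg, zpow_add₀ (by norm_num), neg_one_zpow_neg]

lemma quotCoeffInt_add_quotCoeffInt_neg (a : ℤ) :
    quotCoeffInt a + quotCoeffInt (-a) = 2 * (-1 : ℚ) ^ a := by
  obtain ⟨n, rfl | rfl⟩ := Int.eq_nat_or_neg a
  · rcases n with _ | n
    · norm_num [quotCoeffInt]
    · rw [quotCoeffInt_natCast, quotCoeffInt_of_neg (by omega), add_zero, quotCoeff,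
        if_neg n.succ_ne_zero, zpow_natCast]
  · rcases n with _ | n
    · norm_num [quotCoeffInt]
    · rw [neg_neg, quotCoeffInt_natCast, quotCoeffInt_of_neg (by omega), neg_one_zpow_neg,
        zero_add, quotCoeff, if_neg n.succ_ne_zero, zpow_natCast]

end Coefficients

lemma sum_Icc_zero_sub {M : Type*} [AddCommMonoid M] (n : ℤ) (f : ℤ → M) :
    ∑ a ∈ Icc 0 n, f (n - a) = ∑ a ∈ Icc 0 n, f a :=
  Finset.sum_nbij' (n - ·) (n - ·) (fun a ha => by rw [mem_Icc] at ha ⊢; omega)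
    (fun a ha => by rw [mem_Icc] at ha ⊢; omega)
    (fun a _ => sub_sub_cancel n a) (fun a _ => sub_sub_cancel n a) (fun _ _ => rfl)

lemma sum_Iic_tsub {ι M : Type*} [Fintype ι] [DecidableEq ι] [AddCommMonoid M] (w : ι → ℕ)
    (f : (ι → ℕ) → M) : ∑ x ∈ Iic w, f (w - x) = ∑ x ∈ Iic w, f x :=
  sum_nbij' (w - ·) (w - ·) (fun _ _ => mem_Iic.2 tsub_le_self)
    (fun _ _ => mem_Iic.2 tsub_le_self) (fun _ hx => tsub_tsub_cancel_of_le (mem_Iic.1 hx))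
    (fun _ hx => tsub_tsub_cancel_of_le (mem_Iic.1 hx)) fun _ _ => rfl

@[to_additive]
lemma prod_update_of_apply_eq_one {ι M : Type*} [Fintype ι] [DecidableEq ι] [CommMonoid M]
    {f : ι → M} {a : ι} (ha : f a = 1) (b : M) : ∏ i, Function.update f a b i = b * ∏ i, f i := by
  rw [Finset.prod_update_of_mem (mem_univ a), ← Finset.prod_sdiff (subset_univ {a}),
    prod_singleton, ha, mul_one]

section QuadraticRelations

variable {R : Type*} [CommRing R] [Algebra ℚ R] (c : ℤ → R)

/-- `(1 - R₁₂) / (1 + R₁₂) (c_A c_B)`, indexed by the first subscript. -/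
def pairSum (A B : ℤ) : R := ∑ a ∈ Icc 0 (A + B), quotCoeffInt (a - A) • (c a * c (A + B - a))

def altSum (n : ℤ) : R := ∑ a ∈ Icc 0 n, (-1 : ℚ) ^ a • (c a * c (n - a))

lemma sum_range_quotCoeff_smul (hcneg : ∀ t : ℤ, t < 0 → c t = 0) (A B : ℤ) {M : ℕ}
    (hM : B < M) :
    ∑ m ∈ range M, quotCoeff m • (c (A + m) * c (B - m)) = pairSum c A B := by
  set g : ℤ → R := fun a => quotCoeffInt (a - A) • (c a * c (A + B - a))
  have hg : ∀ m : ℕ, quotCoeff m • (c (A + m) * c (B - m)) = g (A + m) := fun m => by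
    simp [g, quotCoeffInt_natCast, show A + B - (A + m) = B - m by ring]
  simp_rw [hg]
  refine Finset.sum_bij_ne_zero (fun m _ _ => A + m) ?_ ?_ ?_ fun _ _ _ => rfl
  · intro m _ hm
    have h₁ : ¬ A + m < 0 := fun h => hm (by simp only [g]; rw [hcneg _ h, zero_mul, smul_zero])
    have h₂ : ¬ A + B - (A + m) < 0 := fun h => hm (by
      simp only [g]; rw [hcneg _ h, mul_zero, smul_zero])
    simp only [mem_Icc]
    omega
  · intro _ _ _ _ _ _ h
    simpa using h
  · intro a ha hne
    have h₀ : ¬ a - A < 0 := fun h => hne (by simp [quotCoeffInt_of_neg h])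
    have hA : A + ((a - A).toNat : ℤ) = a := by omega
    rw [mem_Icc] at ha
    exact ⟨(a - A).toNat, mem_range.2 (by omega), by rwa [hA], hA⟩

lemma pairSum_add_pairSum (u v : ℤ) :
    pairSum c u v + pairSum c v u = ((-1 : ℚ) ^ u + (-1) ^ v) • altSum c (u + v) := by
  set n := u + v
  set S := ∑ a ∈ Icc 0 n, (quotCoeffInt (a - u) + quotCoeffInt (a - v)) • (c a * c (n - a))
  have hS : pairSum c u v + pairSum c v u = S := by
    rw [pairSum, pairSum, add_comm v u, ← Finset.sum_add_distrib]
    simp only [S, n, add_smul]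
  have hSrefl : S = ∑ a ∈ Icc 0 n,
      (quotCoeffInt (u - a) + quotCoeffInt (v - a)) • (c a * c (n - a)) := by
    rw [← sum_Icc_zero_sub n]
    refine Finset.sum_congr rfl fun a _ => ?_
    rw [show u - (n - a) = a - v by ring, show v - (n - a) = a - u by ring, sub_sub_cancel,
      mul_comm (c (n - a)), add_comm (quotCoeffInt _)]
  refine (smul_right_inj (two_ne_zero : (2 : ℚ) ≠ 0)).1 ?_
  rw [hS, two_smul]
  nth_rewrite 2 [hSrefl]
  rw [altSum, ← Finset.sum_add_distrib, Finset.smul_sum, Finset.smul_sum]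
  refine Finset.sum_congr rfl fun a _ => ?_
  rw [← add_smul, smul_smul, smul_smul]
  congr 1
  have hu := quotCoeffInt_add_quotCoeffInt_neg (a - u)
  have hv := quotCoeffInt_add_quotCoeffInt_neg (a - v)
  rw [neg_sub, neg_one_zpow_sub] at hu hv
  linear_combination hu + hv

lemma altSum_eq_zero_of_odd {n : ℤ} (hn : Odd n) : altSum c n = 0 := by
  have : IsAddTorsionFree R := IsAddTorsionFree.of_isTorsionFree ℚ R
  refine self_eq_neg.1 ?_
  conv_lhs => rw [altSum, ← sum_Icc_zero_sub]
  rw [altSum, ← Finset.sum_neg_distrib]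
  refine Finset.sum_congr rfl fun a _ => ?_
  rw [sub_sub_cancel, mul_comm, neg_one_zpow_sub, hn.neg_one_zpow, neg_one_mul, neg_smul]

lemma altSum_two_mul {t : ℤ} (ht : 0 ≤ t) :
    altSum c (2 * t) = (-1 : ℚ) ^ t •
      (c t ^ 2 + 2 * ∑ i ∈ Icc 1 t, (-1 : R) ^ i.toNat * c (t + i) * c (t - i)) := by
  set h : ℤ → R := fun i => (-1 : ℚ) ^ i • (c (t + i) * c (t - i))
  have hcentre : altSum c (2 * t) = (-1 : ℚ) ^ t • ∑ i ∈ Icc (-t) t, h i := by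
    rw [altSum, Finset.smul_sum]
    refine Finset.sum_nbij' (· - t) (· + t) (fun a ha => by rw [mem_Icc] at ha ⊢; omega)
      (fun a ha => by rw [mem_Icc] at ha ⊢; omega)
      (fun a _ => sub_add_cancel a t) (fun a _ => add_sub_cancel_right a t) fun a _ => ?_
    simp only [h, smul_smul, ← zpow_add₀ (show (-1 : ℚ) ≠ 0 by norm_num)]
    rw [add_sub_cancel, show 2 * t - a = t - (a - t) by ring]
  have hsymm : ∑ i ∈ Icc (-t) t, h i = h 0 + 2 * ∑ i ∈ Icc 1 t, h i := by
    have hsplit : Icc (-t) t = (Icc 1 t).map (Equiv.neg ℤ).toEmbedding ∪ insert 0 (Icc 1 t) := by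
      ext i
      simp only [mem_union, mem_insert, mem_map_equiv, Equiv.neg_symm, Equiv.neg_apply, mem_Icc]
      omega
    have hdisj : Disjoint ((Icc 1 t).map (Equiv.neg ℤ).toEmbedding) (insert 0 (Icc 1 t)) := by
      rw [Finset.disjoint_left]
      intro i
      simp only [mem_map_equiv, Equiv.neg_symm, Equiv.neg_apply, mem_Icc, mem_insert]
      omega
    rw [hsplit, Finset.sum_union hdisj,
      Finset.sum_map, Finset.sum_insert (by simp), two_mul, ← add_assoc, add_comm _ (h 0),
      add_assoc]
    congr 2
    refine Finset.sum_congr rfl fun i _ => ?_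
    simp only [h, Equiv.coe_toEmbedding, Equiv.neg_apply, neg_one_zpow_neg, ← sub_eq_add_neg,
      sub_neg_eq_add, mul_comm]
  have hnat : ∀ i ∈ Icc 1 t, h i = (-1 : R) ^ i.toNat * c (t + i) * c (t - i) := by
    intro i hi
    rw [mem_Icc] at hi
    simp only [h, Algebra.smul_def, mul_assoc]
    rw [← Int.toNat_of_nonneg (by omega : 0 ≤ i), zpow_natCast, Int.toNat_natCast]
    simp
  rw [hcentre, hsymm, Finset.sum_congr rfl hnat]
  simp [h, sq]

lemma altSum_eq_zero (k : ℕ)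
    (hrel : ∀ r : ℤ, (k : ℤ) < r →
      c r ^ 2 + 2 * ∑ i ∈ Icc (1 : ℤ) r, (-1) ^ i.toNat * c (r + i) * c (r - i) = 0)
    {n : ℤ} (hn : 2 * (k : ℤ) < n) : altSum c n = 0 := by
  rcases Int.even_or_odd n with ⟨t, rfl⟩ | hodd
  · rw [← two_mul, altSum_two_mul c (by omega), hrel t (by omega), smul_zero]
  · exact altSum_eq_zero_of_odd c hodd

lemma sum_Iic_smul_pairSum_add_pairSum {ι : Type*} [Fintype ι] [DecidableEq ι] (k : ℕ)
    (hrel : ∀ r : ℤ, (k : ℤ) < r →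
      c r ^ 2 + 2 * ∑ i ∈ Icc (1 : ℤ) r, (-1) ^ i.toNat * c (r + i) * c (r - i) = 0)
    {A B : ℤ} (hAB : 2 * (k : ℤ) < A + B) (w : ι → ℕ) :
    ∑ x ∈ Iic w, (∏ h, quotCoeff (x h) * quotCoeff (w h - x h)) •
      (pairSum c (A - ∑ h, (x h : ℤ)) (B - ∑ h, ((w h - x h : ℕ) : ℤ))
        + pairSum c (B - ∑ h, ((w h - x h : ℕ) : ℤ)) (A - ∑ h, (x h : ℤ))) = 0 := by
  set S := ∑ h, (w h : ℤ)
  have hterm : ∀ x ∈ Iic w,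
      pairSum c (A - ∑ h, (x h : ℤ)) (B - ∑ h, ((w h - x h : ℕ) : ℤ))
        + pairSum c (B - ∑ h, ((w h - x h : ℕ) : ℤ)) (A - ∑ h, (x h : ℤ))
      = (((-1 : ℚ) ^ A + (-1) ^ (B - S)) * (-1) ^ (∑ h, (x h : ℤ))) • altSum c (A + B - S) := by
    intro x hx
    have hsub : ∑ h, ((w h - x h : ℕ) : ℤ) = S - ∑ h, (x h : ℤ) := by
      rw [← Finset.sum_sub_distrib]
      exact sum_congr rfl fun h _ => Nat.cast_sub (mem_Iic.1 hx h)
    rw [pairSum_add_pairSum, hsub, show A - ∑ h, (x h : ℤ) + (B - (S - ∑ h, (x h : ℤ)))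
      = A + B - S by ring]
    congr 1
    rw [neg_one_zpow_sub, show B - (S - ∑ h, (x h : ℤ)) = B - S + ∑ h, (x h : ℤ) by ring,
      zpow_add₀ (by norm_num)]
    ring
  rw [sum_congr rfl fun x hx => by rw [hterm x hx, smul_smul], ← Finset.sum_smul]
  by_cases hS : 2 * (k : ℤ) < A + B - S
  · rw [altSum_eq_zero c k hrel hS, smul_zero]
  · have hw : w ≠ 0 := fun hw => hS (by simpa [S, hw] using hAB)
    rw [← zero_smul ℚ (altSum c (A + B - S)), ← mul_zero ((-1 : ℚ) ^ A + (-1) ^ (B - S)),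
      ← sum_Iic_neg_one_pow_mul_prod_quotCoeff hw, Finset.mul_sum]
    congr 1
    exact sum_congr rfl fun x _ => by ring

end QuadraticRelations

section ExponentMatrices

variable {L : ℕ} {D : Finset (Fin L × Fin L)}

lemma pairCoef_zero (i j : Fin L) : pairCoef D i j 0 = 1 := by
  simp [pairCoef]

lemma pairCoef_of_lt_of_mem {i j : Fin L} (hij : i < j) (hmem : (i, j) ∈ D) (m : ℕ) :
    pairCoef D i j m = quotCoeff m := by
  simp [pairCoef, quotCoeff, hij, hmem]

lemma pairCoef_of_not_lt {i j : Fin L} (hij : ¬ i < j) {m : ℕ} (hm : m ≠ 0) :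
    pairCoef D i j m = 0 := by
  simp [pairCoef, hij, hm]

lemma rapply_add (ρ σ : Fin L → Fin L → ℕ) (lam : Fin L → ℤ) :
    rapply (ρ + σ) lam = rapply σ (rapply ρ lam) := by
  funext i
  simp only [rapply, Pi.add_apply, Nat.cast_add, Finset.sum_add_distrib]
  ring

lemma le_rapply_of_col_eq_zero {ρ : Fin L → Fin L → ℕ} {i : Fin L} (hρ : ∀ h, ρ h i = 0)
    (lam : Fin L → ℤ) : lam i ≤ rapply ρ lam i := by
  simp only [rapply, hρ, Nat.cast_zero, sum_const_zero, sub_zero, le_add_iff_nonneg_right]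
  positivity

lemma coefRD_add {ρ σ : Fin L → Fin L → ℕ} (h : ∀ i j, ρ i j = 0 ∨ σ i j = 0) :
    coefRD D (ρ + σ) = coefRD D ρ * coefRD D σ := by
  simp only [coefRD, ← Finset.prod_mul_distrib]
  refine prod_congr rfl fun i _ => prod_congr rfl fun j _ => ?_
  rcases h i j with h | h <;> simp [h, pairCoef_zero]

/-- The exponent matrix of `∏ h, R_{h q} ^ z h`. -/
def colMat (q : Fin L) (z : Fin L → ℕ) : Fin L → Fin L → ℕ := fun i j => if j = q then z i else 0

lemma rapply_colMat (q : Fin L) (z : Fin L → ℕ) (lam : Fin L → ℤ) (i : Fin L) :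
    rapply (colMat q z) lam i = lam i + z i - if i = q then ∑ h, (z h : ℤ) else 0 := by
  by_cases hi : i = q <;> simp [rapply, colMat, hi]

lemma coefRD_colMat {q : Fin L} {z : Fin L → ℕ} (hz : ∀ i, z i ≠ 0 → i < q ∧ (i, q) ∈ D) :
    coefRD D (colMat q z) = ∏ i, quotCoeff (z i) := by
  refine prod_congr rfl fun i _ => ?_
  rw [Fintype.prod_eq_single q fun j hj => by simp [colMat, hj, pairCoef_zero]]
  by_cases hzi : z i = 0
  · simp [colMat, hzi, pairCoef_zero]
  · simp [colMat, pairCoef_of_lt_of_mem (hz i hzi).1 (hz i hzi).2]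

variable {R : Type*} [CommRing R] [Algebra ℚ R]

/-- The contribution of the monomial `∏ R_{ij} ^ nn i j` to `R^D c_lam`. -/
def term (c : ℤ → R) (D : Finset (Fin L × Fin L)) (lam : Fin L → ℤ)
    (nn : Fin L → Fin L → ℕ) : R :=
  coefRD D nn • ∏ i, c (rapply nn lam i)

lemma T_eq_smul_finsum (c : ℤ → R) (D : Finset (Fin L × Fin L)) (lam : Fin L → ℤ) :
    T c D lam = ((2 : ℚ) ^ (D.filter fun p => p.1 = p.2).card)⁻¹ •
      ∑ᶠ nn, term c D lam nn := rfl

def weight (lam : Fin L → ℤ) : ℕ := ∑ i : Fin L, (i : ℕ) * (lam i).toNat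

lemma sum_mul_rapply (nn : Fin L → Fin L → ℕ) (lam : Fin L → ℤ) :
    ∑ i : Fin L, (i : ℤ) * rapply nn lam i
      = ∑ i : Fin L, (i : ℤ) * lam i - ∑ i : Fin L, ∑ j : Fin L, ((j : ℤ) - i) * nn i j := by
  simp only [rapply, mul_add, mul_sub, sub_mul, Finset.mul_sum, Finset.sum_add_distrib,
    Finset.sum_sub_distrib]
  rw [Finset.sum_comm (f := fun (i j : Fin L) => ((i : ℕ) : ℤ) * (nn j i : ℤ))]
  ring

lemma triangular_of_term_ne_zero {c : ℤ → R} {lam : Fin L → ℤ} {nn : Fin L → Fin L → ℕ}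
    (hne : term c D lam nn ≠ 0) {i j : Fin L} (hij : ¬ i < j) : nn i j = 0 := by
  by_contra hm
  exact hne (by rw [term, coefRD, Finset.prod_eq_zero (mem_univ i)
    (Finset.prod_eq_zero (mem_univ j) (pairCoef_of_not_lt hij hm)), zero_smul])

lemma le_weight_of_term_ne_zero {c : ℤ → R} (hcneg : ∀ t : ℤ, t < 0 → c t = 0)
    {lam : Fin L → ℤ} {nn : Fin L → Fin L → ℕ} (hne : term c D lam nn ≠ 0) (i j : Fin L) :
    nn i j ≤ weight lam := by
  have hrapply : ∀ i, 0 ≤ rapply nn lam i := fun i => not_lt.1 fun h => hne (by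
    rw [term, Finset.prod_eq_zero (mem_univ i) (hcneg _ h), smul_zero])
  have hgap : ∀ i j : Fin L, 0 ≤ ((j : ℤ) - i) * nn i j := fun i j => by
    by_cases hij : i < j
    · exact mul_nonneg (by have : (i : ℕ) < j := hij; omega) (Int.natCast_nonneg _)
    · simp [triangular_of_term_ne_zero hne hij]
  have hlam : ∑ i : Fin L, (i : ℤ) * lam i ≤ weight lam := by
    rw [weight]
    push_cast
    exact sum_le_sum fun i _ => mul_le_mul_of_nonneg_left (Int.self_le_toNat _) (by positivity)
  have hsum : ∑ i : Fin L, ∑ j : Fin L, ((j : ℤ) - i) * nn i j ≤ weight lam := by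
    have := sum_mul_rapply nn lam
    have : 0 ≤ ∑ i : Fin L, (i : ℤ) * rapply nn lam i :=
      sum_nonneg fun i _ => mul_nonneg (by positivity) (hrapply i)
    linarith
  have hentry : ((j : ℤ) - i) * nn i j ≤ ∑ i : Fin L, ∑ j : Fin L, ((j : ℤ) - i) * nn i j :=
    (single_le_sum (fun j _ => hgap i j) (mem_univ j)).trans
      (single_le_sum (fun i _ => sum_nonneg fun j _ => hgap i j) (mem_univ i))
  by_cases hij : i < j
  · have : (i : ℕ) < j := hij
    have : (nn i j : ℤ) ≤ ((j : ℤ) - i) * nn i j := by nlinarith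
    omega
  · simp [triangular_of_term_ne_zero hne hij]

end ExponentMatrices

section AdjacentColumns

variable {L : ℕ} {D : Finset (Fin L × Fin L)} {p p' : Fin L} {ρ : Fin L → Fin L → ℕ}
  {x y : Fin L → ℕ}

lemma lt_of_val_eq_succ (hpp' : (p' : ℕ) = p + 1) : p < p' := by
  rw [Fin.lt_def]; omega

lemma le_of_lt_of_val_eq_succ (hpp' : (p' : ℕ) = p + 1) {j : Fin L} (hj : p < j) : p' ≤ j := by
  rw [Fin.lt_def] at hj; rw [Fin.le_def]; omega

def glue (p p' : Fin L) (ρ : Fin L → Fin L → ℕ) (x y : Fin L → ℕ) (m : ℕ) :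
    Fin L → Fin L → ℕ :=
  ρ + colMat p x + colMat p' (Function.update y p m)

lemma glue_apply_left_right (hne : p ≠ p') (hρ : ρ p p' = 0) (m : ℕ) :
    glue p p' ρ x y m p p' = m := by
  simp [glue, colMat, hne.symm, hρ]

lemma coefRD_glue (hD : ValidPairs D) (hin : (p, p') ∈ D) (hlt : p < p')
    (hρ : ∀ i, ρ i p = 0 ∧ ρ i p' = 0) (hx : ∀ h, ¬ h < p → x h = 0)
    (hy : ∀ h, ¬ h < p → y h = 0) (m : ℕ) :
    coefRD D (glue p p' ρ x y m)
      = coefRD D ρ * (quotCoeff m * ∏ h, quotCoeff (x h) * quotCoeff (y h)) := by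
  have hmemD : ∀ i, i ≤ p → (i, p) ∈ D ∧ (i, p') ∈ D := fun i hi =>
    ⟨(hD _ hin).2 (i, p) hi hi hlt.le, (hD _ hin).2 (i, p') (hi.trans hlt.le) hi le_rfl⟩
  have hupd : ∏ i, quotCoeff (Function.update y p m i) = quotCoeff m * ∏ i, quotCoeff (y i) := by
    rw [← prod_update_of_apply_eq_one (f := fun i => quotCoeff (y i))
      (show quotCoeff (y p) = 1 by rw [hy p (lt_irrefl p), quotCoeff_zero])]
    exact prod_congr rfl fun i _ => Function.apply_update (fun _ => quotCoeff) y p m i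
  have hxD : ∀ i, x i ≠ 0 → i < p ∧ (i, p) ∈ D := fun i hi =>
    have hi' : i < p := by_contra fun h => hi (hx i h)
    ⟨hi', (hmemD i hi'.le).1⟩
  have hyD : ∀ i, Function.update y p m i ≠ 0 → i < p' ∧ (i, p') ∈ D := fun i hi => by
    by_cases hip : i = p
    · exact hip ▸ ⟨hlt, hin⟩
    · have hi' : i < p := by_contra fun h => hi (by simp [hip, hy i h])
      exact ⟨hi'.trans hlt, (hmemD i hi'.le).2⟩
  have hdisj : ∀ i j, ρ i j = 0 ∨ colMat p x i j = 0 := fun i j => by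
    by_cases hj : j = p <;> simp [colMat, hj, (hρ i).1]
  have hdisj' : ∀ i j, (ρ + colMat p x) i j = 0 ∨ colMat p' (Function.update y p m) i j = 0 :=
    fun i j => by by_cases hj : j = p' <;> simp [colMat, hj, (hρ i).2, hlt.ne']
  rw [glue, coefRD_add hdisj', coefRD_add hdisj, coefRD_colMat hxD, coefRD_colMat hyD, hupd,
    Finset.prod_mul_distrib]
  ring

lemma rapply_glue (hlt : p < p') (hx : ∀ h, ¬ h < p → x h = 0) (hy : ∀ h, ¬ h < p → y h = 0)
    (lam : Fin L → ℤ) (m : ℕ) (i : Fin L) :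
    rapply (glue p p' ρ x y m) lam i
      = rapply ρ lam i + x i + y i
        + (if i = p then m - ∑ h, (x h : ℤ) else 0)
        - (if i = p' then m + ∑ h, (y h : ℤ) else 0) := by
  have hsum : ∑ h, (Function.update y p m h : ℤ) = m + ∑ h, (y h : ℤ) := by
    rw [← Nat.cast_sum, sum_update_of_apply_eq_zero (hy p (lt_irrefl p))]
    push_cast; ring
  rw [glue, rapply_add, rapply_add, rapply_colMat, rapply_colMat, hsum]
  by_cases hip : i = p
  · subst hip
    simp only [↓reduceIte, Function.update_self, hlt.ne, hy i (lt_irrefl i), Nat.cast_zero,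
      add_zero, sub_zero]
    ring
  · by_cases hip' : i = p'
    · subst hip'; simp [hip, hx i (not_lt.2 hlt.le), hy i (not_lt.2 hlt.le)]
    · simp [hip, hip']

abbrev GlueData (L : ℕ) := (Fin L → Fin L → ℕ) × (Σ _ : Fin L → ℕ, Fin L → ℕ) × ℕ

/-- The data `(ρ, ⟨w, x⟩, m)` stands for `glue p p' ρ x y m` with `w = x + y`. -/
def glueData (p p' : Fin L) (q : GlueData L) : Fin L → Fin L → ℕ :=
  glue p p' q.1 q.2.1.2 (q.2.1.1 - q.2.1.2) q.2.2

def cutColumns (p p' : Fin L) (nn : Fin L → Fin L → ℕ) : GlueData L :=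
  (fun i j => if j = p ∨ j = p' then 0 else nn i j,
    ⟨fun h => nn h p + Function.update (nn · p') p 0 h, fun h => nn h p⟩, nn p p')

def offColumnsBox (p p' : Fin L) (N : ℕ) : Finset (Fin L → Fin L → ℕ) :=
  Iic fun i j => if i < j ∧ j ≠ p ∧ j ≠ p' then N else 0

def aboveBox (p : Fin L) (N : ℕ) : Finset (Fin L → ℕ) :=
  Iic fun h => if h < p then N else 0

def glueBox (p p' : Fin L) (N : ℕ) : Finset (GlueData L) :=
  offColumnsBox p p' N ×ˢ ((aboveBox p N).sigma Iic ×ˢ range (N + 1))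

lemma mem_offColumnsBox {N : ℕ} :
    ρ ∈ offColumnsBox p p' N ↔ ∀ i j, ρ i j ≤ if i < j ∧ j ≠ p ∧ j ≠ p' then N else 0 := by
  simp [offColumnsBox, Pi.le_def]

lemma mem_aboveBox {N : ℕ} {w : Fin L → ℕ} :
    w ∈ aboveBox p N ↔ ∀ h, w h ≤ if h < p then N else 0 := by
  simp [aboveBox, Pi.le_def]

lemma col_eq_zero_of_mem_offColumnsBox {N : ℕ} (hρ : ρ ∈ offColumnsBox p p' N) (i : Fin L) :
    ρ i p = 0 ∧ ρ i p' = 0 :=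
  ⟨by simpa using (mem_offColumnsBox.1 hρ) i p, by simpa using (mem_offColumnsBox.1 hρ) i p'⟩

lemma glueData_cutColumns (hne : p ≠ p') (nn : Fin L → Fin L → ℕ) :
    glueData p p' (cutColumns p p' nn) = nn := by
  funext i j
  simp only [glueData, glue, cutColumns, colMat, Pi.add_apply]
  by_cases hj : j = p
  · subst hj; simp [hne]
  by_cases hj' : j = p'
  · subst hj'; by_cases hi : i = p <;> simp [hi, hj]
  · simp [hj, hj']

lemma cutColumns_glueData {N : ℕ} {q : GlueData L} (hne : p ≠ p') (hq : q ∈ glueBox p p' N) :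
    cutColumns p p' (glueData p p' q) = q := by
  obtain ⟨ρ, ⟨w, x⟩, m⟩ := q
  simp only [glueBox, mem_product, mem_sigma, mem_offColumnsBox, mem_aboveBox, mem_Iic,
    Pi.le_def] at hq
  obtain ⟨hρ, ⟨hw, hxw⟩, -⟩ := hq
  have hρp : ∀ i, ρ i p = 0 := fun i => by simpa using hρ i p
  have hρp' : ∀ i, ρ i p' = 0 := fun i => by simpa using hρ i p'
  have hwp : w p = 0 := by simpa using hw p
  simp only [cutColumns, glueData, glue, colMat, Pi.add_apply, Prod.mk.injEq]
  refine ⟨?_, ?_, ?_⟩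
  · funext i j
    by_cases hj : j = p
    · subst hj; simp [hρp]
    by_cases hj' : j = p'
    · subst hj'; simp [hρp']
    · simp [hj, hj']
  · have hxp : x p = 0 := by simpa [hwp] using hxw p
    refine Sigma.ext (funext fun h => ?_) (heq_of_eq (funext fun h => by simp [hρp, hne]))
    by_cases hh : h = p
    · simp [hh, hne, hρp, hxp, hwp]
    · simp [hh, hne, hne.symm, hρp, hρp', Nat.add_sub_cancel' (hxw h)]
  · simp [hne.symm, hρp']

lemma cutColumns_mem (hpp' : (p' : ℕ) = p + 1) {N : ℕ} {nn : Fin L → Fin L → ℕ}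
    (htri : ∀ i j, ¬ i < j → nn i j = 0) (hN : ∀ i j, 2 * nn i j ≤ N) :
    cutColumns p p' nn ∈ glueBox p p' N := by
  simp only [glueBox, cutColumns, mem_product, mem_sigma, mem_offColumnsBox, mem_aboveBox,
    mem_Iic, Pi.le_def, mem_range]
  refine ⟨fun i j => ?_, ⟨fun h => ?_, fun h => Nat.le_add_right _ _⟩, by linarith [hN p p']⟩
  · by_cases hj : j = p ∨ j = p'
    · simp [hj]
    by_cases hij : i < j
    · simpa [hj, hij, not_or.1 hj] using (Nat.le_mul_of_pos_left _ two_pos).trans (hN i j)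
    · simp [hj, hij, htri i j hij]
  · by_cases hh : h < p
    · have := hN h p; have := hN h p'
      simp only [hh, if_true, Function.update_apply]
      split_ifs <;> omega
    · have hcol' : Function.update (nn · p') p 0 h = 0 := by
        by_cases hhp : h = p
        · simp [hhp]
        · have hph : p < h := lt_of_le_of_ne (not_lt.1 hh) (Ne.symm hhp)
          simp [hhp, htri h p' (not_lt.2 (le_of_lt_of_val_eq_succ hpp' hph))]
      simp [hh, htri h p hh, hcol']

lemma comp_swap_mem_offColumnsBox (hpp' : (p' : ℕ) = p + 1) {N : ℕ}
    (hρ : ρ ∈ offColumnsBox p p' N) :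
    ρ ∘ Equiv.swap p p' ∈ offColumnsBox p p' N := by
  have hlt := lt_of_val_eq_succ hpp'
  rw [mem_offColumnsBox] at hρ ⊢
  intro i j
  refine (hρ _ j).trans ?_
  have hkey : Equiv.swap p p' i < j ∧ j ≠ p ∧ j ≠ p' → i < j := fun ⟨hij, hjp, hjp'⟩ => by
    rcases eq_or_ne i p with rfl | hip
    · rw [Equiv.swap_apply_left] at hij; exact hlt.trans hij
    rcases eq_or_ne i p' with rfl | hip'
    · rw [Equiv.swap_apply_right] at hij
      exact lt_of_le_of_ne (le_of_lt_of_val_eq_succ hpp' hij) hjp'.symm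
    · rwa [Equiv.swap_apply_of_ne_of_ne hip hip'] at hij
  split_ifs with h₁ h₂
  · exact le_rfl
  · exact absurd ⟨hkey h₁, h₁.2⟩ h₂
  · exact Nat.zero_le _
  · exact le_rfl

lemma sum_offColumnsBox_comp_swap {M : Type*} [AddCommMonoid M] (hpp' : (p' : ℕ) = p + 1)
    (N : ℕ) (F : (Fin L → Fin L → ℕ) → M) :
    ∑ ρ ∈ offColumnsBox p p' N, F (ρ ∘ Equiv.swap p p') = ∑ ρ ∈ offColumnsBox p p' N, F ρ :=
  sum_nbij' (· ∘ Equiv.swap p p') (· ∘ Equiv.swap p p')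
    (fun _ hρ => comp_swap_mem_offColumnsBox hpp' hρ)
    (fun _ hρ => comp_swap_mem_offColumnsBox hpp' hρ)
    (fun ρ _ => by funext i; simp) (fun ρ _ => by funext i; simp) fun _ _ => rfl

lemma coefRD_comp_swap (hpp' : (p' : ℕ) = p + 1)
    (hrows : ∀ h : Fin L, p' < h → ((p, h) ∈ D ↔ (p', h) ∈ D)) {N : ℕ}
    (hρ : ρ ∈ offColumnsBox p p' N) :
    coefRD D (ρ ∘ Equiv.swap p p') = coefRD D ρ := by
  have hlt := lt_of_val_eq_succ hpp'
  have hrow : ∀ {j} (m : ℕ), p' < j → pairCoef D p j m = pairCoef D p' j m := fun m hj => by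
    simp [pairCoef, hj, hlt.trans hj, hrows _ hj]
  have hentry : ∀ i j, pairCoef D (Equiv.swap p p' i) j (ρ i j) = pairCoef D i j (ρ i j) := by
    intro i j
    by_cases hz : ρ i j = 0
    · simp [hz, pairCoef_zero]
    obtain ⟨hij, -, hjp'⟩ : i < j ∧ j ≠ p ∧ j ≠ p' := by
      by_contra hcond
      have hb := (mem_offColumnsBox.1 hρ) i j
      rw [if_neg hcond, Nat.le_zero] at hb
      exact hz hb
    rcases eq_or_ne i p with rfl | hip
    · rw [Equiv.swap_apply_left]
      exact (hrow _ (lt_of_le_of_ne (le_of_lt_of_val_eq_succ hpp' hij) hjp'.symm)).symm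
    rcases eq_or_ne i p' with rfl | hip'
    · rw [Equiv.swap_apply_right]
      exact hrow _ hij
    · rw [Equiv.swap_apply_of_ne_of_ne hip hip']
  calc coefRD D (ρ ∘ Equiv.swap p p')
      = ∏ i, ∏ j, pairCoef D (Equiv.swap p p' (Equiv.swap p p' i)) j (ρ (Equiv.swap p p' i) j) := by
        simp [coefRD]
    _ = ∏ i, ∏ j, pairCoef D (Equiv.swap p p' i) j (ρ i j) :=
        Equiv.prod_comp (Equiv.swap p p') fun i => ∏ j, pairCoef D (Equiv.swap p p' i) j (ρ i j)
    _ = coefRD D ρ := prod_congr rfl fun i _ => prod_congr rfl fun j _ => hentry i j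

lemma rapply_comp_swap (hρ : ∀ i, ρ i p = 0 ∧ ρ i p' = 0)
    (lam : Fin L → ℤ) :
    rapply (ρ ∘ Equiv.swap p p') (lam ∘ Equiv.swap p p') = rapply ρ lam ∘ Equiv.swap p p' := by
  funext i
  have hcol : ∑ h, (ρ h i : ℤ) = ∑ h, (ρ h (Equiv.swap p p' i) : ℤ) := by
    rcases eq_or_ne i p with rfl | hip
    · simp [hρ]
    rcases eq_or_ne i p' with rfl | hip'
    · simp [hρ]
    · rw [Equiv.swap_apply_of_ne_of_ne hip hip']
  simp only [rapply, Function.comp_apply]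
  rw [Equiv.sum_comp (Equiv.swap p p') fun h => (ρ h i : ℤ), hcol]

def prodOffPair {R : Type*} [CommRing R] (c : ℤ → R) (p p' : Fin L) (μ : Fin L → ℤ)
    (w : Fin L → ℕ) : R :=
  ∏ i ∈ ({p, p'} : Finset (Fin L))ᶜ, c (μ i + w i)

lemma prodOffPair_comp_swap {R : Type*} [CommRing R] (c : ℤ → R) (μ : Fin L → ℤ)
    (w : Fin L → ℕ) : prodOffPair c p p' (μ ∘ Equiv.swap p p') w = prodOffPair c p p' μ w := by
  refine prod_congr rfl fun i hi => ?_
  simp only [mem_compl, mem_insert, mem_singleton, not_or] at hi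
  rw [Function.comp_apply, Equiv.swap_apply_of_ne_of_ne hi.1 hi.2]

variable {R : Type*} [CommRing R] [Algebra ℚ R] {c : ℤ → R}

lemma finsum_term_eq_sum_glueBox (hcneg : ∀ t : ℤ, t < 0 → c t = 0) (hpp' : (p' : ℕ) = p + 1)
    (lam : Fin L → ℤ) {N : ℕ} (hN : 2 * weight lam ≤ N) :
    ∑ᶠ nn, term c D lam nn = ∑ q ∈ glueBox p p' N, term c D lam (glueData p p' q) := by
  have hne := (lt_of_val_eq_succ hpp').ne
  rw [← Finset.sum_image fun q hq q' hq' h => by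
    rw [← cutColumns_glueData hne hq, h, cutColumns_glueData hne hq']]
  refine finsum_eq_finsetSum_of_support_subset _ fun nn hnn => ?_
  refine Finset.mem_coe.2 (Finset.mem_image.2 ⟨cutColumns p p' nn, ?_, glueData_cutColumns hne nn⟩)
  exact cutColumns_mem hpp' (fun i j => triangular_of_term_ne_zero hnn)
    fun i j => (Nat.mul_le_mul_left 2 (le_weight_of_term_ne_zero hcneg hnn i j)).trans hN

lemma term_glue (hD : ValidPairs D) (hin : (p, p') ∈ D) (hlt : p < p')
    (hρ : ∀ i, ρ i p = 0 ∧ ρ i p' = 0) (hx : ∀ h, ¬ h < p → x h = 0)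
    (hy : ∀ h, ¬ h < p → y h = 0) (lam : Fin L → ℤ) (m : ℕ) :
    term c D lam (glue p p' ρ x y m)
      = (coefRD D ρ * ∏ h, quotCoeff (x h) * quotCoeff (y h)) •
        (quotCoeff m • (c (rapply ρ lam p - ∑ h, (x h : ℤ) + m)
            * c (rapply ρ lam p' - ∑ h, (y h : ℤ) - m))
          * prodOffPair c p p' (rapply ρ lam) (x + y)) := by
  have hp : rapply (glue p p' ρ x y m) lam p = rapply ρ lam p - ∑ h, (x h : ℤ) + m := by
    rw [rapply_glue hlt hx hy, if_pos rfl, if_neg hlt.ne, hx p (lt_irrefl p), hy p (lt_irrefl p)]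
    push_cast
    ring
  have hp' : rapply (glue p p' ρ x y m) lam p' = rapply ρ lam p' - ∑ h, (y h : ℤ) - m := by
    rw [rapply_glue hlt hx hy, if_neg hlt.ne', if_pos rfl, hx p' (not_lt.2 hlt.le),
      hy p' (not_lt.2 hlt.le)]
    push_cast
    ring
  have hrest : ∀ i ∈ ({p, p'} : Finset (Fin L))ᶜ,
      c (rapply (glue p p' ρ x y m) lam i) = c (rapply ρ lam i + (x + y) i) := fun i hi => by
    simp only [mem_compl, mem_insert, mem_singleton, not_or] at hi
    rw [rapply_glue hlt hx hy, if_neg hi.1, if_neg hi.2, Pi.add_apply]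
    push_cast
    congr 1
    ring
  rw [term, coefRD_glue hD hin hlt hρ hx hy,
    ← Finset.prod_mul_prod_compl {p, p'} fun i => c (rapply (glue p p' ρ x y m) lam i),
    prod_pair hlt.ne, prodOffPair, Finset.prod_congr rfl hrest, hp, hp']
  simp only [Algebra.smul_def, map_mul]
  ring

lemma sum_range_term_glue (hD : ValidPairs D) (hin : (p, p') ∈ D) (hlt : p < p')
    (hρ : ∀ i, ρ i p = 0 ∧ ρ i p' = 0) (hx : ∀ h, ¬ h < p → x h = 0)
    (hy : ∀ h, ¬ h < p → y h = 0) (hcneg : ∀ t : ℤ, t < 0 → c t = 0)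
    {lam : Fin L → ℤ} {N : ℕ} (hN : weight lam ≤ N) :
    ∑ m ∈ range (N + 1), term c D lam (glue p p' ρ x y m)
      = (coefRD D ρ * ∏ h, quotCoeff (x h) * quotCoeff (y h)) •
        (pairSum c (rapply ρ lam p - ∑ h, (x h : ℤ)) (rapply ρ lam p' - ∑ h, (y h : ℤ))
          * prodOffPair c p p' (rapply ρ lam) (x + y)) := by
  set M := max (N + 1) ((rapply ρ lam p' - ∑ h, (y h : ℤ)).toNat + 1)
  have hvanish : ∀ m ∈ range M, m ∉ range (N + 1) → term c D lam (glue p p' ρ x y m) = 0 := by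
    intro m _ hm
    by_contra hne
    have := le_weight_of_term_ne_zero hcneg hne p p'
    rw [glue_apply_left_right hlt.ne (hρ p).2] at this
    rw [mem_range] at hm
    omega
  rw [Finset.sum_subset (range_subset_range.2 (le_max_left _ _)) hvanish]
  simp_rw [term_glue hD hin hlt hρ hx hy, ← Finset.smul_sum, ← Finset.sum_mul]
  rw [sum_range_quotCoeff_smul c hcneg _ _ (by omega)]

lemma sum_Iic_sum_range_term_glue (hcneg : ∀ t : ℤ, t < 0 → c t = 0) (hD : ValidPairs D)
    (hin : (p, p') ∈ D) (hpp' : (p' : ℕ) = p + 1) {lam : Fin L → ℤ} {N : ℕ}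
    (hN : weight lam ≤ N) (hρ : ρ ∈ offColumnsBox p p' N)
    {w : Fin L → ℕ} (hw : w ∈ aboveBox p N) :
    ∑ x ∈ Iic w, ∑ m ∈ range (N + 1), term c D lam (glue p p' ρ x (w - x) m)
      = coefRD D ρ • ∑ x ∈ Iic w, (∏ h, quotCoeff (x h) * quotCoeff (w h - x h)) •
          (pairSum c (rapply ρ lam p - ∑ h, (x h : ℤ))
              (rapply ρ lam p' - ∑ h, ((w h - x h : ℕ) : ℤ))
            * prodOffPair c p p' (rapply ρ lam) w) := by
  rw [Finset.smul_sum]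
  refine sum_congr rfl fun x hx => ?_
  have hwp : ∀ h, ¬ h < p → w h = 0 := fun h hh => by simpa [hh] using (mem_aboveBox.1 hw) h
  have hxw := mem_Iic.1 hx
  rw [sum_range_term_glue hD hin (lt_of_val_eq_succ hpp') (col_eq_zero_of_mem_offColumnsBox hρ)
    (fun h hh => Nat.eq_zero_of_le_zero (hwp h hh ▸ hxw h))
    (fun h hh => by simp [hwp h hh]) hcneg hN, add_tsub_cancel_of_le hxw, smul_smul]
  rfl

lemma sum_glue_add_sum_glue_comp_swap (k : ℕ) (hcneg : ∀ t : ℤ, t < 0 → c t = 0)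
    (hrel : ∀ r : ℤ, (k : ℤ) < r →
      c r ^ 2 + 2 * ∑ i ∈ Icc (1 : ℤ) r, (-1) ^ i.toNat * c (r + i) * c (r - i) = 0)
    (hD : ValidPairs D) (hin : (p, p') ∈ D) (hpp' : (p' : ℕ) = p + 1)
    (hrows : ∀ h : Fin L, p' < h → ((p, h) ∈ D ↔ (p', h) ∈ D))
    {lam : Fin L → ℤ} (hlam : 2 * (k : ℤ) < lam p + lam p') {N : ℕ} (hN : weight lam ≤ N)
    (hN' : weight (lam ∘ Equiv.swap p p') ≤ N)
    (hρ : ρ ∈ offColumnsBox p p' N) {w : Fin L → ℕ} (hw : w ∈ aboveBox p N) :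
    ∑ x ∈ Iic w, ∑ m ∈ range (N + 1), term c D lam (glue p p' ρ x (w - x) m)
      + ∑ x ∈ Iic w, ∑ m ∈ range (N + 1),
          term c D (lam ∘ Equiv.swap p p') (glue p p' (ρ ∘ Equiv.swap p p') x (w - x) m)
      = 0 := by
  have hcols := col_eq_zero_of_mem_offColumnsBox hρ
  set A := rapply ρ lam p
  set B := rapply ρ lam p'
  have hAB : 2 * (k : ℤ) < A + B := by
    have := le_rapply_of_col_eq_zero (fun h => (hcols h).1) lam
    have := le_rapply_of_col_eq_zero (fun h => (hcols h).2) lam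
    omega
  rw [sum_Iic_sum_range_term_glue hcneg hD hin hpp' hN hρ hw,
    sum_Iic_sum_range_term_glue hcneg hD hin hpp' hN' (comp_swap_mem_offColumnsBox hpp' hρ) hw,
    coefRD_comp_swap hpp' hrows hρ, rapply_comp_swap hcols, prodOffPair_comp_swap]
  simp only [Function.comp_apply, Equiv.swap_apply_left, Equiv.swap_apply_right]
  -- Writing the first sum over `w - x` pairs each of its terms with the matching term of the
  -- second one.
  rw [← sum_Iic_tsub w, ← smul_add, ← sum_add_distrib]
  have hcancel := sum_Iic_smul_pairSum_add_pairSum c k hrel (add_comm A B ▸ hAB) w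
  refine (congrArg _ ?_).trans (smul_zero _)
  rw [← zero_mul (prodOffPair c p p' (rapply ρ lam) w), ← hcancel, sum_mul]
  refine sum_congr rfl fun x hx => ?_
  have hsub : ∀ h, w h - (w h - x h) = x h := fun h => Nat.sub_sub_self (mem_Iic.1 hx h)
  simp only [Pi.sub_apply, hsub, smul_mul_assoc, ← smul_add, add_mul,
    mul_comm (quotCoeff (w _ - _))]
  rw [add_comm]

lemma finsum_term_add_finsum_term_comp_swap (k : ℕ) (hcneg : ∀ t : ℤ, t < 0 → c t = 0)
    (hrel : ∀ r : ℤ, (k : ℤ) < r →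
      c r ^ 2 + 2 * ∑ i ∈ Icc (1 : ℤ) r, (-1) ^ i.toNat * c (r + i) * c (r - i) = 0)
    (hD : ValidPairs D) (hin : (p, p') ∈ D) (hpp' : (p' : ℕ) = p + 1)
    (hrows : ∀ h : Fin L, p' < h → ((p, h) ∈ D ↔ (p', h) ∈ D))
    {lam : Fin L → ℤ} (hlam : 2 * (k : ℤ) < lam p + lam p') :
    ∑ᶠ nn, term c D lam nn + ∑ᶠ nn, term c D (lam ∘ Equiv.swap p p') nn = 0 := by
  set N := 2 * max (weight lam) (weight (lam ∘ Equiv.swap p p'))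
  have hN : weight lam ≤ N := by omega
  have hN' : weight (lam ∘ Equiv.swap p p') ≤ N := by omega
  rw [finsum_term_eq_sum_glueBox hcneg hpp' lam (N := N) (by omega),
    finsum_term_eq_sum_glueBox hcneg hpp' _ (N := N) (by omega), glueBox, sum_product,
    sum_product, ← sum_offColumnsBox_comp_swap hpp' N fun ρ => ∑ y ∈ _,
      term c D (lam ∘ Equiv.swap p p') (glueData p p' (ρ, y)), ← sum_add_distrib]
  refine sum_eq_zero fun ρ hρ => ?_
  rw [sum_product, sum_product, sum_sigma, sum_sigma, ← sum_add_distrib]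
  exact sum_eq_zero fun w hw =>
    sum_glue_add_sum_glue_comp_swap k hcneg hrel hD hin hpp' hrows hlam hN hN' hρ hw

lemma T_comp_swap (k : ℕ) (hcneg : ∀ t : ℤ, t < 0 → c t = 0)
    (hrel : ∀ r : ℤ, (k : ℤ) < r →
      c r ^ 2 + 2 * ∑ i ∈ Icc (1 : ℤ) r, (-1) ^ i.toNat * c (r + i) * c (r - i) = 0)
    (hD : ValidPairs D) (hin : (p, p') ∈ D) (hpp' : (p' : ℕ) = p + 1)
    (hrows : ∀ h : Fin L, p' < h → ((p, h) ∈ D ↔ (p', h) ∈ D))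
    {lam : Fin L → ℤ} (hlam : 2 * (k : ℤ) < lam p + lam p') :
    T c D (lam ∘ Equiv.swap p p') = -T c D lam := by
  rw [T_eq_smul_finsum, T_eq_smul_finsum, ← smul_neg,
    eq_neg_of_add_eq_zero_right
      (finsum_term_add_finsum_term_comp_swap k hcneg hrel hD hin hpp' hrows hlam)]

end AdjacentColumns

lemma update_update_comp_swap {L : ℕ} {α : Type*} {p p' : Fin L} (hne : p ≠ p')
    (a : Fin L → α) (r s : α) :
    Function.update (Function.update a p r) p' s ∘ Equiv.swap p p'
      = Function.update (Function.update a p s) p' r := by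
  funext i
  rcases eq_or_ne i p with rfl | hip
  · simp [hne]
  rcases eq_or_ne i p' with rfl | hip'
  · simp [hne]
  · simp [Equiv.swap_apply_of_ne_of_ne hip hip', hip, hip']

end

end Stmt9

open Stmt9 in
theorem stmt9_general (R : Type*) [CommRing R] [Algebra ℚ R]
    (k : ℕ) (c : ℤ → R)
    (hcneg : ∀ r : ℤ, r < 0 → c r = 0)
    (hrel : ∀ r : ℤ, (k : ℤ) < r →
      c r ^ 2 + 2 * ∑ i ∈ Finset.Icc (1 : ℤ) r, (-1) ^ i.toNat * c (r + i) * c (r - i) = 0)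
    (L : ℕ) (D : Finset (Fin L × Fin L)) (hD : ValidPairs D)
    (p p' : Fin L) (hpp' : (p' : ℕ) = (p : ℕ) + 1)
    (hin : (p, p') ∈ D)
    (hrows : ∀ h : Fin L, p' < h → ((p, h) ∈ D ↔ (p', h) ∈ D))
    (a : Fin L → ℤ) :
    (∀ r s : ℤ, 2 * (k : ℤ) < r + s →
      T c D (Function.update (Function.update a p r) p' s) =
        - T c D (Function.update (Function.update a p s) p' r)) ∧
    (∀ r : ℤ, (k : ℤ) < r →
      T c D (Function.update (Function.update a p r) p' r) = 0) := by
  have hne := (lt_of_val_eq_succ hpp').ne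
  have hswap : ∀ r s : ℤ, 2 * (k : ℤ) < r + s →
      T c D (Function.update (Function.update a p r) p' s) =
        - T c D (Function.update (Function.update a p s) p' r) := by
    intro r s hrs
    rw [← update_update_comp_swap hne a r s, T_comp_swap k hcneg hrel hD hin hpp' hrows, neg_neg]
    simpa [Function.update_of_ne hne, hne] using hrs
  have : IsAddTorsionFree R := IsAddTorsionFree.of_isTorsionFree ℚ R
  exact ⟨hswap, fun r hr => self_eq_neg.1 (hswap r r (by omega))⟩

open Stmt9 in
theorem stmt9 (R : Type*) [CommRing R] [Algebra ℚ R]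
    (k : ℕ) (c : ℤ → R)
    (hc0 : c 0 = 1) (hcneg : ∀ r : ℤ, r < 0 → c r = 0)
    (hrel : ∀ r : ℤ, (k : ℤ) < r →
      c r ^ 2 + 2 * ∑ i ∈ Finset.Icc (1 : ℤ) r, (-1) ^ i.toNat * c (r + i) * c (r - i) = 0)
    (L : ℕ) (D : Finset (Fin L × Fin L)) (hD : ValidPairs D)
    (p p' : Fin L) (hpp' : (p' : ℕ) = (p : ℕ) + 1)
    (hin : (p, p') ∈ D)
    (hrows : ∀ h : Fin L, p' < h → ((p, h) ∈ D ↔ (p', h) ∈ D))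
    (a : Fin L → ℤ) :
    (∀ r s : ℤ, 2 * (k : ℤ) < r + s →
      T c D (Function.update (Function.update a p r) p' s) =
        - T c D (Function.update (Function.update a p s) p' r)) ∧
    (∀ r : ℤ, (k : ℤ) < r →
      T c D (Function.update (Function.update a p r) p' r) = 0) :=
  stmt9_general R k c hcneg hrel L D hD p p' hpp' hin hrows a
end

section
/- Let D be a valid set of pairs, (i,j) ∉ D with D ∪ {(i,j)} also valid (an outer corner). Then for any integer sequence λ: T(D, λ) = T(D ∪ {(i,j)}, λ) + T(D ∪ {(i,j)}, R_{ij} λ). -/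
/-!
STATEMENT 10 (Lemma `easylm`).  Same raising-operator setup as Statements 8-9
(classes `c r` with `c 0 = 1`, `c r = 0` for `r < 0`; no quadratic relations
are needed).  If `(i,j) ∉ D` and `D ∪ {(i,j)}` is a valid set of pairs, then
for any integer sequence `λ`:
`T(D, λ) = T(D ∪ {(i,j)}, λ) + T(D ∪ {(i,j)}, R_{ij} λ)`.
-/

namespace Stmt10

noncomputable section

def rapply {L : ℕ} (nn : Fin L → Fin L → ℕ) (lam : Fin L → ℤ) : Fin L → ℤ :=
  fun p => lam p + (∑ j, (nn p j : ℤ)) - ∑ h, (nn h p : ℤ)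

def pairCoef {L : ℕ} (D : Finset (Fin L × Fin L)) (i j : Fin L) (m : ℕ) : ℚ :=
  if i < j then
    (if (i, j) ∈ D then (if m = 0 then 1 else 2 * (-1 : ℚ) ^ m)
     else (if m = 0 then 1 else if m = 1 then -1 else 0))
  else (if m = 0 then 1 else 0)

def coefRD {L : ℕ} (D : Finset (Fin L × Fin L)) (nn : Fin L → Fin L → ℕ) : ℚ :=
  ∏ i, ∏ j, pairCoef D i j (nn i j)

def T {R : Type*} [CommRing R] [Algebra ℚ R] {L : ℕ}
    (c : ℤ → R) (D : Finset (Fin L × Fin L)) (lam : Fin L → ℤ) : R :=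
  ((2 : ℚ) ^ (D.filter fun p => p.1 = p.2).card)⁻¹ •
    ∑ᶠ nn : Fin L → Fin L → ℕ, coefRD D nn • ∏ i, c (rapply nn lam i)

def ValidPairs {L : ℕ} (D : Finset (Fin L × Fin L)) : Prop :=
  ∀ p ∈ D, p.1 ≤ p.2 ∧
    ∀ q : Fin L × Fin L, q.1 ≤ q.2 → q.1 ≤ p.1 → q.2 ≤ p.2 → q ∈ D

/-- The raising operator `R_{ij}` applied to a sequence. -/
def Rop {L : ℕ} (i j : Fin L) (lam : Fin L → ℤ) : Fin L → ℤ :=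
  fun p => lam p + (if p = i then 1 else 0) - (if p = j then 1 else 0)

end

end Stmt10


namespace Stmt10Aux
namespace Aux

open Finset

variable {L : ℕ}

noncomputable def inc (i j : Fin L) (nn : Fin L → Fin L → ℕ) : Fin L → Fin L → ℕ :=
  fun a b => nn a b + if a = i ∧ b = j then 1 else 0

noncomputable def dec (i j : Fin L) (nn : Fin L → Fin L → ℕ) : Fin L → Fin L → ℕ :=
  fun a b => nn a b - if a = i ∧ b = j then 1 else 0

lemma dec_inc (i j : Fin L) (nn : Fin L → Fin L → ℕ) : dec i j (inc i j nn) = nn := by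
  funext a b; by_cases h : a = i ∧ b = j <;> simp [inc, dec, h]

lemma inc_dec (i j : Fin L) (nn : Fin L → Fin L → ℕ) (h : nn i j ≠ 0) :
    inc i j (dec i j nn) = nn := by
  funext a b
  by_cases hab : a = i ∧ b = j
  · obtain ⟨rfl, rfl⟩ := hab; simp [inc, dec]; omega
  · simp [inc, dec, hab]

lemma inc_injective (i j : Fin L) : Function.Injective (inc i j) := by
  intro x y h
  have := congrArg (dec i j) h
  rwa [dec_inc, dec_inc] at this

lemma inc_self (i j : Fin L) (nn : Fin L → Fin L → ℕ) : inc i j nn i j = nn i j + 1 := by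
  simp [inc]

lemma inc_ne (i j a b : Fin L) (nn : Fin L → Fin L → ℕ) (h : ¬(a = i ∧ b = j)) :
    inc i j nn a b = nn a b := by simp [inc, h]

lemma rapply_inc (i j : Fin L) (nn : Fin L → Fin L → ℕ) (lam : Fin L → ℤ) :
    Stmt10.rapply (inc i j nn) lam = Stmt10.rapply nn (Stmt10.Rop i j lam) := by
  funext p
  have h1 : (∑ q, ((inc i j nn p q : ℕ) : ℤ)) =
      (∑ q, (nn p q : ℤ)) + (if p = i then 1 else 0) := by
    by_cases hp : p = i
    · subst hp
      simp [inc, Finset.sum_add_distrib]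
    · simp [inc, hp]
  have h2 : (∑ h, ((inc i j nn h p : ℕ) : ℤ)) =
      (∑ h, (nn h p : ℤ)) + (if p = j then 1 else 0) := by
    by_cases hp : p = j
    · subst hp
      simp [inc, Finset.sum_add_distrib]
    · simp [inc, hp]
  simp only [Stmt10.rapply, Stmt10.Rop, h1, h2]
  ring


open Stmt10 in
lemma pairCoef_insert_ne {D : Finset (Fin L × Fin L)} {i j a b : Fin L}
    (h : (a, b) ≠ (i, j)) : pairCoef (insert (i, j) D) a b = pairCoef D a b := by
  funext m
  unfold pairCoef
  simp [Finset.mem_insert, h]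

open Stmt10 in
lemma coefRD_factor (E : Finset (Fin L × Fin L)) (nn : Fin L → Fin L → ℕ) (i j : Fin L) :
    coefRD E nn = pairCoef E i j (nn i j) *
      ∏ x ∈ Finset.univ.erase (i, j), pairCoef E x.1 x.2 (nn x.1 x.2) := by
  rw [coefRD, ← Fintype.prod_prod_type (fun x : Fin L × Fin L => pairCoef E x.1 x.2 (nn x.1 x.2)),
    ← Finset.mul_prod_erase Finset.univ _ (Finset.mem_univ (i, j))]

open Stmt10 in
lemma pairCoef_insert_self_ne_zero {D : Finset (Fin L × Fin L)} {i j : Fin L} (hij : i < j)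
    (m : ℕ) : pairCoef (insert (i, j) D) i j m ≠ 0 := by
  unfold pairCoef
  simp only [hij, if_true, Finset.mem_insert_self, if_true]
  rcases m with _ | m
  · norm_num
  · simp only [Nat.succ_ne_zero, if_false]
    exact mul_ne_zero two_ne_zero (pow_ne_zero _ (by norm_num))

open Stmt10 in
lemma coef_key {D : Finset (Fin L × Fin L)} {i j : Fin L} (hij : i < j)
    (hnotin : (i, j) ∉ D) (nn : Fin L → Fin L → ℕ) :
    coefRD D nn = coefRD (insert (i, j) D) nn +
      (if nn i j = 0 then 0 else coefRD (insert (i, j) D) (dec i j nn)) := by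
  have hQ : ∀ mm : Fin L → Fin L → ℕ, (∀ x : Fin L × Fin L, x ≠ (i, j) → mm x.1 x.2 = nn x.1 x.2) →
      (∏ x ∈ Finset.univ.erase (i, j), pairCoef (insert (i, j) D) x.1 x.2 (mm x.1 x.2)) =
      ∏ x ∈ Finset.univ.erase (i, j), pairCoef D x.1 x.2 (nn x.1 x.2) := by
    intro mm hmm
    refine Finset.prod_congr rfl fun x hx => ?_
    have hx' : x ≠ (i, j) := Finset.ne_of_mem_erase hx
    rw [hmm x hx']
    have : (x.1, x.2) ≠ (i, j) := by rwa [Prod.mk.eta]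
    rw [pairCoef_insert_ne this]
  rw [coefRD_factor D nn i j, coefRD_factor (insert (i, j) D) nn i j,
    coefRD_factor (insert (i, j) D) (dec i j nn) i j,
    hQ nn (fun _ _ => rfl), hQ (dec i j nn) ?hdec]
  case hdec =>
    intro x hx
    have : ¬(x.1 = i ∧ x.2 = j) := by
      intro ⟨h1, h2⟩; exact hx (by rw [← h1, ← h2])
    simp [dec, this]
  have hd : dec i j nn i j = nn i j - 1 := by simp [dec]
  rw [hd]
  rcases h : nn i j with _ | m
  · simp [pairCoef]
  · simp only [Nat.succ_ne_zero, if_false, Nat.succ_sub_one]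
    rw [← add_mul]
    congr 1
    unfold pairCoef
    simp only [hij, if_true, hnotin, if_false, Finset.mem_insert_self, Nat.succ_ne_zero, if_false,
      Nat.add_eq, Nat.add_zero]
    rcases m with _ | m
    · norm_num
    · simp only [Nat.succ_ne_zero, if_false]
      have : Nat.succ m + 1 ≠ 1 := by omega
      simp only [this, if_false]
      rw [pow_succ]
      ring


open Stmt10 in
lemma bound_lemma {R : Type*} [CommRing R] (c : ℤ → R) (hcneg : ∀ r : ℤ, r < 0 → c r = 0)
    (E : Finset (Fin L × Fin L)) (lam : Fin L → ℤ) (nn : Fin L → Fin L → ℕ)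
    (h1 : coefRD E nn ≠ 0) (h2 : (∏ p, c (rapply nn lam p)) ≠ 0) (a b : Fin L) :
    nn a b ≤ ∑ p, (lam p).natAbs := by
  have hfac : ∀ a b, pairCoef E a b (nn a b) ≠ 0 := by
    intro a b
    have h1' := h1
    rw [coefRD] at h1'
    have := Finset.prod_ne_zero_iff.mp h1' a (Finset.mem_univ a)
    exact Finset.prod_ne_zero_iff.mp this b (Finset.mem_univ b)
  have htri : ∀ a b : Fin L, ¬ a < b → nn a b = 0 := by
    intro a b hab
    have h := hfac a b
    unfold pairCoef at h
    by_cases h0 : nn a b = 0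
    · exact h0
    · simp [hab, h0] at h
  have hpos : ∀ p, 0 ≤ rapply nn lam p := by
    intro p
    by_contra hp
    push_neg at hp
    exact h2 (Finset.prod_eq_zero (Finset.mem_univ p) (hcneg _ hp))
  by_cases hab : a < b
  · set U := Finset.univ.filter (fun p : Fin L => b ≤ p) with hU
    have expand : ∑ p ∈ U, rapply nn lam p
        = (∑ p ∈ U, lam p) + (∑ p ∈ U, ∑ q, (nn p q : ℤ)) - ∑ p ∈ U, ∑ h, (nn h p : ℤ) := by
      simp [rapply, Finset.sum_add_distrib, Finset.sum_sub_distrib]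
    have e1 : ∑ p ∈ U, ∑ q, (nn p q : ℤ) = ∑ p ∈ U, ∑ q ∈ U, (nn p q : ℤ) := by
      refine Finset.sum_congr rfl fun p hp => ?_
      rw [← Finset.sum_add_sum_compl U (fun q => (nn p q : ℤ))]
      have hz : ∑ q ∈ Uᶜ, (nn p q : ℤ) = 0 := by
        apply Finset.sum_eq_zero
        intro q hq
        have hbp : b ≤ p := (Finset.mem_filter.mp hp).2
        have hbq : ¬ b ≤ q := by
          have := Finset.mem_compl.mp hq
          simpa [hU] using this
        have hnpq : ¬ p < q := not_lt.mpr ((lt_of_lt_of_le (not_le.mp hbq) hbp).le)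
        simp [htri p q hnpq]
      rw [hz, add_zero]
    have e2 : ∑ p ∈ U, ∑ h, (nn h p : ℤ)
        = ∑ p ∈ U, ∑ h ∈ U, (nn h p : ℤ) + ∑ h ∈ Uᶜ, ∑ p ∈ U, (nn h p : ℤ) := by
      have e2a : ∀ p ∈ U, (∑ h, (nn h p : ℤ)) = ∑ h ∈ U, (nn h p : ℤ) + ∑ h ∈ Uᶜ, (nn h p : ℤ) :=
        fun p _ => (Finset.sum_add_sum_compl U _).symm
      rw [Finset.sum_congr rfl e2a, Finset.sum_add_distrib]
      congr 1
      exact Finset.sum_comm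
    have key : (∑ h ∈ Uᶜ, ∑ p ∈ U, (nn h p : ℤ)) ≤ ∑ p ∈ U, lam p := by
      have h0 : 0 ≤ ∑ p ∈ U, rapply nn lam p := Finset.sum_nonneg fun p _ => hpos p
      rw [expand, e1, e2] at h0
      have hswap : ∑ p ∈ U, ∑ q ∈ U, (nn p q : ℤ) = ∑ p ∈ U, ∑ h ∈ U, (nn h p : ℤ) :=
        Finset.sum_comm
      rw [hswap] at h0
      linarith
    have hsingle : (nn a b : ℤ) ≤ ∑ h ∈ Uᶜ, ∑ p ∈ U, (nn h p : ℤ) := by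
      have ha : a ∈ Uᶜ := by
        simp only [hU, Finset.mem_compl, Finset.mem_filter, Finset.mem_univ, true_and, not_le]
        exact hab
      have hb : b ∈ U := by simp [hU]
      calc (nn a b : ℤ) ≤ ∑ p ∈ U, (nn a p : ℤ) :=
            Finset.single_le_sum (f := fun p => (nn a p : ℤ)) (fun p _ => by positivity) hb
        _ ≤ ∑ h ∈ Uᶜ, ∑ p ∈ U, (nn h p : ℤ) :=
            Finset.single_le_sum (f := fun h => ∑ p ∈ U, (nn h p : ℤ))
              (fun h _ => Finset.sum_nonneg fun p _ => by positivity) ha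
    have hlam : ∑ p ∈ U, lam p ≤ ∑ p, ((lam p).natAbs : ℤ) := by
      calc ∑ p ∈ U, lam p ≤ ∑ p ∈ U, ((lam p).natAbs : ℤ) :=
            Finset.sum_le_sum fun p _ => Int.le_natAbs
        _ ≤ ∑ p, ((lam p).natAbs : ℤ) :=
            Finset.sum_le_sum_of_subset_of_nonneg (Finset.subset_univ U) (fun p _ _ => by positivity)
    have := le_trans hsingle (le_trans key hlam)
    exact_mod_cast this
  · simp [htri a b hab]

lemma bounded_finite (N : ℕ) : {nn : Fin L → Fin L → ℕ | ∀ a b, nn a b ≤ N}.Finite := by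
  apply Set.Finite.subset
    (Set.finite_range (fun g : Fin L → Fin L → Fin (N + 1) => fun a b => (g a b : ℕ)))
  intro nn h
  exact ⟨fun a b => ⟨nn a b, Nat.lt_succ_of_le (h a b)⟩, rfl⟩

end Aux
end Stmt10Aux



open Stmt10Aux.Aux

open Stmt10 in
theorem stmt10 (R : Type*) [CommRing R] [Algebra ℚ R]
    (c : ℤ → R) (hc0 : c 0 = 1) (hcneg : ∀ r : ℤ, r < 0 → c r = 0)
    (L : ℕ) (D : Finset (Fin L × Fin L)) (hD : ValidPairs D)
    (i j : Fin L) (hnotin : (i, j) ∉ D)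
    (hD' : ValidPairs (insert (i, j) D))
    (lam : Fin L → ℤ) :
    T c D lam = T c (insert (i, j) D) lam + T c (insert (i, j) D) (Rop i j lam) := by
  have hle : i ≤ j := (hD' (i, j) (Finset.mem_insert_self _ _)).1
  rcases eq_or_lt_of_le hle with heq | hij
  · -- diagonal case i = j
    subst heq
    have hRop : Rop i i lam = lam := by
      funext p; simp [Rop]
    have hcoef : ∀ nn, coefRD (insert (i, i) D) nn = coefRD D nn := by
      intro nn
      unfold coefRD
      refine Finset.prod_congr rfl fun a _ => Finset.prod_congr rfl fun b _ => ?_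
      by_cases hab : a < b
      · have hne : (a, b) ≠ (i, i) := by
          rintro h
          rw [Prod.mk.injEq] at h
          obtain ⟨rfl, rfl⟩ := h
          exact lt_irrefl _ hab
        rw [pairCoef_insert_ne hne]
      · unfold pairCoef; simp [hab]
    have hcard : ((insert (i, i) D).filter fun p => p.1 = p.2).card
        = (D.filter fun p => p.1 = p.2).card + 1 := by
      rw [Finset.filter_insert, if_pos rfl, Finset.card_insert_of_notMem]
      exact fun h => hnotin (Finset.mem_of_mem_filter _ h)
    unfold T
    rw [hRop, hcard]
    have hS : (∑ᶠ nn : Fin L → Fin L → ℕ, coefRD (insert (i, i) D) nn • ∏ p, c (rapply nn lam p))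
        = ∑ᶠ nn : Fin L → Fin L → ℕ, coefRD D nn • ∏ p, c (rapply nn lam p) :=
      finsum_congr fun nn => by rw [hcoef nn]
    rw [hS]
    rw [← add_smul]
    congr 1
    have h2 : ((2 : ℚ) ^ (D.filter fun p => p.1 = p.2).card) ≠ 0 := by positivity
    field_simp
    ring
  · -- off-diagonal case i < j
    have hcard : ((insert (i, j) D).filter fun p => p.1 = p.2).card
        = (D.filter fun p => p.1 = p.2).card := by
      rw [Finset.filter_insert, if_neg (by simpa using ne_of_lt hij)]
    -- abbreviations (as plain functions)
    have hdecne : ∀ nn : Fin L → Fin L → ℕ, nn i j ≠ 0 →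
        coefRD (insert (i, j) D) (dec i j nn) ≠ 0 → coefRD (insert (i, j) D) nn ≠ 0 := by
      intro nn h0 hne
      rw [coefRD_factor (insert (i, j) D) nn i j]
      rw [coefRD_factor (insert (i, j) D) (dec i j nn) i j] at hne
      have hQ : (∏ x ∈ Finset.univ.erase (i, j),
            pairCoef (insert (i, j) D) x.1 x.2 (dec i j nn x.1 x.2))
          = ∏ x ∈ Finset.univ.erase (i, j),
            pairCoef (insert (i, j) D) x.1 x.2 (nn x.1 x.2) := by
        refine Finset.prod_congr rfl fun x hx => ?_
        have hx' : x ≠ (i, j) := Finset.ne_of_mem_erase hx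
        have : ¬(x.1 = i ∧ x.2 = j) := by
          intro ⟨h1, h2⟩; exact hx' (by rw [← h1, ← h2])
        simp [dec, this]
      rw [hQ] at hne
      exact mul_ne_zero (pairCoef_insert_self_ne_zero hij _) (mul_ne_zero_iff.mp hne).2
    have hsubset : ∀ g : (Fin L → Fin L → ℕ) → R,
        (∀ nn, g nn ≠ 0 → coefRD (insert (i, j) D) nn ≠ 0 ∧
          (∏ p, c (rapply nn lam p)) ≠ 0) → (Function.support g).Finite := by
      intro g hg
      apply (bounded_finite (∑ p, (lam p).natAbs)).subset
      intro nn hnn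
      obtain ⟨hc1, hc2⟩ := hg nn hnn
      exact fun a b => bound_lemma c hcneg (insert (i, j) D) lam nn hc1 hc2 a b
    have hfinA : (Function.support fun nn =>
        coefRD (insert (i, j) D) nn • ∏ p, c (rapply nn lam p)).Finite := by
      apply hsubset
      intro nn hnn
      exact ⟨fun h => hnn (by rw [h, zero_smul]), fun h => hnn (by rw [h, smul_zero])⟩
    have hfinA' : (Function.support fun nn =>
        (if nn i j = 0 then (0 : ℚ) else coefRD (insert (i, j) D) (dec i j nn)) •
          ∏ p, c (rapply nn lam p)).Finite := by
      apply hsubset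
      intro nn hnn
      by_cases h0 : nn i j = 0
      · exact absurd (by rw [if_pos h0, zero_smul]) hnn
      · have hc' : coefRD (insert (i, j) D) (dec i j nn) ≠ 0 :=
          fun h => hnn (by rw [if_neg h0, h, zero_smul])
        have hPne : (∏ p, c (rapply nn lam p)) ≠ 0 := fun h => hnn (by rw [h, smul_zero])
        exact ⟨hdecne nn h0 hc', hPne⟩
    have step3 : (∑ᶠ nn, coefRD (insert (i, j) D) nn • ∏ p, c (rapply nn (Rop i j lam) p))
        = ∑ᶠ nn, (if nn i j = 0 then (0 : ℚ) else coefRD (insert (i, j) D) (dec i j nn)) •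
            ∏ p, c (rapply nn lam p) := by
      set f : (Fin L → Fin L → ℕ) → R := fun nn =>
        (if nn i j = 0 then (0 : ℚ) else coefRD (insert (i, j) D) (dec i j nn)) •
          ∏ p, c (rapply nn lam p) with hf
      have hsupp : ∀ x ∈ Function.support f, x ∈ (Set.univ : Set (Fin L → Fin L → ℕ))
          ↔ x ∈ Set.range (inc i j) := by
        intro x hx
        have h0 : x i j ≠ 0 := by
          intro h
          apply hx
          show (if x i j = 0 then (0 : ℚ) else coefRD (insert (i, j) D) (dec i j x)) •
            (∏ p, c (rapply x lam p)) = 0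
          rw [if_pos h, zero_smul]
        constructor
        · intro _
          exact ⟨dec i j x, inc_dec i j x h0⟩
        · intro _
          trivial
      have hchain : (∑ᶠ nn, f nn) = ∑ᶠ n, f (inc i j n) := by
        rw [← finsum_mem_univ (f := f), finsum_mem_inter_support_eq' f _ _ hsupp,
          finsum_mem_range (inc_injective i j)]
      rw [hchain]
      refine (finsum_congr fun n => ?_).symm
      have h0 : inc i j n i j ≠ 0 := by rw [inc_self]; omega
      show (if inc i j n i j = 0 then (0 : ℚ)
          else coefRD (insert (i, j) D) (dec i j (inc i j n))) •
          (∏ p, c (rapply (inc i j n) lam p))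
        = coefRD (insert (i, j) D) n • ∏ p, c (rapply n (Rop i j lam) p)
      rw [if_neg h0, dec_inc, ← rapply_inc]
    have step12 : (∑ᶠ nn, coefRD D nn • ∏ p, c (rapply nn lam p))
        = (∑ᶠ nn, coefRD (insert (i, j) D) nn • ∏ p, c (rapply nn lam p)) +
          ∑ᶠ nn, (if nn i j = 0 then (0 : ℚ) else coefRD (insert (i, j) D) (dec i j nn)) •
            ∏ p, c (rapply nn lam p) := by
      rw [← finsum_add_distrib hfinA hfinA']
      refine finsum_congr fun nn => ?_
      rw [← add_smul, ← coef_key hij hnotin nn]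
    unfold T
    rw [hcard, ← smul_add]
    congr 1
    rw [step12, step3]
end

section
/- For any k-strict partition λ of length ℓ: c_p · T(𝒞(λ), λ) = Σ_{ν ∈ 𝒩} T(𝒞(λ), ν), where 𝒩 = 𝒩(λ,p) is the set of compositions ν ≥ λ (componentwise) with |ν| = |λ| + p and ν_j = 0 for j > ℓ+1. -/
/-!
STATEMENT 11.  For a `k`-strict partition `λ` of length `ℓ` (and `K ∈ {2k, 2k+1}`,
`p > 0`) one has, in the raising-operator formalism of Statements 8-10 (with
sequences of length `ℓ + 1`):
`c_p · T(𝒞(λ), λ) = ∑_{ν ∈ 𝒩} T(𝒞(λ), ν)`,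
where `𝒞(λ) = {(i,j) ∈ Δ : λ_i + λ_j ≥ K + j - i, λ_i > k, j ≤ ℓ}` and
`𝒩 = 𝒩(λ,p)` is the set of compositions `ν ≥ λ` (componentwise) with
`|ν| = |λ| + p` and `ν_j = 0` for `j > ℓ + 1`.  (Compositions are encoded as
functions `Fin (ℓ+1) → Fin (|λ|+p+1)`, which is no restriction since every
entry of such a `ν` is at most `|λ| + p`.)
-/

namespace Stmt11

noncomputable section

def rapply {L : ℕ} (nn : Fin L → Fin L → ℕ) (lam : Fin L → ℤ) : Fin L → ℤ :=
  fun p => lam p + (∑ j, (nn p j : ℤ)) - ∑ h, (nn h p : ℤ)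

def pairCoef {L : ℕ} (D : Finset (Fin L × Fin L)) (i j : Fin L) (m : ℕ) : ℚ :=
  if i < j then
    (if (i, j) ∈ D then (if m = 0 then 1 else 2 * (-1 : ℚ) ^ m)
     else (if m = 0 then 1 else if m = 1 then -1 else 0))
  else (if m = 0 then 1 else 0)

def coefRD {L : ℕ} (D : Finset (Fin L × Fin L)) (nn : Fin L → Fin L → ℕ) : ℚ :=
  ∏ i, ∏ j, pairCoef D i j (nn i j)

def T {R : Type*} [CommRing R] [Algebra ℚ R] {L : ℕ}
    (c : ℤ → R) (D : Finset (Fin L × Fin L)) (lam : Fin L → ℤ) : R :=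
  ((2 : ℚ) ^ (D.filter fun p => p.1 = p.2).card)⁻¹ •
    ∑ᶠ nn : Fin L → Fin L → ℕ, coefRD D nn • ∏ i, c (rapply nn lam i)

end

end Stmt11


namespace Stmt11Aux
open Stmt11 Finset

lemma pairCoef_zero {L : ℕ} (D : Finset (Fin L × Fin L)) (i j : Fin L) :
    pairCoef D i j 0 = 1 := by
  unfold pairCoef; split <;> simp

lemma pairCoef_of_not_lt {L : ℕ} (D : Finset (Fin L × Fin L)) {i j : Fin L}
    (h : ¬ i < j) (m : ℕ) : pairCoef D i j m = if m = 0 then 1 else 0 := by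
  unfold pairCoef; rw [if_neg h]

lemma pairCoef_notMem {L : ℕ} (D : Finset (Fin L × Fin L)) {i j : Fin L}
    (hij : i < j) (hD : (i, j) ∉ D) (m : ℕ) :
    pairCoef D i j m = if m = 0 then 1 else if m = 1 then -1 else 0 := by
  unfold pairCoef; rw [if_pos hij, if_neg hD]

lemma geom {L : ℕ} (D : Finset (Fin L × Fin L)) {i j : Fin L}
    (hij : i < j) (hD : (i, j) ∉ D) (n : ℕ) :
    ∑ t ∈ Finset.range (n + 1), pairCoef D i j t = if n = 0 then 1 else 0 := by
  induction n with
  | zero => simp [pairCoef_zero]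
  | succ n ih =>
    rw [Finset.sum_range_succ, ih, pairCoef_notMem D hij hD]
    rcases Nat.eq_zero_or_pos n with h | h
    · subst h; norm_num
    · have h1 : n ≠ 0 := by omega
      have h2 : n + 1 ≠ 0 := by omega
      have h3 : n + 1 ≠ 1 := by omega
      simp [h1, h2, h3]

lemma tri_of_coef {L : ℕ} {D : Finset (Fin L × Fin L)} {nn : Fin L → Fin L → ℕ}
    (h : coefRD D nn ≠ 0) : ∀ i j, nn i j ≠ 0 → i < j := by
  intro i j hm
  by_contra hij
  apply h
  unfold coefRD
  refine Finset.prod_eq_zero (Finset.mem_univ i) ?_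
  refine Finset.prod_eq_zero (Finset.mem_univ j) ?_
  rw [pairCoef_of_not_lt D hij, if_neg hm]

lemma rapply_nonneg_of_prod {R : Type*} [CommRing R] {L : ℕ} (c : ℤ → R)
    (hcneg : ∀ r : ℤ, r < 0 → c r = 0) {nn : Fin L → Fin L → ℕ} {μ : Fin L → ℤ}
    (h : (∏ i, c (rapply nn μ i)) ≠ 0) : ∀ i, 0 ≤ rapply nn μ i := by
  intro i
  by_contra hi
  exact h (Finset.prod_eq_zero (Finset.mem_univ i) (hcneg _ (lt_of_not_ge hi)))

/-- column bound -/
lemma col_bound {L M : ℕ} {nn : Fin L → Fin L → ℕ} {μ : Fin L → ℤ}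
    (hμ : ∀ i, μ i ≤ (M : ℤ))
    (htri : ∀ i j, nn i j ≠ 0 → i < j)
    (hge : ∀ i, 0 ≤ rapply nn μ i) :
    ∀ n : ℕ, ∀ j : Fin L, L - 1 - (j : ℕ) ≤ n → (∑ h, nn h j) ≤ M * (L + 1) ^ n := by
  intro n
  induction n with
  | zero =>
    intro j hj
    have hrow : ∀ j' : Fin L, nn j j' = 0 := by
      intro j'
      by_contra h
      have := htri _ _ h
      have h1 := j'.isLt
      have h2 : (j : ℕ) < (j' : ℕ) := this
      omega
    have h0 := hge j
    unfold rapply at h0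
    have : (∑ j', (nn j j' : ℤ)) = 0 := by
      rw [Finset.sum_eq_zero]; intro x _; rw [hrow x]; simp
    have hle : ((∑ h, nn h j : ℕ) : ℤ) ≤ μ j := by push_cast; omega
    have h2 : ((∑ h, nn h j : ℕ) : ℤ) ≤ (M : ℤ) := hle.trans (hμ j)
    have h3 : (∑ h, nn h j) ≤ M := by exact_mod_cast h2
    simpa using h3
  | succ n ih =>
    intro j hj
    -- col j ≤ M + row j
    have h0 := hge j
    unfold rapply at h0
    have hcolrow : ((∑ h, nn h j : ℕ) : ℤ) ≤ (M : ℤ) + ((∑ j', nn j j' : ℕ) : ℤ) := by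
      have := hμ j
      push_cast at h0 ⊢
      omega
    have hcolrow' : (∑ h, nn h j) ≤ M + ∑ j', nn j j' := by exact_mod_cast hcolrow
    -- row j ≤ sum over j' > j of col j'
    have hrow : (∑ j', nn j j') ≤ ∑ j' ∈ Finset.univ.filter (fun j' => j < j'), ∑ h, nn h j' := by
      rw [← Finset.sum_filter_of_ne (p := fun j' => j < j')]
      · apply Finset.sum_le_sum
        intro j' _
        exact Finset.single_le_sum (f := fun h => nn h j') (fun _ _ => Nat.zero_le _)
          (Finset.mem_univ j)
      · intro x _ hx
        exact htri _ _ hx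
    have hbound : ∀ j' ∈ Finset.univ.filter (fun j' : Fin L => j < j'),
        (∑ h, nn h j') ≤ M * (L + 1) ^ n := by
      intro j' hj'
      simp only [Finset.mem_filter] at hj'
      apply ih
      have : (j : ℕ) < (j' : ℕ) := hj'.2
      omega
    have hcard : (Finset.univ.filter (fun j' : Fin L => j < j')).card ≤ L := by
      calc (Finset.univ.filter (fun j' : Fin L => j < j')).card
          ≤ (Finset.univ : Finset (Fin L)).card := Finset.card_le_card (Finset.filter_subset _ _)
        _ = L := by simp
    calc (∑ h, nn h j) ≤ M + ∑ j', nn j j' := hcolrow'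
      _ ≤ M + ∑ j' ∈ Finset.univ.filter (fun j' => j < j'), ∑ h, nn h j' := by omega
      _ ≤ M + ∑ _j' ∈ Finset.univ.filter (fun j' : Fin L => j < j'), M * (L + 1) ^ n := by
          have := Finset.sum_le_sum hbound; omega
      _ = M + (Finset.univ.filter (fun j' : Fin L => j < j')).card * (M * (L + 1) ^ n) := by
          rw [Finset.sum_const, smul_eq_mul]
      _ ≤ M + L * (M * (L + 1) ^ n) := by
          have := Nat.mul_le_mul_right (M * (L + 1) ^ n) hcard; omega
      _ ≤ M * (L + 1) ^ (n + 1) := by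
          have h1 : 1 ≤ (L + 1) ^ n := Nat.one_le_pow _ _ (by omega)
          have : M * (L + 1) ^ (n + 1) = M * (L + 1) ^ n + L * (M * (L + 1) ^ n) := by ring
          rw [this]
          have : M ≤ M * (L + 1) ^ n := Nat.le_mul_of_pos_right M (by omega)
          omega

lemma entry_bound {L M : ℕ} {nn : Fin L → Fin L → ℕ} {μ : Fin L → ℤ}
    (hμ : ∀ i, μ i ≤ (M : ℤ))
    (htri : ∀ i j, nn i j ≠ 0 → i < j)
    (hge : ∀ i, 0 ≤ rapply nn μ i) :
    ∀ i j, nn i j ≤ M * (L + 1) ^ L := by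
  intro i j
  calc nn i j ≤ ∑ h, nn h j :=
        Finset.single_le_sum (f := fun h => nn h j) (fun _ _ => Nat.zero_le _) (Finset.mem_univ i)
    _ ≤ M * (L + 1) ^ L := col_bound hμ htri hge L j (by omega)


noncomputable section
/-- box of matrices with entries ≤ b -/
def fbox (L b : ℕ) : Finset (Fin L → Fin L → ℕ) :=
  Fintype.piFinset fun _ => Fintype.piFinset fun _ => Finset.range (b + 1)

lemma mem_fbox {L b : ℕ} {nn : Fin L → Fin L → ℕ} :
    nn ∈ fbox L b ↔ ∀ i j, nn i j ≤ b := by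
  simp [fbox, Fintype.mem_piFinset, Nat.lt_succ_iff]

def vbox (n b : ℕ) : Finset (Fin n → ℕ) :=
  Fintype.piFinset fun _ => Finset.range (b + 1)

lemma mem_vbox {n b : ℕ} {a : Fin n → ℕ} :
    a ∈ vbox n b ↔ ∀ i, a i ≤ b := by
  simp [vbox, Fintype.mem_piFinset, Nat.lt_succ_iff]

variable {R : Type*} [CommRing R] [Algebra ℚ R]

lemma term_support {L M : ℕ} (c : ℤ → R) (hcneg : ∀ r : ℤ, r < 0 → c r = 0)
    (D : Finset (Fin L × Fin L)) {μ : Fin L → ℤ} (hμ : ∀ i, μ i ≤ (M : ℤ))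
    {nn : Fin L → Fin L → ℕ}
    (h : coefRD D nn • (∏ i, c (rapply nn μ i)) ≠ 0) :
    ∀ i j, nn i j ≤ M * (L + 1) ^ L := by
  have hco : coefRD D nn ≠ 0 := by rintro h0; rw [h0, zero_smul] at h; exact h rfl
  have hpr : (∏ i, c (rapply nn μ i)) ≠ 0 := by
    rintro h0; rw [h0, smul_zero] at h; exact h rfl
  exact entry_bound hμ (tri_of_coef hco) (rapply_nonneg_of_prod c hcneg hpr)

lemma T_eq_sum {L M : ℕ} (c : ℤ → R) (hcneg : ∀ r : ℤ, r < 0 → c r = 0)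
    (D : Finset (Fin L × Fin L)) {μ : Fin L → ℤ} (hμ : ∀ i, μ i ≤ (M : ℤ))
    {b : ℕ} (hb : M * (L + 1) ^ L ≤ b) :
    T c D μ = ((2 : ℚ) ^ (D.filter fun q => q.1 = q.2).card)⁻¹ •
      ∑ nn ∈ fbox L b, coefRD D nn • ∏ i, c (rapply nn μ i) := by
  unfold T
  congr 1
  apply finsum_eq_sum_of_support_subset
  intro nn hnn
  simp only [Function.mem_support] at hnn
  simp only [Finset.coe_sort_coe, Finset.mem_coe, mem_fbox]
  intro i j
  exact (term_support c hcneg D hμ hnn i j).trans hb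



def aM (ell : ℕ) (a : Fin ell → ℕ) : Fin (ell + 1) → Fin (ell + 1) → ℕ :=
  fun i j => if h : (i : ℕ) < ell ∧ (j : ℕ) = ell then a ⟨i, h.1⟩ else 0

lemma aM_castSucc_last (a : Fin ell → ℕ) (t : Fin ell) :
    aM ell a (Fin.castSucc t) (Fin.last ell) = a t := by
  unfold aM
  rw [dif_pos ⟨by simpa using t.isLt, by simp⟩]
  exact congrArg a (Fin.ext (by simp))

lemma aM_block (a : Fin ell → ℕ) (i : Fin (ell + 1)) (j : Fin (ell + 1))
    (hj : (j : ℕ) ≠ ell) : aM ell a i j = 0 := by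
  unfold aM
  rw [dif_neg (by tauto)]

lemma aM_last_row (a : Fin ell → ℕ) (j : Fin (ell + 1)) :
    aM ell a (Fin.last ell) j = 0 := by
  unfold aM
  rw [dif_neg (by simp)]

lemma aM_le_of (a : Fin ell → ℕ) (b : ℕ) (h : ∀ t, a t ≤ b) (i j : Fin (ell + 1)) :
    aM ell a i j ≤ b := by
  unfold aM
  split
  · apply h
  · exact Nat.zero_le _

lemma aM_le_mm (a : Fin ell → ℕ) (mm : Fin (ell + 1) → Fin (ell + 1) → ℕ)
    (h : ∀ t : Fin ell, a t ≤ mm (Fin.castSucc t) (Fin.last ell)) (i j : Fin (ell + 1)) :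
    aM ell a i j ≤ mm i j := by
  unfold aM
  split
  · rename_i hreg
    have hi : i = Fin.castSucc (⟨(i : ℕ), hreg.1⟩ : Fin ell) := by
      apply Fin.ext; simp
    have hj : j = Fin.last ell := by apply Fin.ext; simp [hreg.2]
    have := h ⟨(i : ℕ), hreg.1⟩
    rw [← hi, ← hj] at this
    convert this using 2
  · exact Nat.zero_le _

lemma aM_row (a : Fin ell → ℕ) (i : Fin (ell + 1)) :
    (∑ j, (aM ell a i j : ℤ)) = if h : (i : ℕ) < ell then (a ⟨i, h⟩ : ℤ) else 0 := by
  rw [Fin.sum_univ_castSucc]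
  have h1 : ∀ t : Fin ell, (aM ell a i (Fin.castSucc t) : ℤ) = 0 := by
    intro t
    rw [aM_block a i _ (by simp [Fin.coe_castSucc]; exact t.isLt.ne)]
    simp
  rw [Finset.sum_eq_zero (fun t _ => h1 t), zero_add]
  unfold aM
  by_cases h : (i : ℕ) < ell
  · rw [dif_pos h, dif_pos ⟨h, by simp⟩]
  · rw [dif_neg h, dif_neg (by intro hc; exact h hc.1)]
    simp

lemma aM_col (a : Fin ell → ℕ) (j : Fin (ell + 1)) :
    (∑ h, (aM ell a h j : ℤ)) = if (j : ℕ) = ell then (∑ t, (a t : ℤ)) else 0 := by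
  by_cases hj : (j : ℕ) = ell
  · rw [if_pos hj]
    have hjl : j = Fin.last ell := by apply Fin.ext; simp [hj]
    subst hjl
    rw [Fin.sum_univ_castSucc]
    rw [aM_last_row]
    simp only [Nat.cast_zero, add_zero]
    apply Finset.sum_congr rfl
    intro t _
    rw [aM_castSucc_last]
  · rw [if_neg hj]
    apply Finset.sum_eq_zero
    intro h _
    rw [aM_block a h j hj]
    simp


def mu0 (ell p : ℕ) (lam : Fin ell → ℕ) : Fin (ell + 1) → ℤ :=
  fun i => if h : (i : ℕ) < ell then (lam ⟨i, h⟩ : ℤ) else (p : ℤ)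

def nu' (ell p : ℕ) (lam : Fin ell → ℕ) (a : Fin ell → ℕ) : Fin (ell + 1) → ℤ :=
  fun i => if h : (i : ℕ) < ell then (lam ⟨i, h⟩ : ℤ) + (a ⟨i, h⟩ : ℤ)
           else (p : ℤ) - ∑ t, (a t : ℤ)

lemma rapply_shift {ell p : ℕ} (lam : Fin ell → ℕ) (a : Fin ell → ℕ)
    (nn : Fin (ell + 1) → Fin (ell + 1) → ℕ) :
    rapply (nn + aM ell a) (mu0 ell p lam) = rapply nn (nu' ell p lam a) := by
  funext i
  unfold rapply
  have hrow : (∑ j, ((nn + aM ell a) i j : ℤ)) = (∑ j, (nn i j : ℤ)) + ∑ j, (aM ell a i j : ℤ) := by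
    rw [← Finset.sum_add_distrib]
    apply Finset.sum_congr rfl
    intro j _
    simp [Pi.add_apply]
  have hcol : (∑ h, ((nn + aM ell a) h i : ℤ)) = (∑ h, (nn h i : ℤ)) + ∑ h, (aM ell a h i : ℤ) := by
    rw [← Finset.sum_add_distrib]
    apply Finset.sum_congr rfl
    intro h _
    simp [Pi.add_apply]
  rw [hrow, hcol, aM_row, aM_col]
  unfold mu0 nu'
  by_cases h : (i : ℕ) < ell
  · rw [dif_pos h, dif_pos h, dif_pos h, if_neg (by omega)]
    ring
  · rw [dif_neg h, dif_neg h, dif_neg h, if_pos (by omega)]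
    ring

lemma lastrow_zero {L : ℕ} {nn : Fin L → Fin L → ℕ}
    (htri : ∀ i j, nn i j ≠ 0 → i < j) (i : Fin L) (hi : (i : ℕ) = L - 1) (j : Fin L) :
    nn i j = 0 := by
  by_contra h
  have := htri _ _ h
  have h1 : (i : ℕ) < (j : ℕ) := this
  have := j.isLt
  omega

/-- a term of `Σ'(ν' a)` vanishes when `∑ a > p` -/
lemma term_vanish {R : Type*} [CommRing R] [Algebra ℚ R] {ell p : ℕ}
    (c : ℤ → R) (hcneg : ∀ r : ℤ, r < 0 → c r = 0)
    (D : Finset (Fin (ell + 1) × Fin (ell + 1))) (lam : Fin ell → ℕ)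
    (a : Fin ell → ℕ) (hsum : p < ∑ t, a t)
    (nn : Fin (ell + 1) → Fin (ell + 1) → ℕ) :
    coefRD D nn • (∏ i, c (rapply nn (nu' ell p lam a) i)) = 0 := by
  rcases eq_or_ne (coefRD D nn) 0 with h | h
  · rw [h, zero_smul]
  · have htri := tri_of_coef h
    have hlast : rapply nn (nu' ell p lam a) (Fin.last ell) < 0 := by
      unfold rapply nu'
      rw [dif_neg (by simp)]
      have hrow : (∑ j, (nn (Fin.last ell) j : ℤ)) = 0 := by
        apply Finset.sum_eq_zero
        intro j _
        rw [lastrow_zero htri (Fin.last ell) (by simp) j]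
        simp
      have hcol : 0 ≤ ∑ h, (nn h (Fin.last ell) : ℤ) :=
        Finset.sum_nonneg (fun h _ => by positivity)
      have : ((p : ℤ) - ∑ t, (a t : ℤ)) < 0 := by
        have : ((∑ t, a t : ℕ) : ℤ) = ∑ t, (a t : ℤ) := by push_cast; rfl
        omega
      omega
    rw [Finset.prod_eq_zero (Finset.mem_univ (Fin.last ell)) (hcneg _ hlast), smul_zero]

def pairCoefX (ell : ℕ) (D : Finset (Fin (ell + 1) × Fin (ell + 1)))
    (i j : Fin (ell + 1)) (m : ℕ) : ℚ :=
  if (i : ℕ) < ell ∧ (j : ℕ) = ell then (if m = 0 then 1 else 0) else pairCoef D i j m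

def coefX (ell : ℕ) (D : Finset (Fin (ell + 1) × Fin (ell + 1)))
    (mm : Fin (ell + 1) → Fin (ell + 1) → ℕ) : ℚ :=
  ∏ i, ∏ j, pairCoefX ell D i j (mm i j)

lemma prod_decomp {ell : ℕ} (pc : Fin (ell + 1) → Fin (ell + 1) → ℕ → ℚ)
    (nn : Fin (ell + 1) → Fin (ell + 1) → ℕ) :
    (∏ i, ∏ j, pc i j (nn i j)) =
      ((∏ i, ∏ t : Fin ell, pc i t.castSucc (nn i t.castSucc)) *
        pc (Fin.last ell) (Fin.last ell) (nn (Fin.last ell) (Fin.last ell))) *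
      ∏ t : Fin ell, pc t.castSucc (Fin.last ell) (nn t.castSucc (Fin.last ell)) := by
  have h1 : (∏ i, ∏ j, pc i j (nn i j)) =
      ∏ i, ((∏ t : Fin ell, pc i t.castSucc (nn i t.castSucc)) *
        pc i (Fin.last ell) (nn i (Fin.last ell))) := by
    apply Finset.prod_congr rfl
    intro i _
    exact Fin.prod_univ_castSucc (fun j => pc i j (nn i j))
  rw [h1, Finset.prod_mul_distrib,
    Fin.prod_univ_castSucc (fun i => pc i (Fin.last ell) (nn i (Fin.last ell)))]
  ring

lemma pairCoefX_block {ell : ℕ} (D : Finset (Fin (ell + 1) × Fin (ell + 1)))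
    (i : Fin (ell + 1)) (t : Fin ell) (m : ℕ) :
    pairCoefX ell D i t.castSucc m = pairCoef D i t.castSucc m := by
  unfold pairCoefX
  rw [if_neg (by simp; intro _; exact t.isLt.ne)]

lemma pairCoefX_lastlast {ell : ℕ} (D : Finset (Fin (ell + 1) × Fin (ell + 1))) (m : ℕ) :
    pairCoefX ell D (Fin.last ell) (Fin.last ell) m = pairCoef D (Fin.last ell) (Fin.last ell) m := by
  unfold pairCoefX
  rw [if_neg (by simp)]

lemma pairCoefX_cs_last {ell : ℕ} (D : Finset (Fin (ell + 1) × Fin (ell + 1)))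
    (t : Fin ell) (m : ℕ) :
    pairCoefX ell D t.castSucc (Fin.last ell) m = if m = 0 then 1 else 0 := by
  unfold pairCoefX
  rw [if_pos ⟨by simpa using t.isLt, by simp⟩]

lemma coefX_eq {ell : ℕ} (D : Finset (Fin (ell + 1) × Fin (ell + 1)))
    (mm : Fin (ell + 1) → Fin (ell + 1) → ℕ) :
    coefX ell D mm =
      ((∏ i, ∏ t : Fin ell, pairCoef D i t.castSucc (mm i t.castSucc)) *
        pairCoef D (Fin.last ell) (Fin.last ell) (mm (Fin.last ell) (Fin.last ell))) *
      ∏ t : Fin ell, (if mm t.castSucc (Fin.last ell) = 0 then (1 : ℚ) else 0) := by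
  unfold coefX
  rw [prod_decomp]
  congr 1
  · congr 1
    · exact Finset.prod_congr rfl fun i _ => Finset.prod_congr rfl fun t _ =>
        pairCoefX_block D i t _
    · exact pairCoefX_lastlast D _
  · exact Finset.prod_congr rfl fun t _ => pairCoefX_cs_last D t _

lemma coefRD_decomp {ell : ℕ} (D : Finset (Fin (ell + 1) × Fin (ell + 1)))
    (nn : Fin (ell + 1) → Fin (ell + 1) → ℕ) :
    coefRD D nn =
      ((∏ i, ∏ t : Fin ell, pairCoef D i t.castSucc (nn i t.castSucc)) *
        pairCoef D (Fin.last ell) (Fin.last ell) (nn (Fin.last ell) (Fin.last ell))) *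
      ∏ t : Fin ell, pairCoef D t.castSucc (Fin.last ell) (nn t.castSucc (Fin.last ell)) :=
  prod_decomp _ nn

lemma sum_fiber_coef {ell : ℕ} (D : Finset (Fin (ell + 1) × Fin (ell + 1)))
    (hD : ∀ q ∈ D, (q.2 : ℕ) < ell) (mm : Fin (ell + 1) → Fin (ell + 1) → ℕ) :
    (∑ a ∈ Fintype.piFinset
        (fun t : Fin ell => Finset.range (mm t.castSucc (Fin.last ell) + 1)),
      coefRD D (fun i j => mm i j - aM ell a i j)) = coefX ell D mm := by
  have hterm : ∀ a : Fin ell → ℕ,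
      coefRD D (fun i j => mm i j - aM ell a i j) =
      ((∏ i, ∏ t : Fin ell, pairCoef D i t.castSucc (mm i t.castSucc)) *
        pairCoef D (Fin.last ell) (Fin.last ell) (mm (Fin.last ell) (Fin.last ell))) *
      ∏ t : Fin ell, pairCoef D t.castSucc (Fin.last ell)
        (mm t.castSucc (Fin.last ell) - a t) := by
    intro a
    rw [coefRD_decomp]
    congr 1
    · congr 1
      · apply Finset.prod_congr rfl; intro i _; apply Finset.prod_congr rfl; intro t _
        rw [aM_block a i t.castSucc (by simpa using t.isLt.ne), Nat.sub_zero]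
      · rw [aM_last_row, Nat.sub_zero]
    · apply Finset.prod_congr rfl; intro t _
      rw [aM_castSucc_last]
  rw [Finset.sum_congr rfl (fun a _ => hterm a), ← Finset.mul_sum]
  have hps := (Finset.prod_univ_sum
    (fun t : Fin ell => Finset.range (mm t.castSucc (Fin.last ell) + 1))
    (fun t x => pairCoef D t.castSucc (Fin.last ell) (mm t.castSucc (Fin.last ell) - x))).symm
  rw [hps, coefX_eq]
  congr 1
  apply Finset.prod_congr rfl
  intro t _
  have hlt : t.castSucc < Fin.last ell := by
    rw [Fin.lt_def]; simpa using t.isLt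
  have hnotmem : (t.castSucc, Fin.last ell) ∉ D := by
    intro hmem
    have := hD _ hmem
    simp at this
  set n := mm t.castSucc (Fin.last ell) with hn
  calc (∑ x ∈ Finset.range (n + 1), pairCoef D t.castSucc (Fin.last ell) (n - x))
      = ∑ x ∈ Finset.range (n + 1), pairCoef D t.castSucc (Fin.last ell) (n + 1 - 1 - x) := by
        apply Finset.sum_congr rfl; intro x _; congr 1
    _ = ∑ x ∈ Finset.range (n + 1), pairCoef D t.castSucc (Fin.last ell) x := by
        exact Finset.sum_range_reflect (fun x => pairCoef D t.castSucc (Fin.last ell) x) (n + 1)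
    _ = if n = 0 then 1 else 0 := geom D hlt hnotmem n

section Main

variable {R : Type*} [CommRing R] [Algebra ℚ R]

lemma coefX_zero_of_bad {ell : ℕ} (D : Finset (Fin (ell + 1) × Fin (ell + 1)))
    {mm : Fin (ell + 1) → Fin (ell + 1) → ℕ} {i j : Fin (ell + 1)}
    (hij : ¬ i < j) (hne : mm i j ≠ 0) : coefX ell D mm = 0 := by
  unfold coefX
  refine Finset.prod_eq_zero (Finset.mem_univ i) ?_
  refine Finset.prod_eq_zero (Finset.mem_univ j) ?_
  unfold pairCoefX
  rw [if_neg, pairCoef_of_not_lt D hij, if_neg hne]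
  intro hreg
  exact hij (by rw [Fin.lt_def]; omega)

lemma aM_zero_of_not_lt {ell : ℕ} (a : Fin ell → ℕ) {i j : Fin (ell + 1)}
    (hij : ¬ i < j) : aM ell a i j = 0 := by
  unfold aM
  rw [dif_neg]
  intro hreg
  exact hij (by rw [Fin.lt_def]; omega)

lemma fiber_eq {ell p M B : ℕ}
    (c : ℤ → R) (hcneg : ∀ r : ℤ, r < 0 → c r = 0)
    (D : Finset (Fin (ell + 1) × Fin (ell + 1))) (hD : ∀ q ∈ D, (q.2 : ℕ) < ell)
    (lam : Fin ell → ℕ)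
    (hM : ∀ i, mu0 ell p lam i ≤ (M : ℤ)) (hB : M * (ell + 2) ^ (ell + 1) ≤ B)
    (mm : Fin (ell + 1) → Fin (ell + 1) → ℕ) :
    (∑ q ∈ ((vbox ell B) ×ˢ (fbox (ell + 1) B)).filter
        (fun q : (Fin ell → ℕ) × (Fin (ell + 1) → Fin (ell + 1) → ℕ) =>
          q.2 + aM ell q.1 = mm),
      coefRD D q.2 • (∏ i, c (rapply (q.2 + aM ell q.1) (mu0 ell p lam) i)))
    = coefX ell D mm • ∏ i, c (rapply mm (mu0 ell p lam) i) := by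
  have hstep : ∀ q ∈ ((vbox ell B) ×ˢ (fbox (ell + 1) B)).filter
      (fun q : (Fin ell → ℕ) × (Fin (ell + 1) → Fin (ell + 1) → ℕ) =>
        q.2 + aM ell q.1 = mm),
      coefRD D q.2 • (∏ i, c (rapply (q.2 + aM ell q.1) (mu0 ell p lam) i)) =
      coefRD D q.2 • (∏ i, c (rapply mm (mu0 ell p lam) i)) := by
    intro q hq
    rw [Finset.mem_filter] at hq
    rw [hq.2]
  rw [Finset.sum_congr rfl hstep, ← Finset.sum_smul]
  rcases eq_or_ne (∏ i, c (rapply mm (mu0 ell p lam) i)) 0 with hP | hP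
  · rw [hP, smul_zero, smul_zero]
  congr 1
  by_cases htri : ∀ i j, mm i j ≠ 0 → i < j
  · -- triangular case
    have hge : ∀ i, 0 ≤ rapply mm (mu0 ell p lam) i := rapply_nonneg_of_prod c hcneg hP
    have hbd : ∀ i j, mm i j ≤ B := by
      intro i j
      exact (entry_bound hM htri hge i j).trans hB
    rw [← sum_fiber_coef D hD mm]
    apply Finset.sum_nbij' (i := fun q => q.1)
      (j := fun a => (a, fun i j => mm i j - aM ell a i j))
    · intro q hq
      rw [Finset.mem_filter, Finset.mem_product] at hq
      rw [Fintype.mem_piFinset]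
      intro t
      rw [Finset.mem_range, Nat.lt_succ_iff]
      have := congrFun (congrFun hq.2 t.castSucc) (Fin.last ell)
      simp only [Pi.add_apply] at this
      rw [aM_castSucc_last] at this
      omega
    · intro a ha
      rw [Fintype.mem_piFinset] at ha
      have ha' : ∀ t, a t ≤ mm t.castSucc (Fin.last ell) := by
        intro t
        have := ha t
        rw [Finset.mem_range, Nat.lt_succ_iff] at this
        exact this
      rw [Finset.mem_filter, Finset.mem_product]
      refine ⟨⟨?_, ?_⟩, ?_⟩
      · rw [mem_vbox]
        intro t
        exact (ha' t).trans (hbd _ _)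
      · rw [mem_fbox]
        intro i j
        exact (Nat.sub_le _ _).trans (hbd i j)
      · funext i j
        simp only [Pi.add_apply]
        exact Nat.sub_add_cancel (aM_le_mm a mm ha' i j)
    · intro q hq
      rw [Finset.mem_filter, Finset.mem_product] at hq
      have hcond := hq.2
      apply Prod.ext
      · rfl
      · funext i j
        have := congrFun (congrFun hcond i) j
        simp only [Pi.add_apply] at this
        simp only
        omega
    · intro a ha
      rfl
    · intro q hq
      rw [Finset.mem_filter, Finset.mem_product] at hq
      congr 1
      funext i j
      have := congrFun (congrFun hq.2 i) j
      simp only [Pi.add_apply] at this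
      omega
  · -- non-triangular case: both sides vanish
    push_neg at htri
    obtain ⟨i, j, hne, hij⟩ := htri
    have hij' : ¬ i < j := not_lt.mpr hij
    rw [coefX_zero_of_bad D hij' hne]
    apply Finset.sum_eq_zero
    intro q hq
    rw [Finset.mem_filter] at hq
    by_contra hco
    have := tri_of_coef hco i j ?_
    · exact hij' this
    · have hcond := congrFun (congrFun hq.2 i) j
      simp only [Pi.add_apply] at hcond
      rw [aM_zero_of_not_lt q.1 hij'] at hcond
      omega

lemma point_eq {ell p : ℕ}
    (c : ℤ → R) (hc0 : c 0 = 1) (hcneg : ∀ r : ℤ, r < 0 → c r = 0)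
    (D : Finset (Fin (ell + 1) × Fin (ell + 1))) (lam : Fin ell → ℕ)
    (lamP : Fin (ell + 1) → ℤ)
    (hlamP : ∀ i : Fin (ell + 1), lamP i = if h : (i : ℕ) < ell then (lam ⟨i, h⟩ : ℤ) else 0)
    (mm : Fin (ell + 1) → Fin (ell + 1) → ℕ) :
    coefX ell D mm • (∏ i, c (rapply mm (mu0 ell p lam) i)) =
      c p * (coefRD D mm • ∏ i, c (rapply mm lamP i)) := by
  by_cases htri : ∀ i j, mm i j ≠ 0 → i < j
  · by_cases hcol : ∀ t : Fin ell, mm t.castSucc (Fin.last ell) = 0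
    · -- good case
      have hll : mm (Fin.last ell) (Fin.last ell) = 0 := by
        by_contra h
        exact absurd (htri _ _ h) (lt_irrefl _)
      have hrow0 : ∀ j, mm (Fin.last ell) j = 0 :=
        lastrow_zero htri (Fin.last ell) (by simp)
      have hrowZ : (∑ j, (mm (Fin.last ell) j : ℤ)) = 0 := by
        apply Finset.sum_eq_zero; intro j _; rw [hrow0 j]; simp
      have hcolZ : (∑ h, (mm h (Fin.last ell) : ℤ)) = 0 := by
        rw [Fin.sum_univ_castSucc]
        rw [hll]
        simp only [Nat.cast_zero, add_zero]
        apply Finset.sum_eq_zero; intro t _; rw [hcol t]; simp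
      have hXC : coefX ell D mm = coefRD D mm := by
        unfold coefX coefRD
        apply Finset.prod_congr rfl; intro i _
        apply Finset.prod_congr rfl; intro j _
        unfold pairCoefX
        split
        · rename_i hreg
          have hi : i = Fin.castSucc (⟨(i : ℕ), hreg.1⟩ : Fin ell) := by apply Fin.ext; simp
          have hj : j = Fin.last ell := by apply Fin.ext; simp [hreg.2]
          have h0 := hcol ⟨(i : ℕ), hreg.1⟩
          rw [← hi, ← hj] at h0
          rw [h0, pairCoef_zero]
          simp
        · rfl
      have hlastval : rapply mm (mu0 ell p lam) (Fin.last ell) = (p : ℤ) := by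
        unfold rapply mu0
        rw [dif_neg (by simp), hrowZ, hcolZ]
        ring
      have hlastlamP : rapply mm lamP (Fin.last ell) = 0 := by
        unfold rapply
        rw [hlamP, dif_neg (by simp), hrowZ, hcolZ]
        ring
      have hblockeq : ∀ t : Fin ell,
          rapply mm (mu0 ell p lam) t.castSucc = rapply mm lamP t.castSucc := by
        intro t
        unfold rapply mu0
        rw [hlamP]
        rw [dif_pos (by simpa using t.isLt), dif_pos (by simpa using t.isLt)]
      have hP : (∏ i, c (rapply mm (mu0 ell p lam) i)) =
          (∏ t : Fin ell, c (rapply mm lamP t.castSucc)) * c p := by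
        rw [Fin.prod_univ_castSucc (fun i => c (rapply mm (mu0 ell p lam) i))]
        rw [hlastval]
        congr 1
        exact Finset.prod_congr rfl fun t _ => congrArg c (hblockeq t)
      have hPl : (∏ i, c (rapply mm lamP i)) =
          (∏ t : Fin ell, c (rapply mm lamP t.castSucc)) := by
        rw [Fin.prod_univ_castSucc (fun i => c (rapply mm lamP i))]
        rw [hlastlamP, hc0, mul_one]
      rw [hXC, hP, hPl, mul_smul_comm]
      congr 1
      ring
    · -- some column entry nonzero: both sides 0
      push_neg at hcol
      obtain ⟨t, ht⟩ := hcol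
      have hX0 : coefX ell D mm = 0 := by
        unfold coefX
        refine Finset.prod_eq_zero (Finset.mem_univ t.castSucc) ?_
        refine Finset.prod_eq_zero (Finset.mem_univ (Fin.last ell)) ?_
        rw [pairCoefX_cs_last, if_neg ht]
      have hPl0 : (∏ i, c (rapply mm lamP i)) = 0 := by
        apply Finset.prod_eq_zero (Finset.mem_univ (Fin.last ell))
        apply hcneg
        unfold rapply
        rw [hlamP, dif_neg (by simp)]
        have hrowZ : (∑ j, (mm (Fin.last ell) j : ℤ)) = 0 := by
          apply Finset.sum_eq_zero; intro j _
          rw [lastrow_zero htri (Fin.last ell) (by simp) j]; simp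
        have hcolpos : (mm t.castSucc (Fin.last ell) : ℤ) ≤
            ∑ h, (mm h (Fin.last ell) : ℤ) :=
          Finset.single_le_sum (f := fun h => (mm h (Fin.last ell) : ℤ))
            (fun _ _ => by positivity) (Finset.mem_univ _)
        have : (1 : ℤ) ≤ (mm t.castSucc (Fin.last ell) : ℤ) := by
          exact_mod_cast Nat.one_le_iff_ne_zero.mpr ht
        omega
      rw [hX0, hPl0, zero_smul, smul_zero, mul_zero]
  · -- non-triangular: both sides 0
    push_neg at htri
    obtain ⟨i, j, hne, hij⟩ := htri
    have hij' : ¬ i < j := not_lt.mpr hij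
    have hC0 : coefRD D mm = 0 := by
      by_contra h
      exact hij' (tri_of_coef h i j hne)
    rw [coefX_zero_of_bad D hij' hne, hC0, zero_smul, zero_smul, mul_zero]

end Main


section Reindex

def jmap (ell p : ℕ) (lam : Fin ell → ℕ) (a : Fin ell → ℕ) :
    Fin (ell + 1) → Fin ((∑ i, lam i) + p + 1) :=
  fun i => if h : (i : ℕ) < ell then
      ⟨min (lam ⟨i, h⟩ + a ⟨i, h⟩) ((∑ i, lam i) + p), by omega⟩
    else ⟨p - ∑ t, a t, by omega⟩

lemma jmap_cs {ell p : ℕ} (lam : Fin ell → ℕ) (a : Fin ell → ℕ) (t : Fin ell) :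
    ((jmap ell p lam a t.castSucc : Fin ((∑ i, lam i) + p + 1)) : ℕ) =
      min (lam t + a t) ((∑ i, lam i) + p) := by
  unfold jmap
  rw [dif_pos (show ((t.castSucc : ℕ)) < ell by simpa using t.isLt)]
  simp

lemma jmap_last {ell p : ℕ} (lam : Fin ell → ℕ) (a : Fin ell → ℕ) :
    ((jmap ell p lam a (Fin.last ell) : Fin ((∑ i, lam i) + p + 1)) : ℕ) =
      p - ∑ t, a t := by
  unfold jmap
  rw [dif_neg (by simp)]

variable {S : Type*} [AddCommMonoid S]

lemma reindex_sum {ell p B : ℕ} (lam : Fin ell → ℕ)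
    (lamP : Fin (ell + 1) → ℤ)
    (hlamP : ∀ i : Fin (ell + 1), lamP i = if h : (i : ℕ) < ell then (lam ⟨i, h⟩ : ℤ) else 0)
    (hB : (∑ i, lam i) + p ≤ B)
    (F : (Fin (ell + 1) → ℤ) → S) :
    (∑ ν ∈ Finset.univ.filter (fun ν : Fin (ell + 1) → Fin ((∑ i, lam i) + p + 1) =>
        (∀ i : Fin (ell + 1), lamP i ≤ ((ν i : ℕ) : ℤ)) ∧
        (∑ i, (ν i : ℕ)) = (∑ i, lam i) + p),
      F (fun i => ((ν i : ℕ) : ℤ)))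
    = ∑ a ∈ (vbox ell B).filter (fun a => ∑ t, a t ≤ p), F (nu' ell p lam a) := by
  have hlamP_cs : ∀ t : Fin ell, lamP t.castSucc = (lam t : ℤ) := by
    intro t
    rw [hlamP, dif_pos (by simpa using t.isLt)]
    congr 1
  have hlam_le : ∀ t : Fin ell, lam t ≤ ∑ i, lam i := fun t =>
    Finset.single_le_sum (f := fun i => lam i) (fun _ _ => Nat.zero_le _) (Finset.mem_univ _)
  apply Finset.sum_nbij'
    (i := fun ν : Fin (ell + 1) → Fin ((∑ i, lam i) + p + 1) =>
      fun t : Fin ell => (ν t.castSucc : ℕ) - lam t)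
    (j := jmap ell p lam)
  · -- maps 𝒩 into a-set
    intro ν hν
    rw [Finset.mem_filter] at hν
    obtain ⟨-, hν1, hν2⟩ := hν
    rw [Finset.mem_filter]
    have hle : ∀ t : Fin ell, lam t ≤ (ν t.castSucc : ℕ) := by
      intro t
      have := hν1 t.castSucc
      rw [hlamP_cs t] at this
      exact_mod_cast this
    constructor
    · rw [mem_vbox]
      intro t
      have := (ν t.castSucc).isLt
      omega
    · have hsplit := Fin.sum_univ_castSucc (f := fun i => ((ν i : ℕ)))
      rw [hν2] at hsplit
      have hadd : (∑ t : Fin ell, ((ν t.castSucc : ℕ) - lam t)) + (∑ t, lam t) =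
          ∑ t : Fin ell, ((ν t.castSucc : ℕ)) := by
        rw [← Finset.sum_add_distrib]
        exact Finset.sum_congr rfl fun t _ => Nat.sub_add_cancel (hle t)
      show (∑ t : Fin ell, ((ν t.castSucc : ℕ) - lam t)) ≤ p
      omega
  · -- maps a-set into 𝒩
    intro a ha
    rw [Finset.mem_filter, mem_vbox] at ha
    obtain ⟨ha1, ha2⟩ := ha
    have hat : ∀ t, a t ≤ p := fun t =>
      le_trans (Finset.single_le_sum (f := fun t => a t) (fun _ _ => Nat.zero_le _)
        (Finset.mem_univ t)) ha2
    have hmin : ∀ t : Fin ell, min (lam t + a t) ((∑ i, lam i) + p) = lam t + a t := by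
      intro t
      have := hlam_le t
      have := hat t
      omega
    rw [Finset.mem_filter]
    refine ⟨Finset.mem_univ _, ?_, ?_⟩
    · intro i
      by_cases h : (i : ℕ) < ell
      · rw [hlamP, dif_pos h]
        have hv : ((jmap ell p lam a i : Fin ((∑ i, lam i) + p + 1)) : ℕ) =
            min (lam ⟨(i : ℕ), h⟩ + a ⟨(i : ℕ), h⟩) ((∑ i, lam i) + p) :=
          jmap_cs lam a ⟨(i : ℕ), h⟩
        rw [hv, hmin]
        push_cast
        omega
      · rw [hlamP, dif_neg h]
        positivity
    · have hsplit := Fin.sum_univ_castSucc (f := fun i => ((jmap ell p lam a i : ℕ)))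
      rw [jmap_last] at hsplit
      have hcs : (∑ t : Fin ell, ((jmap ell p lam a t.castSucc : ℕ))) =
          (∑ t, lam t) + ∑ t, a t := by
        rw [← Finset.sum_add_distrib]
        exact Finset.sum_congr rfl fun t _ => by rw [jmap_cs, hmin]
      rw [hcs] at hsplit
      rw [hsplit]
      omega
  · -- left inverse
    intro ν hν
    rw [Finset.mem_filter] at hν
    obtain ⟨-, hν1, hν2⟩ := hν
    have hle : ∀ t : Fin ell, lam t ≤ (ν t.castSucc : ℕ) := by
      intro t
      have := hν1 t.castSucc
      rw [hlamP_cs t] at this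
      exact_mod_cast this
    have hsplit := Fin.sum_univ_castSucc (f := fun i => ((ν i : ℕ)))
    rw [hν2] at hsplit
    have hadd : (∑ t : Fin ell, ((ν t.castSucc : ℕ) - lam t)) + (∑ t, lam t) =
        ∑ t : Fin ell, ((ν t.castSucc : ℕ)) := by
      rw [← Finset.sum_add_distrib]
      exact Finset.sum_congr rfl fun t _ => Nat.sub_add_cancel (hle t)
    funext i
    apply Fin.ext
    by_cases h : (i : ℕ) < ell
    · have hi : i = Fin.castSucc (⟨(i : ℕ), h⟩ : Fin ell) := Fin.ext (by simp)
      rw [hi, jmap_cs]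
      have h1 := hle ⟨(i : ℕ), h⟩
      have h2 := (ν (Fin.castSucc ⟨(i : ℕ), h⟩)).isLt
      omega
    · have hi : i = Fin.last ell := Fin.ext (by have := i.isLt; simp; omega)
      rw [hi, jmap_last]
      have h2 := (ν (Fin.last ell)).isLt
      omega
  · -- right inverse
    intro a ha
    rw [Finset.mem_filter, mem_vbox] at ha
    obtain ⟨ha1, ha2⟩ := ha
    have hat : ∀ t, a t ≤ p := fun t =>
      le_trans (Finset.single_le_sum (f := fun t => a t) (fun _ _ => Nat.zero_le _)
        (Finset.mem_univ t)) ha2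
    funext t
    rw [jmap_cs]
    have := hlam_le t
    have := hat t
    omega
  · -- values agree
    intro ν hν
    rw [Finset.mem_filter] at hν
    obtain ⟨-, hν1, hν2⟩ := hν
    have hle : ∀ t : Fin ell, lam t ≤ (ν t.castSucc : ℕ) := by
      intro t
      have := hν1 t.castSucc
      rw [hlamP_cs t] at this
      exact_mod_cast this
    have hsplit := Fin.sum_univ_castSucc (f := fun i => ((ν i : ℕ)))
    rw [hν2] at hsplit
    congr 1
    funext i
    unfold nu'
    by_cases h : (i : ℕ) < ell
    · rw [dif_pos h]
      have h1 : lam ⟨(i : ℕ), h⟩ ≤ (ν i : ℕ) := hle ⟨(i : ℕ), h⟩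
      show ((ν i : ℕ) : ℤ) = (lam ⟨(i : ℕ), h⟩ : ℤ) + (((ν i : ℕ) - lam ⟨(i : ℕ), h⟩ : ℕ) : ℤ)
      omega
    · rw [dif_neg h]
      have hi : i = Fin.last ell := Fin.ext (by have := i.isLt; simp; omega)
      rw [hi]
      have hcast : (∑ t : Fin ell, (((ν t.castSucc : ℕ) - lam t : ℕ) : ℤ)) =
          (∑ t : Fin ell, ((ν t.castSucc : ℕ) : ℤ)) - ∑ t : Fin ell, (lam t : ℤ) := by
        rw [← Finset.sum_sub_distrib]
        exact Finset.sum_congr rfl fun t _ => by rw [Nat.cast_sub (hle t)]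
      rw [hcast]
      have hcs : (∑ t : Fin ell, ((ν t.castSucc : ℕ) : ℤ)) = ((∑ t : Fin ell, (ν t.castSucc : ℕ) : ℕ) : ℤ) := by
        push_cast
        rfl
      have hls : (∑ t : Fin ell, (lam t : ℤ)) = ((∑ t, lam t : ℕ) : ℤ) := by
        push_cast
        rfl
      rw [hcs, hls]
      omega

end Reindex

end
end Stmt11Aux

open Stmt11 in
theorem stmt11 (R : Type*) [CommRing R] [Algebra ℚ R]
    (k K : ℕ) (hK : K = 2 * k ∨ K = 2 * k + 1)
    (c : ℤ → R) (hc0 : c 0 = 1) (hcneg : ∀ r : ℤ, r < 0 → c r = 0)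
    (p : ℕ) (hp : 0 < p)
    (ell : ℕ) (lam : Fin ell → ℕ)
    (hanti : Antitone lam) (hpos : ∀ i, 0 < lam i)
    (hstrict : ∀ i j : Fin ell, i < j → k < lam i → lam i ≠ lam j)
    -- the padded sequence of length `ℓ + 1`
    (lamP : Fin (ell + 1) → ℤ)
    (hlamP : ∀ i : Fin (ell + 1), lamP i = if h : (i : ℕ) < ell then (lam ⟨i, h⟩ : ℤ) else 0)
    -- `𝒞(λ)`
    (Cset : Finset (Fin (ell + 1) × Fin (ell + 1)))
    (hCset : Cset = Finset.univ.filter fun q : Fin (ell + 1) × Fin (ell + 1) =>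
      q.1 ≤ q.2 ∧ (q.2 : ℕ) < ell ∧ (k : ℤ) < lamP q.1 ∧
        (K : ℤ) + (q.2 : ℕ) ≤ lamP q.1 + lamP q.2 + (q.1 : ℕ)) :
    c p * T c Cset lamP =
      ∑ ν ∈ (Finset.univ.filter fun ν : Fin (ell + 1) → Fin ((∑ i, lam i) + p + 1) =>
          (∀ i : Fin (ell + 1), lamP i ≤ ((ν i : ℕ) : ℤ)) ∧
          (∑ i, (ν i : ℕ)) = (∑ i, lam i) + p),
        T c Cset (fun i => ((ν i : ℕ) : ℤ)) := by
  classical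
  open Stmt11Aux in
  set M : ℕ := (∑ i, lam i) + p with hMdef
  set B : ℕ := M * (ell + 2) ^ (ell + 1) with hBdef
  have hBB : M * (ell + 1 + 1) ^ (ell + 1) ≤ B := le_of_eq rfl
  have hMB : M ≤ B := by
    have : 1 ≤ (ell + 2) ^ (ell + 1) := Nat.one_le_pow _ _ (by omega)
    calc M = M * 1 := (mul_one M).symm
      _ ≤ M * (ell + 2) ^ (ell + 1) := Nat.mul_le_mul_left M this
  have hD : ∀ q ∈ Cset, (q.2 : ℕ) < ell := by
    intro q hq
    rw [hCset, Finset.mem_filter] at hq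
    exact hq.2.2.1
  have hlam_le : ∀ t : Fin ell, lam t ≤ ∑ i, lam i := fun t =>
    Finset.single_le_sum (f := fun i => lam i) (fun _ _ => Nat.zero_le _) (Finset.mem_univ _)
  have hlamPM : ∀ i, lamP i ≤ (M : ℤ) := by
    intro i
    rw [hlamP]
    split
    · rename_i h
      have := hlam_le ⟨(i : ℕ), h⟩
      push_cast
      omega
    · positivity
  have hmu0M : ∀ i, mu0 ell p lam i ≤ (M : ℤ) := by
    intro i
    unfold mu0
    split
    · rename_i h
      have := hlam_le ⟨(i : ℕ), h⟩
      push_cast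
      omega
    · push_cast
      omega
  have hnuM : ∀ ν ∈ (Finset.univ.filter fun ν : Fin (ell + 1) → Fin (M + 1) =>
      (∀ i : Fin (ell + 1), lamP i ≤ ((ν i : ℕ) : ℤ)) ∧
      (∑ i, (ν i : ℕ)) = M), ∀ i, ((ν i : ℕ) : ℤ) ≤ (M : ℤ) := by
    intro ν _ i
    have := (ν i).isLt
    exact_mod_cast Nat.lt_succ_iff.mp this
  -- the key identity
  have key : (∑ ν ∈ (Finset.univ.filter fun ν : Fin (ell + 1) → Fin (M + 1) =>
        (∀ i : Fin (ell + 1), lamP i ≤ ((ν i : ℕ) : ℤ)) ∧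
        (∑ i, (ν i : ℕ)) = M),
      ∑ nn ∈ fbox (ell + 1) B, coefRD Cset nn •
        ∏ i, c (rapply nn (fun i => ((ν i : ℕ) : ℤ)) i))
      = c p * ∑ nn ∈ fbox (ell + 1) B, coefRD Cset nn • ∏ i, c (rapply nn lamP i) := by
    calc (∑ ν ∈ (Finset.univ.filter fun ν : Fin (ell + 1) → Fin (M + 1) =>
        (∀ i : Fin (ell + 1), lamP i ≤ ((ν i : ℕ) : ℤ)) ∧
        (∑ i, (ν i : ℕ)) = M),
      ∑ nn ∈ fbox (ell + 1) B, coefRD Cset nn •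
        ∏ i, c (rapply nn (fun i => ((ν i : ℕ) : ℤ)) i))
        = ∑ a ∈ (vbox ell B).filter (fun a => ∑ t, a t ≤ p),
            ∑ nn ∈ fbox (ell + 1) B, coefRD Cset nn •
              ∏ i, c (rapply nn (nu' ell p lam a) i) :=
          reindex_sum lam lamP hlamP hMB
            (fun mu => ∑ nn ∈ fbox (ell + 1) B, coefRD Cset nn •
              ∏ i, c (rapply nn mu i))
      _ = ∑ a ∈ vbox ell B,
            ∑ nn ∈ fbox (ell + 1) B, coefRD Cset nn •
              ∏ i, c (rapply nn (nu' ell p lam a) i) := by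
          apply Finset.sum_subset (Finset.filter_subset _ _)
          intro a ha hna
          rw [Finset.mem_filter] at hna
          have hgt : p < ∑ t, a t := by
            by_contra h
            exact hna ⟨ha, by omega⟩
          exact Finset.sum_eq_zero fun nn _ => term_vanish c hcneg Cset lam a hgt nn
      _ = ∑ a ∈ vbox ell B,
            ∑ nn ∈ fbox (ell + 1) B, coefRD Cset nn •
              ∏ i, c (rapply (nn + aM ell a) (mu0 ell p lam) i) := by
          apply Finset.sum_congr rfl
          intro a _
          apply Finset.sum_congr rfl
          intro nn _
          rw [rapply_shift]
      _ = ∑ q ∈ (vbox ell B) ×ˢ (fbox (ell + 1) B),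
            coefRD Cset q.2 • ∏ i, c (rapply (q.2 + aM ell q.1) (mu0 ell p lam) i) := by
          rw [Finset.sum_product]
      _ = ∑ mm ∈ fbox (ell + 1) (2 * B),
            ∑ q ∈ ((vbox ell B) ×ˢ (fbox (ell + 1) B)).filter
              (fun q : (Fin ell → ℕ) × (Fin (ell + 1) → Fin (ell + 1) → ℕ) =>
                q.2 + aM ell q.1 = mm),
              coefRD Cset q.2 • ∏ i, c (rapply (q.2 + aM ell q.1) (mu0 ell p lam) i) := by
          symm
          apply Finset.sum_fiberwise_of_maps_to
          intro q hq
          rw [Finset.mem_product, mem_vbox, mem_fbox] at hq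
          rw [mem_fbox]
          intro i j
          simp only [Pi.add_apply]
          have h1 := hq.2 i j
          have h2 := aM_le_of q.1 B hq.1 i j
          omega
      _ = ∑ mm ∈ fbox (ell + 1) (2 * B),
            coefX ell Cset mm • ∏ i, c (rapply mm (mu0 ell p lam) i) :=
          Finset.sum_congr rfl fun mm _ => fiber_eq c hcneg Cset hD lam hmu0M hBB mm
      _ = ∑ mm ∈ fbox (ell + 1) (2 * B),
            c p * (coefRD Cset mm • ∏ i, c (rapply mm lamP i)) :=
          Finset.sum_congr rfl fun mm _ => point_eq c hc0 hcneg Cset lam lamP hlamP mm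
      _ = c p * ∑ mm ∈ fbox (ell + 1) (2 * B),
            coefRD Cset mm • ∏ i, c (rapply mm lamP i) := by
          rw [Finset.mul_sum]
      _ = c p * ∑ nn ∈ fbox (ell + 1) B, coefRD Cset nn • ∏ i, c (rapply nn lamP i) := by
          refine congrArg (fun z => c (p : ℤ) * z) ?_
          symm
          apply Finset.sum_subset
          · intro nn hnn
            rw [mem_fbox] at hnn ⊢
            intro i j
            have := hnn i j
            omega
          · intro mm _ hmm
            by_contra hne
            apply hmm
            rw [mem_fbox]
            intro i j
            exact (term_support c hcneg Cset hlamPM hne i j).trans hBB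
  -- assemble
  rw [T_eq_sum c hcneg Cset hlamPM hBB]
  have hRHS : ∀ ν ∈ (Finset.univ.filter fun ν : Fin (ell + 1) → Fin (M + 1) =>
      (∀ i : Fin (ell + 1), lamP i ≤ ((ν i : ℕ) : ℤ)) ∧
      (∑ i, (ν i : ℕ)) = M),
      T c Cset (fun i => ((ν i : ℕ) : ℤ)) =
        ((2 : ℚ) ^ (Cset.filter fun q => q.1 = q.2).card)⁻¹ •
          ∑ nn ∈ fbox (ell + 1) B, coefRD Cset nn •
            ∏ i, c (rapply nn (fun i => ((ν i : ℕ) : ℤ)) i) := by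
    intro ν hν
    exact T_eq_sum c hcneg Cset (hnuM ν hν) hBB
  rw [Finset.sum_congr rfl hRHS, ← Finset.smul_sum, key, mul_smul_comm]
end

section
/- Let λ be a typed k-strict partition with λ_i + λ_j < 2k + j − i for all i < j. Then H_λ(x;y) equals: S_λ(x;y) if λ_1 < k; (S_λ + e_k(y) S_{λ−k})/2 if type(λ) = 1; (S_λ − e_k(y) S_{λ−k})/2 if type(λ) = 2; and S_λ/2 if λ_1 > k; where S_μ(x;y) = det(ϑ_{μ_i + j − i})_{i,j} and λ−k is λ with one part k removed. -/
/-!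
STATEMENT 12 (Proposition `propSQ`(a)).  Let `λ` be a typed `k`-strict partition
(of length `ℓ = L+1`) with `λ_i + λ_j < 2k + j - i` for all `i < j`.  Then the
eta polynomial `H_λ = 2^{-ℓ_k(λ)} R^λ ⋆ ϑ_λ` equals `S_λ` if `λ_1 < k`;
`(S_λ + e_k(y) S_{λ-k})/2` if `type(λ) = 1`; `(S_λ - e_k(y) S_{λ-k})/2` if
`type(λ) = 2`; and `S_λ/2` if `λ_1 > k`, where `S_μ = det(ϑ_{μ_i + j - i})`.

The identity is formal: it holds in any commutative ring containing ℚ for any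
family `ϑ : ℤ → R` with `ϑ_r = 0` for `r < 0`, with `η_k = (ϑ_k + e_k)/2` and
`η'_k = (ϑ_k - e_k)/2`.  `R^λ ⋆ ϑ_λ` is expanded as a sum over exponent
matrices: monomials involving the index `d` of the part `k` contribute
`(1/2)ϑ_{Rλ}`, the others contribute `η_k ϑ_{\widehat{Rλ}}` (type 1) resp.
`η'_k ϑ_{\widehat{Rλ}}` (type 2), where the hat removes the `d`-th entry.
-/

namespace Stmt12

noncomputable section

variable {R : Type*} [CommRing R] [Algebra ℚ R]

def rapply {L : ℕ} (nn : Fin L → Fin L → ℕ) (lam : Fin L → ℤ) : Fin L → ℤ :=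
  fun p => lam p + (∑ j, (nn p j : ℤ)) - ∑ h, (nn h p : ℤ)

def pairCoef {L : ℕ} (D : Finset (Fin L × Fin L)) (i j : Fin L) (m : ℕ) : ℚ :=
  if i < j then
    (if (i, j) ∈ D then (if m = 0 then 1 else 2 * (-1 : ℚ) ^ m)
     else (if m = 0 then 1 else if m = 1 then -1 else 0))
  else (if m = 0 then 1 else 0)

def coefRD {L : ℕ} (D : Finset (Fin L × Fin L)) (nn : Fin L → Fin L → ℕ) : ℚ :=
  ∏ i, ∏ j, pairCoef D i j (nn i j)

/-- the set of pairs `i < j` with `λ_i + λ_j ≥ 2k + j - i`. -/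
def Dlam {L : ℕ} (k : ℕ) (lam : Fin (L + 1) → ℕ) :
    Finset (Fin (L + 1) × Fin (L + 1)) :=
  Finset.univ.filter fun q => q.1 < q.2 ∧
    2 * k + (q.2 : ℕ) ≤ lam q.1 + lam q.2 + (q.1 : ℕ)

/-- `ℓ_k(λ)`: the number of parts of `λ` strictly greater than `k`. -/
def lk {L : ℕ} (k : ℕ) (lam : Fin (L + 1) → ℕ) : ℕ :=
  (Finset.univ.filter fun i => k < lam i).card

/-- the value of the star operation on the raising-operator monomial with
exponent matrix `nn`. -/
def starval {L : ℕ} (theta : ℤ → R) (etak eta'k : R)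
    (t : ℕ) (d : Fin (L + 1)) (lam : Fin (L + 1) → ℕ)
    (nn : Fin (L + 1) → Fin (L + 1) → ℕ) : R :=
  if t = 0 then ∏ i, theta (rapply nn (fun i => (lam i : ℤ)) i)
  else if (∃ j, nn d j ≠ 0) ∨ (∃ i, nn i d ≠ 0) then
    (1 / 2 : ℚ) • ∏ i, theta (rapply nn (fun i => (lam i : ℤ)) i)
  else
    (if t = 1 then etak else eta'k) *
      ∏ i : Fin L, theta (rapply nn (fun i => (lam i : ℤ)) (d.succAbove i))

/-- the eta polynomial `H_λ = 2^{-ℓ_k(λ)} R^λ ⋆ ϑ_λ`. -/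
def H {L : ℕ} (k : ℕ) (theta : ℤ → R) (etak eta'k : R)
    (t : ℕ) (d : Fin (L + 1)) (lam : Fin (L + 1) → ℕ) : R :=
  ((2 : ℚ) ^ lk k lam)⁻¹ •
    ∑ᶠ nn : Fin (L + 1) → Fin (L + 1) → ℕ,
      coefRD (Dlam k lam) nn • starval theta etak eta'k t d lam nn

/-- the determinant `S_μ = det(ϑ_{μ_i + j - i})`. -/
def S (theta : ℤ → R) {M : ℕ} (mu : Fin M → ℤ) : R :=
  Matrix.det (Matrix.of fun i j : Fin M => theta (mu i + (j : ℕ) - (i : ℕ)))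

end

end Stmt12

/-!
Because `λ_i + λ_j < 2k + j - i` for all `i < j`, no factor `(1 + R_ij)⁻¹` occurs and
`R^λ = ∏_{i<j} (1 - R_ij) = ∑_E (-1)^|E| R_E`, summed over the sets `E` of pairs `i < j`.
Without the star twist this is the raising-operator form of Jacobi–Trudi,
`∑_E (-1)^|E| ϑ_{R_E μ} = det (ϑ_{μ_i + j - i})`, proved in the group ring `ℤ[ℤⁿ]`:
with `δ = (0, 1, …, n - 1)`, the element `∏_{i<j} (1 - x^{e_i - e_j}) · x^δ` equals
`∏_{i<j} (x^{e_j} - x^{e_i})`, a Vandermonde determinant, and the `ℤ`-linear map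
`x^a ↦ ∏_i ϑ_{μ_i - i + a_i}` turns it into `S_μ`.

For adjacent indices the hypothesis gives `λ_i + λ_{i+1} ≤ 2k`, so a part equal to `k` can
only be the first part, and at most one part exceeds `k`. In the typed case the monomials
`R_E` avoiding the first index are exactly the raising monomials of `λ - k`; they contribute
`η_k S_{λ-k}` where the plain determinant has `ϑ_k S_{λ-k} / 2`, whence
`H_λ = S_λ / 2 + (η_k - ϑ_k / 2) S_{λ-k}`.
-/

namespace Stmt12

open Finset

section RaisingOperators

variable {n : ℕ}

def ltPairs (n : ℕ) : Finset (Fin n × Fin n) := univ.filter fun q => q.1 < q.2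

@[simp]
lemma mem_ltPairs {q : Fin n × Fin n} : q ∈ ltPairs n ↔ q.1 < q.2 := by
  simp [ltPairs]

def expMatrix (E : Finset (Fin n × Fin n)) : Fin n → Fin n → ℕ :=
  fun i j => if (i, j) ∈ E then 1 else 0

-- `lam + raising E` is `R_E lam` for the monomial `R_E = ∏_{(i,j) ∈ E} R_ij`, whose exponent
-- matrix is `expMatrix E`.
def raising (E : Finset (Fin n × Fin n)) : Fin n → ℤ :=
  ∑ q ∈ E, (Pi.single q.1 1 - Pi.single q.2 1)

lemma expMatrix_injective : Function.Injective (expMatrix (n := n)) := by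
  intro E F h
  ext q
  have := congrFun (congrFun h q.1) q.2
  by_cases hE : q ∈ E <;> by_cases hF : q ∈ F <;> simp_all [expMatrix]

lemma sum_expMatrix_row (E : Finset (Fin n × Fin n)) (p : Fin n) :
    ∑ j, (expMatrix E p j : ℤ) = #{q ∈ E | p = q.1} := by
  simp only [expMatrix, Nat.cast_ite, Nat.cast_one, Nat.cast_zero, sum_boole]
  refine congrArg _ (card_nbij' (fun j => (p, j)) Prod.snd (fun j hj => by simpa using hj)
    (fun q hq => ?_) (fun j _ => rfl) (fun q hq => ?_)) <;>
  · obtain ⟨hqE, rfl⟩ := mem_filter.mp hq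
    simp [hqE]

lemma sum_expMatrix_col (E : Finset (Fin n × Fin n)) (p : Fin n) :
    ∑ i, (expMatrix E i p : ℤ) = #{q ∈ E | p = q.2} := by
  simp only [expMatrix, Nat.cast_ite, Nat.cast_one, Nat.cast_zero, sum_boole]
  refine congrArg _ (card_nbij' (fun i => (i, p)) Prod.fst (fun i hi => by simpa using hi)
    (fun q hq => ?_) (fun i _ => rfl) (fun q hq => ?_)) <;>
  · obtain ⟨hqE, rfl⟩ := mem_filter.mp hq
    simp [hqE]

lemma rapply_expMatrix (E : Finset (Fin n × Fin n)) (lam : Fin n → ℤ) :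
    rapply (expMatrix E) lam = lam + raising E := by
  funext p
  simp only [rapply, raising, sum_expMatrix_row, sum_expMatrix_col, Finset.sum_apply,
    Pi.add_apply, Pi.sub_apply, Pi.single_apply, sum_sub_distrib, sum_boole]
  ring

lemma pairCoef_empty_ne_zero_iff {i j : Fin n} {m : ℕ} :
    pairCoef ∅ i j m ≠ 0 ↔ m = 0 ∨ (i < j ∧ m = 1) := by
  unfold pairCoef
  split_ifs <;> simp_all

lemma coefRD_empty_expMatrix {E : Finset (Fin n × Fin n)} (hE : E ⊆ ltPairs n) :
    coefRD ∅ (expMatrix E) = (-1) ^ #E := by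
  have hq (q : Fin n × Fin n) :
      pairCoef ∅ q.1 q.2 (expMatrix E q.1 q.2) = if q ∈ E then -1 else 1 := by
    by_cases h : q ∈ E
    · simp [pairCoef, expMatrix, h, mem_ltPairs.mp (hE h)]
    · simp [pairCoef, expMatrix, h]
  rw [coefRD, ← Fintype.prod_prod_type', Fintype.prod_congr _ _ hq, prod_ite_mem, univ_inter,
    prod_const]

lemma support_coefRD_empty :
    Function.support (coefRD (∅ : Finset (Fin n × Fin n))) ⊆
      (ltPairs n).powerset.image expMatrix := by
  intro nn hnn
  have hpair : ∀ i j, nn i j = 0 ∨ (i < j ∧ nn i j = 1) := fun i j =>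
    pairCoef_empty_ne_zero_iff.mp <|
      prod_ne_zero_iff.mp (prod_ne_zero_iff.mp hnn i (mem_univ i)) j (mem_univ j)
  refine mem_image.mpr ⟨(ltPairs n).filter fun q => nn q.1 q.2 = 1,
    mem_powerset.mpr (filter_subset _ _), funext₂ fun i j => ?_⟩
  rcases hpair i j with h | ⟨hij, h⟩ <;> simp [expMatrix, *]

theorem finsum_coefRD_empty_smul {M : Type*} [AddCommGroup M] [Module ℚ M]
    (F : (Fin n → Fin n → ℕ) → M) :
    ∑ᶠ nn, coefRD ∅ nn • F nn =
      ∑ E ∈ (ltPairs n).powerset, (-1 : ℤ) ^ #E • F (expMatrix E) := by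
  change ∑ᶠ nn, (coefRD (∅ : Finset (Fin n × Fin n)) • F) nn = _
  rw [finsum_eq_sum_of_support_subset (coefRD (∅ : Finset (Fin n × Fin n)) • F)
      ((Function.support_smul_subset_left _ _).trans support_coefRD_empty),
    sum_image fun E _ F _ h => expMatrix_injective h]
  refine sum_congr rfl fun E hE => ?_
  rw [Pi.smul_apply', coefRD_empty_expMatrix (mem_powerset.mp hE), ← Int.cast_smul_eq_zsmul ℚ]
  push_cast
  rfl

end RaisingOperators

section JacobiTrudi

variable {R : Type*} [CommRing R] {n : ℕ}

noncomputable abbrev xpow (a : Fin n → ℤ) : AddMonoidAlgebra ℤ (Fin n → ℤ) :=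
  AddMonoidAlgebra.of ℤ (Fin n → ℤ) (Multiplicative.ofAdd a)

lemma xpow_add (a b : Fin n → ℤ) : xpow (a + b) = xpow a * xpow b := by
  rw [xpow, ofAdd_add, map_mul]

lemma xpow_sum {ι : Type*} (s : Finset ι) (f : ι → Fin n → ℤ) :
    xpow (∑ i ∈ s, f i) = ∏ i ∈ s, xpow (f i) := by
  rw [xpow, ofAdd_sum, map_prod]

lemma xpow_nsmul (m : ℕ) (a : Fin n → ℤ) : xpow (m • a) = xpow a ^ m := by
  rw [xpow, ofAdd_nsmul, map_pow]

noncomputable def evalShifted (θ : ℤ → R) (lam : Fin n → ℤ) :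
    AddMonoidAlgebra ℤ (Fin n → ℤ) →ₗ[ℤ] R :=
  (AddMonoidAlgebra.basis (Fin n → ℤ) ℤ).constr ℤ fun a => ∏ i, θ (lam i + a i)

lemma evalShifted_xpow (θ : ℤ → R) (lam a : Fin n → ℤ) :
    evalShifted θ lam (xpow a) = ∏ i, θ (lam i + a i) := by
  rw [evalShifted, xpow, AddMonoidAlgebra.of_apply, ← AddMonoidAlgebra.basis_apply]
  exact Module.Basis.constr_basis _ _ _ _

@[to_additive]
lemma prod_ltPairs {M : Type*} [CommMonoid M] (f : Fin n → Fin n → M) :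
    ∏ q ∈ ltPairs n, f q.1 q.2 = ∏ i, ∏ j ∈ Ioi i, f i j := by
  rw [ltPairs, prod_filter, Fintype.prod_prod_type]
  refine prod_congr rfl fun i _ => ?_
  rw [← prod_filter]
  congr 1
  ext j
  simp

lemma sum_ltPairs_single_snd :
    ∑ q ∈ ltPairs n, Pi.single q.2 (1 : ℤ) = fun j : Fin n => ((j : ℕ) : ℤ) := by
  funext j
  rw [sum_ltPairs (fun _ k => Pi.single k (1 : ℤ))]
  simp [Finset.sum_apply, Pi.single_apply, filter_gt_eq_Iio]

lemma prod_one_sub_xpow :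
    ∏ q ∈ ltPairs n, (1 - xpow (Pi.single q.1 1 - Pi.single q.2 1)) =
      ∑ E ∈ (ltPairs n).powerset, (-1 : ℤ) ^ #E • xpow (raising E) := by
  rw [prod_sub]
  refine sum_congr rfl fun E _ => ?_
  rw [prod_const_one, mul_one, raising, xpow_sum, zsmul_eq_mul]
  push_cast
  rfl

lemma prod_one_sub_xpow_mul_eq_sum_perm :
    (∏ q ∈ ltPairs n, (1 - xpow (Pi.single q.1 1 - Pi.single q.2 1))) *
        xpow (fun j : Fin n => ((j : ℕ) : ℤ)) =
      ∑ σ : Equiv.Perm (Fin n),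
        (Equiv.Perm.sign σ : ℤ) • xpow (fun i => ((σ i : ℕ) : ℤ)) := by
  have hfactor (q : Fin n × Fin n) :
      (1 - xpow (Pi.single q.1 1 - Pi.single q.2 1)) * xpow (Pi.single q.2 1) =
        xpow (Pi.single q.2 1) - xpow (Pi.single q.1 1) := by
    rw [sub_mul, one_mul, ← xpow_add, sub_add_cancel]
  rw [← sum_ltPairs_single_snd, xpow_sum, ← prod_mul_distrib,
    prod_congr rfl fun q _ => hfactor q,
    prod_ltPairs (fun i j => xpow (Pi.single j 1) - xpow (Pi.single i 1)),
    ← Matrix.det_vandermonde, ← Matrix.det_transpose, Matrix.det_apply']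
  refine sum_congr rfl fun σ _ => ?_
  rw [← zsmul_eq_mul]
  congr 1
  simp only [Matrix.transpose_apply, Matrix.vandermonde_apply, ← xpow_nsmul, ← xpow_sum]
  congr 1
  funext i
  simp [Finset.sum_apply, Pi.single_apply]

theorem sum_raising_eq_S (θ : ℤ → R) (lam : Fin n → ℤ) :
    ∑ E ∈ (ltPairs n).powerset, (-1 : ℤ) ^ #E • ∏ i, θ (lam i + raising E i) =
      S θ lam := by
  have h := congrArg (evalShifted θ (lam - fun j : Fin n => ((j : ℕ) : ℤ)))
    prod_one_sub_xpow_mul_eq_sum_perm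
  rw [prod_one_sub_xpow, sum_mul] at h
  simp only [smul_mul_assoc, ← xpow_add, map_sum, map_zsmul, evalShifted_xpow, Pi.sub_apply,
    Pi.add_apply, sub_add_add_cancel] at h
  rw [h, S, ← Matrix.det_transpose, Matrix.det_apply']
  refine sum_congr rfl fun σ _ => ?_
  simp only [zsmul_eq_mul, Matrix.transpose_apply, Matrix.of_apply, sub_add_eq_add_sub]

end JacobiTrudi

section FirstRow

variable {n : ℕ}

def succPairs : Fin n × Fin n ↪ Fin (n + 1) × Fin (n + 1) :=
  (Fin.succEmb n).prodMap (Fin.succEmb n)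

@[simp]
lemma succPairs_apply (q : Fin n × Fin n) : succPairs q = (q.1.succ, q.2.succ) := rfl

lemma map_succPairs_subset : (ltPairs n).map succPairs ⊆ ltPairs (n + 1) := by
  intro q hq
  obtain ⟨p, hp, rfl⟩ := mem_map.mp hq
  simpa using hp

lemma mem_map_succPairs_iff {q : Fin (n + 1) × Fin (n + 1)} (hq : q ∈ ltPairs (n + 1)) :
    q ∈ (ltPairs n).map succPairs ↔ q.1 ≠ 0 := by
  obtain ⟨a, b⟩ := q
  constructor
  · rintro hmem
    obtain ⟨p, -, hp⟩ := mem_map.mp hmem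
    simp only [succPairs_apply, Prod.mk.injEq] at hp
    exact hp.1 ▸ Fin.succ_ne_zero _
  · intro ha
    have hab : a < b := mem_ltPairs.mp hq
    obtain ⟨a', rfl⟩ := Fin.exists_succ_eq_of_ne_zero ha
    obtain ⟨b', rfl⟩ := Fin.exists_succ_eq_of_ne_zero (Fin.ne_zero_of_lt hab)
    exact mem_map.mpr ⟨(a', b'), by simpa using hab, rfl⟩

lemma expMatrix_touches_zero_iff {E : Finset (Fin (n + 1) × Fin (n + 1))}
    (hE : E ⊆ ltPairs (n + 1)) :
    ((∃ j, expMatrix E 0 j ≠ 0) ∨ (∃ i, expMatrix E i 0 ≠ 0)) ↔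
      ¬ E ⊆ (ltPairs n).map succPairs := by
  simp only [expMatrix, ne_eq, ite_eq_right_iff, one_ne_zero, imp_false, not_not, not_subset]
  constructor
  · rintro (⟨j, hj⟩ | ⟨i, hi⟩)
    · exact ⟨_, hj, by simp [mem_map_succPairs_iff (hE hj)]⟩
    · exact absurd (mem_ltPairs.mp (hE hi)) (Fin.not_lt_zero _)
  · rintro ⟨⟨a, b⟩, hq, hnot⟩
    rw [mem_map_succPairs_iff (hE hq), not_not] at hnot
    exact Or.inl ⟨b, hnot ▸ hq⟩

lemma raising_map_succPairs_zero (E : Finset (Fin n × Fin n)) :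
    raising (E.map succPairs) 0 = 0 := by
  simp only [raising, sum_map, Finset.sum_apply, Pi.sub_apply, succPairs_apply]
  simp

lemma raising_map_succPairs_succ (E : Finset (Fin n × Fin n)) (i : Fin n) :
    raising (E.map succPairs) i.succ = raising E i := by
  simp only [raising, sum_map, Finset.sum_apply, Pi.sub_apply, succPairs_apply]
  simp [Pi.single_apply]

lemma sum_powerset_map_succPairs {M : Type*} [AddCommMonoid M]
    (f : Finset (Fin (n + 1) × Fin (n + 1)) → M) :
    ∑ E ∈ ((ltPairs n).map succPairs).powerset, f E =
      ∑ E ∈ (ltPairs n).powerset, f (E.map succPairs) := by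
  simp_rw [map_eq_image]
  rw [powerset_image, sum_image fun E _ F _ h => ?_]
  exact map_injective succPairs (by simpa only [map_eq_image] using h)

end FirstRow

section StarOperation

variable {R : Type*} [CommRing R] [Algebra ℚ R] {n : ℕ}

lemma H_eq_of_Dlam_eq_empty {k : ℕ} (θ : ℤ → R) (etak eta'k : R) (t : ℕ) (d : Fin (n + 1))
    {lam : Fin (n + 1) → ℕ} (hD : Dlam k lam = ∅) :
    H k θ etak eta'k t d lam = ((2 : ℚ) ^ lk k lam)⁻¹ •
      ∑ E ∈ (ltPairs (n + 1)).powerset,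
        (-1 : ℤ) ^ #E • starval θ etak eta'k t d lam (expMatrix E) := by
  rw [H, hD, finsum_coefRD_empty_smul]

theorem sum_starval_of_type_zero (θ : ℤ → R) (etak eta'k : R) (d : Fin (n + 1))
    (lam : Fin (n + 1) → ℕ) :
    ∑ E ∈ (ltPairs (n + 1)).powerset,
        (-1 : ℤ) ^ #E • starval θ etak eta'k 0 d lam (expMatrix E) =
      S θ (fun i => (lam i : ℤ)) := by
  simp only [starval, if_pos, rapply_expMatrix, Pi.add_apply]
  exact sum_raising_eq_S θ _

lemma starval_expMatrix_of_type_ne_zero (θ : ℤ → R) (etak eta'k : R) {t : ℕ} (ht : t ≠ 0)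
    (lam : Fin (n + 1) → ℕ) {E : Finset (Fin (n + 1) × Fin (n + 1))}
    (hE : E ⊆ ltPairs (n + 1)) :
    starval θ etak eta'k t 0 lam (expMatrix E) =
      if E ⊆ (ltPairs n).map succPairs then
        (if t = 1 then etak else eta'k) * ∏ i : Fin n, θ (lam i.succ + raising E i.succ)
      else (1 / 2 : ℚ) • ∏ i, θ (lam i + raising E i) := by
  simp only [starval, if_neg ht, expMatrix_touches_zero_iff hE, ite_not, rapply_expMatrix,
    Pi.add_apply, Fin.succAbove_zero]

theorem sum_starval_of_type_ne_zero (θ : ℤ → R) (etak eta'k : R) {t : ℕ} (ht : t ≠ 0)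
    (lam : Fin (n + 1) → ℕ) :
    ∑ E ∈ (ltPairs (n + 1)).powerset,
        (-1 : ℤ) ^ #E • starval θ etak eta'k t 0 lam (expMatrix E) =
      (1 / 2 : ℚ) • S θ (fun i => (lam i : ℤ)) +
        ((if t = 1 then etak else eta'k) - (1 / 2 : ℚ) • θ (lam 0)) *
          S θ (fun i : Fin n => (lam i.succ : ℤ)) := by
  set η := if t = 1 then etak else eta'k
  set B := (ltPairs n).map succPairs
  have hsplit : ∀ E ∈ (ltPairs (n + 1)).powerset,
      (-1 : ℤ) ^ #E • starval θ etak eta'k t 0 lam (expMatrix E) =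
        (1 / 2 : ℚ) • ((-1 : ℤ) ^ #E • ∏ i, θ (lam i + raising E i)) +
          if E ⊆ B then
            (-1 : ℤ) ^ #E • (η * ∏ i : Fin n, θ (lam i.succ + raising E i.succ) -
              (1 / 2 : ℚ) • ∏ i, θ (lam i + raising E i))
          else 0 := by
    intro E hE
    rw [starval_expMatrix_of_type_ne_zero θ etak eta'k ht lam (mem_powerset.mp hE)]
    by_cases hEB : E ⊆ B
    · rw [if_pos hEB, if_pos hEB, smul_sub, smul_comm, add_sub_cancel]
    · rw [if_neg hEB, if_neg hEB, add_zero, smul_comm]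
  have hB : (ltPairs (n + 1)).powerset.filter (· ⊆ B) = B.powerset := by
    ext E
    simpa using fun h => h.trans map_succPairs_subset
  rw [sum_congr rfl hsplit, sum_add_distrib, ← smul_sum, sum_raising_eq_S, ← sum_filter, hB,
    sum_powerset_map_succPairs, ← sum_raising_eq_S θ (fun i : Fin n => (lam i.succ : ℤ)),
    mul_sum]
  simp only [raising_map_succPairs_succ, Fin.prod_univ_succ, raising_map_succPairs_zero, add_zero,
    card_map]
  refine congrArg _ (sum_congr rfl fun E _ => ?_)
  rw [mul_smul_comm, sub_mul, smul_mul_assoc]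

end StarOperation

section Partitions

variable {k L : ℕ} {lam : Fin (L + 1) → ℕ}

lemma Dlam_eq_empty (hlow : ∀ i j : Fin (L + 1), i < j → lam i + lam j + i < 2 * k + j) :
    Dlam k lam = ∅ := by
  refine filter_eq_empty_iff.mpr fun q _ ⟨hlt, hge⟩ => ?_
  have := hlow q.1 q.2 hlt
  omega

lemma castSucc_add_succ_le (hlow : ∀ i j : Fin (L + 1), i < j → lam i + lam j + i < 2 * k + j)
    (i : Fin L) : lam i.castSucc + lam i.succ ≤ 2 * k := by
  have := hlow i.castSucc i.succ i.castSucc_lt_succ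
  simp only [Fin.val_castSucc, Fin.val_succ] at this
  omega

lemma eq_zero_of_apply_eq_of_forall_lt (hadj : ∀ i : Fin L, lam i.castSucc + lam i.succ ≤ 2 * k)
    {d : Fin (L + 1)} (hdk : lam d = k) (hbefore : ∀ i < d, k < lam i) : d = 0 := by
  by_contra hd
  obtain ⟨j, rfl⟩ := Fin.exists_succ_eq_of_ne_zero hd
  have := hbefore j.castSucc j.castSucc_lt_succ
  have := hadj j
  omega

lemma lk_eq_zero (hanti : Antitone lam) (h : lam 0 ≤ k) : lk k lam = 0 := by
  refine card_eq_zero.mpr (filter_eq_empty_iff.mpr fun i _ hi => ?_)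
  have := hanti (Fin.zero_le i)
  omega

lemma lk_eq_one (hanti : Antitone lam) (hadj : ∀ i : Fin L, lam i.castSucc + lam i.succ ≤ 2 * k)
    (h : k < lam 0) : lk k lam = 1 := by
  refine card_eq_one.mpr
    ⟨0, eq_singleton_iff_unique_mem.mpr ⟨by simpa using h, fun i hi => ?_⟩⟩
  by_contra hi0
  obtain ⟨j, rfl⟩ := Fin.exists_succ_eq_of_ne_zero hi0
  have := hanti j.castSucc_lt_succ.le
  have := hadj j
  simp only [mem_filter, mem_univ, true_and] at hi
  omega

end Partitions

end Stmt12

open Stmt12 in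
theorem stmt12_general (R : Type*) [CommRing R] [Algebra ℚ R]
    (k : ℕ)
    (theta : ℤ → R)
    (ek : R) (etak eta'k : R)
    (hetak : etak = (1 / 2 : ℚ) • (theta k + ek))
    (heta'k : eta'k = (1 / 2 : ℚ) • (theta k - ek))
    (L : ℕ) (lam : Fin (L + 1) → ℕ)
    (hanti : Antitone lam)
    (t : ℕ)
    (d : Fin (L + 1)) (hd : t ≠ 0 → (lam d = k ∧ ∀ i, i < d → k < lam i))
    (hlow : ∀ i j : Fin (L + 1), i < j →
      lam i + lam j + (i : ℕ) < 2 * k + (j : ℕ)) :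
    (lam 0 < k →
      H k theta etak eta'k t d lam = S theta (fun i => (lam i : ℤ))) ∧
    (t = 1 →
      H k theta etak eta'k t d lam =
        (1 / 2 : ℚ) • S theta (fun i => (lam i : ℤ)) +
        (1 / 2 : ℚ) • (ek * S theta (fun i : Fin L => (lam (d.succAbove i) : ℤ)))) ∧
    (t = 2 →
      H k theta etak eta'k t d lam =
        (1 / 2 : ℚ) • S theta (fun i => (lam i : ℤ)) -
        (1 / 2 : ℚ) • (ek * S theta (fun i : Fin L => (lam (d.succAbove i) : ℤ)))) ∧
    (k < lam 0 →
      H k theta etak eta'k t d lam = (1 / 2 : ℚ) • S theta (fun i => (lam i : ℤ))) := by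
  have hD := Dlam_eq_empty hlow
  have hadj := castSucc_add_succ_le hlow
  have hfirst (ht : t ≠ 0) : d = 0 ∧ lam 0 = k := by
    obtain ⟨hdk, hbefore⟩ := hd ht
    obtain rfl := eq_zero_of_apply_eq_of_forall_lt hadj hdk hbefore
    exact ⟨rfl, hdk⟩
  have hH_untyped (h : lam 0 ≠ k) :
      H k theta etak eta'k t d lam =
        ((2 : ℚ) ^ lk k lam)⁻¹ • S theta (fun i => (lam i : ℤ)) := by
    obtain rfl : t = 0 := by_contra fun ht => h (hfirst ht).2
    rw [H_eq_of_Dlam_eq_empty _ _ _ _ _ hD, sum_starval_of_type_zero]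
  have hH_typed (ht : t ≠ 0) : H k theta etak eta'k t d lam =
      (1 / 2 : ℚ) • S theta (fun i => (lam i : ℤ)) + ((if t = 1 then etak else eta'k) -
        (1 / 2 : ℚ) • theta k) * S theta (fun i : Fin L => (lam (d.succAbove i) : ℤ)) := by
    obtain ⟨rfl, h0⟩ := hfirst ht
    rw [H_eq_of_Dlam_eq_empty _ _ _ _ _ hD, lk_eq_zero hanti h0.le, pow_zero, inv_one, one_smul,
      sum_starval_of_type_ne_zero _ _ _ ht, h0, Fin.succAbove_zero]
  refine ⟨fun h0 => ?_, fun ht => ?_, fun ht => ?_, fun h0 => ?_⟩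
  · rw [hH_untyped h0.ne, lk_eq_zero hanti h0.le, pow_zero, inv_one, one_smul]
  · rw [hH_typed (by omega), if_pos ht, hetak, ← smul_sub, add_sub_cancel_left, smul_mul_assoc]
  · rw [hH_typed (by omega), if_neg (by omega), heta'k, ← smul_sub, sub_sub_cancel_left,
      smul_neg, neg_mul, smul_mul_assoc, ← sub_eq_add_neg]
  · rw [hH_untyped h0.ne', lk_eq_one hanti hadj h0, pow_one, inv_eq_one_div]

open Stmt12 in
theorem stmt12 (R : Type*) [CommRing R] [Algebra ℚ R]
    (k : ℕ) (hk : 1 ≤ k)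
    (theta : ℤ → R) (hthneg : ∀ r : ℤ, r < 0 → theta r = 0)
    (ek : R) (etak eta'k : R)
    (hetak : etak = (1 / 2 : ℚ) • (theta k + ek))
    (heta'k : eta'k = (1 / 2 : ℚ) • (theta k - ek))
    (L : ℕ) (lam : Fin (L + 1) → ℕ)
    (hanti : Antitone lam) (hpos : ∀ i, 0 < lam i)
    (hstrict : ∀ i j : Fin (L + 1), i < j → k < lam i → lam i ≠ lam j)
    (t : ℕ) (ht : t ≤ 2) (htype : t ≠ 0 ↔ ∃ i, lam i = k)
    (d : Fin (L + 1)) (hd : t ≠ 0 → (lam d = k ∧ ∀ i, i < d → k < lam i))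
    (hlow : ∀ i j : Fin (L + 1), i < j →
      lam i + lam j + (i : ℕ) < 2 * k + (j : ℕ)) :
    (lam 0 < k →
      H k theta etak eta'k t d lam = S theta (fun i => (lam i : ℤ))) ∧
    (t = 1 →
      H k theta etak eta'k t d lam =
        (1 / 2 : ℚ) • S theta (fun i => (lam i : ℤ)) +
        (1 / 2 : ℚ) • (ek * S theta (fun i : Fin L => (lam (d.succAbove i) : ℤ)))) ∧
    (t = 2 →
      H k theta etak eta'k t d lam =
        (1 / 2 : ℚ) • S theta (fun i => (lam i : ℤ)) -
        (1 / 2 : ℚ) • (ek * S theta (fun i : Fin L => (lam (d.succAbove i) : ℤ)))) ∧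
    (k < lam 0 →
      H k theta etak eta'k t d lam = (1 / 2 : ℚ) • S theta (fun i => (lam i : ℤ))) :=
  stmt12_general R k theta ek etak eta'k hetak heta'k L lam hanti t d hd hlow
end
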